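/- arXiv:1907.04257 — 13 statements merged into one kernel-verified Lean document; each statement's English description precedes it below -/
import Mathlib

section
/- Let u_1,…,u_N : ℝ → ℝ be strictly increasing functions bounded above, and set M_n := sup_{x∈ℝ} u_n(x). Let X^1,…,X^N be real random variables. Then, with the supremum taken in ℝ ∪ {±∞} (sup ∅ := −∞), sup{ Σ_{n=1}^N E_P[u_n(X^n+Y^n)] : Y^1,…,Y^N real random variables with Σ_{n=1}^N Y^n ≤ 0 P-a.s. and u_n(X^n+Y^n) P-integrable for every n } < Σ_{n=1}^N M_n. -/
open MeasureTheory

/-- Under the clearing constraint `Σₙ Yⁿ ≤ 0` the aggregate expected utility stays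
    strictly below the sum of the maximal utility levels `Mₙ = sup_x uₙ(x)`
    (suprema taken in `ℝ ∪ {±∞}`, with `sup ∅ = −∞`). -/
theorem strict_bound_below_sup_utilities
    {Ω : Type*} [MeasurableSpace Ω] (P : Measure Ω) [IsProbabilityMeasure P]
    (N : ℕ) (hN : 1 ≤ N)
    (u : Fin N → ℝ → ℝ)
    (hu_mono : ∀ n, StrictMono (u n))
    (hu_bdd : ∀ n, BddAbove (Set.range (u n)))
    (X : Fin N → Ω → ℝ) :
    sSup {r : EReal | ∃ Y : Fin N → Ω → ℝ,
        (∀ᵐ ω ∂P, ∑ n, Y n ω ≤ 0) ∧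
        (∀ n, Integrable (fun ω => u n (X n ω + Y n ω)) P) ∧
        r = ((∑ n, ∫ ω, u n (X n ω + Y n ω) ∂P : ℝ) : EReal)} <
      ((∑ n, ⨆ x : ℝ, u n x : ℝ) : EReal) := by
  classical
  have hNe : Nonempty (Fin N) := ⟨⟨0, hN⟩⟩
  set M : Fin N → ℝ := fun n => ⨆ x : ℝ, u n x with hMdef
  have hle : ∀ n x, u n x ≤ M n := fun n x => le_ciSup (hu_bdd n) x
  -- choose the cap k
  set s : ℕ → Set Ω := fun k => {ω | ∀ n, X n ω ≤ k} with hsdef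
  have hmono : Monotone s := by
    intro a b hab ω hω n
    exact le_trans (hω n) (by exact_mod_cast hab)
  have hunion : (⋃ k, s k) = Set.univ := by
    ext ω
    simp only [Set.mem_iUnion, Set.mem_univ, iff_true]
    obtain ⟨k, hk⟩ := exists_nat_ge (∑ n, |X n ω|)
    refine ⟨k, fun n => ?_⟩
    have h1 : |X n ω| ≤ ∑ m, |X m ω| :=
      Finset.single_le_sum (f := fun m => |X m ω|) (fun m _ => abs_nonneg _)
        (Finset.mem_univ n)
    calc X n ω ≤ |X n ω| := le_abs_self _
      _ ≤ ∑ m, |X m ω| := h1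
      _ ≤ k := hk
  have hsup : (⨆ k, P (s k)) = 1 := by
    rw [← hmono.directed_le.measure_iUnion, hunion, measure_univ]
  obtain ⟨k, hk⟩ : ∃ k, (1 / 2 : ENNReal) < P (s k) := by
    have : (1 / 2 : ENNReal) < ⨆ k, P (s k) := by
      rw [hsup]; norm_num
    exact lt_iSup_iff.mp this
  -- the gap ε
  set ε : ℝ := Finset.univ.inf' (Finset.univ_nonempty) (fun n => M n - u n k) with hεdef
  have hεle : ∀ n, ε ≤ M n - u n k := fun n =>
    Finset.inf'_le _ (Finset.mem_univ n)
  have hεpos : 0 < ε := by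
    rw [hεdef, Finset.lt_inf'_iff]
    intro n _
    have h1 : u n (k : ℝ) < u n ((k : ℝ) + 1) := hu_mono n (by linarith)
    have h2 : u n ((k : ℝ) + 1) ≤ M n := hle n _
    linarith
  -- the uniform bound
  have main : ∀ Y : Fin N → Ω → ℝ, (∀ᵐ ω ∂P, ∑ n, Y n ω ≤ 0) →
      (∀ n, Integrable (fun ω => u n (X n ω + Y n ω)) P) →
      (∑ n, ∫ ω, u n (X n ω + Y n ω) ∂P) ≤ (∑ n, M n) - ε / 2 := by
    intro Y hY0 hint
    set Z' : Fin N → Ω → ℝ := fun n => ((hint n).1.mk _) with hZ'def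
    have hZ'meas : ∀ n, Measurable (Z' n) := fun n =>
      (hint n).1.stronglyMeasurable_mk.measurable
    have hZ'ae : ∀ n, (fun ω => u n (X n ω + Y n ω)) =ᵐ[P] Z' n := fun n =>
      (hint n).1.ae_eq_mk
    have hZ'int : ∀ n, Integrable (Z' n) P := fun n => (hint n).congr (hZ'ae n)
    set D : Set Ω := ⋃ n, {ω | Z' n ω ≤ u n (k : ℝ)} with hDdef
    have hDmeas : MeasurableSet D :=
      MeasurableSet.iUnion fun n => measurableSet_le (hZ'meas n) measurable_const
    have hae : ∀ᵐ ω ∂P, (∑ n, Y n ω ≤ 0) ∧ ∀ n, Z' n ω = u n (X n ω + Y n ω) := by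
      refine hY0.and ?_
      rw [ae_all_iff]
      intro n
      exact (hZ'ae n).symm
    -- a.e. on s k we are in D
    have hsub : ∀ᵐ ω ∂P, ω ∈ s k → ω ∈ D := by
      filter_upwards [hae] with ω hω hs
      obtain ⟨h0, hz⟩ := hω
      by_contra hD
      have hall : ∀ n, (k : ℝ) < X n ω + Y n ω := by
        intro n
        have : ¬ (Z' n ω ≤ u n (k : ℝ)) := by
          intro h
          exact hD (Set.mem_iUnion.mpr ⟨n, h⟩)
        rw [hz n] at this
        exact (hu_mono n).lt_iff_lt.mp (by linarith [not_le.mp this])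
      have h1 : ∑ _n : Fin N, (k : ℝ) < ∑ n, (X n ω + Y n ω) :=
        Finset.sum_lt_sum_of_nonempty Finset.univ_nonempty (fun n _ => hall n)
      have h2 : ∑ n, (X n ω + Y n ω) = (∑ n, X n ω) + ∑ n, Y n ω :=
        Finset.sum_add_distrib
      have h3 : ∑ n, X n ω ≤ ∑ _n : Fin N, (k : ℝ) :=
        Finset.sum_le_sum (fun n _ => hs n)
      linarith
    have hPD : (1 / 2 : ENNReal) < P D := by
      have h0 : P (s k \ D) = 0 := by
        have : s k \ D ⊆ {ω | ¬ (ω ∈ s k → ω ∈ D)} := by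
          intro ω hω
          simp only [Set.mem_setOf_eq, Classical.not_imp]
          exact ⟨hω.1, hω.2⟩
        exact measure_mono_null this (ae_iff.mp hsub)
      have h1 : P (s k) ≤ P D :=
        calc P (s k) ≤ P (s k ∩ D) + P (s k \ D) := measure_le_inter_add_diff _ _ _
          _ = P (s k ∩ D) := by rw [h0, add_zero]
          _ ≤ P D := measure_mono Set.inter_subset_right
      exact hk.trans_le h1
    -- pointwise a.e. bound
    have hbd : ∀ᵐ ω ∂P,
        (∑ n, Z' n ω) ≤ (∑ n, M n) - ε * D.indicator (fun _ => (1 : ℝ)) ω := by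
      filter_upwards [hae] with ω hω
      obtain ⟨_, hz⟩ := hω
      by_cases hωD : ω ∈ D
      · obtain ⟨n₀, hn₀⟩ := Set.mem_iUnion.mp hωD
        have h1 : ∑ n, Z' n ω ≤ ∑ n, (M n - if n = n₀ then ε else 0) := by
          refine Finset.sum_le_sum (fun n _ => ?_)
          by_cases hn : n = n₀
          · subst hn
            rw [if_pos rfl]
            have hb : Z' n ω ≤ u n (k : ℝ) := hn₀
            linarith [hεle n]
          · simp only [if_neg hn, sub_zero]
            rw [hz n]; exact hle n _
        have h2 : ∑ n, (M n - if n = n₀ then ε else 0) = (∑ n, M n) - ε := by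
          rw [Finset.sum_sub_distrib, Finset.sum_ite_eq' Finset.univ n₀ (fun _ => ε)]
          simp
        have h3 := h1.trans_eq h2
        rw [Set.indicator_of_mem hωD]
        simp only [mul_one]
        linarith
      · rw [Set.indicator_of_notMem hωD]
        simp only [mul_zero, sub_zero]
        refine Finset.sum_le_sum (fun n _ => ?_)
        rw [hz n]; exact hle n _
    -- integrate
    have hintR : Integrable
        (fun ω => (∑ n, M n) - ε * D.indicator (fun _ => (1 : ℝ)) ω) P := by
      refine (integrable_const _).sub ?_
      exact ((integrable_const (1 : ℝ)).indicator hDmeas).const_mul ε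
    have hintL : Integrable (fun ω => ∑ n, Z' n ω) P :=
      integrable_finset_sum _ (fun n _ => hZ'int n)
    have hI : ∑ n, ∫ ω, u n (X n ω + Y n ω) ∂P = ∫ ω, ∑ n, Z' n ω ∂P := by
      rw [integral_finset_sum _ (fun n _ => hZ'int n)]
      exact Finset.sum_congr rfl (fun n _ => integral_congr_ae (hZ'ae n))
    have hmonoI : ∫ ω, ∑ n, Z' n ω ∂P ≤
        ∫ ω, ((∑ n, M n) - ε * D.indicator (fun _ => (1 : ℝ)) ω) ∂P :=
      integral_mono_ae hintL hintR hbd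
    have hcomp : ∫ ω, ((∑ n, M n) - ε * D.indicator (fun _ => (1 : ℝ)) ω) ∂P
        = (∑ n, M n) - ε * (P D).toReal := by
      rw [integral_sub (integrable_const _)
        (((integrable_const (1 : ℝ)).indicator hDmeas).const_mul ε)]
      rw [integral_const, integral_const_mul, integral_indicator_const _ hDmeas]
      simp [measure_univ, measureReal_def]
    have htoReal : (1 / 2 : ℝ) ≤ (P D).toReal := by
      have h1 : ((1 / 2 : ENNReal)).toReal ≤ (P D).toReal :=
        ENNReal.toReal_mono (measure_ne_top P D) hPD.le
      simpa using h1
    rw [hI]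
    rw [hcomp] at hmonoI
    nlinarith [hεpos]
  -- conclude
  have hsSup : sSup {r : EReal | ∃ Y : Fin N → Ω → ℝ,
        (∀ᵐ ω ∂P, ∑ n, Y n ω ≤ 0) ∧
        (∀ n, Integrable (fun ω => u n (X n ω + Y n ω)) P) ∧
        r = ((∑ n, ∫ ω, u n (X n ω + Y n ω) ∂P : ℝ) : EReal)} ≤
      (((∑ n, M n) - ε / 2 : ℝ) : EReal) := by
    refine sSup_le ?_
    rintro r ⟨Y, hY0, hint, rfl⟩
    exact_mod_cast main Y hY0 hint
  refine hsSup.trans_lt ?_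
  exact_mod_cast (by linarith : (∑ n, M n) - ε / 2 < ∑ n, M n)
end

section
/- Let Q^1,…,Q^N be probability measures on (Ω, 𝓕) absolutely continuous with respect to P, let ℒ^1,…,ℒ^N be vector subspaces of random variables with ℝ ⊆ ℒ^n ⊆ L^1(Q^n), let u_1,…,u_N : ℝ → ℝ be Borel measurable, A ∈ ℝ, and let X^1,…,X^N be random variables such that u_n(X^n + c) is P-integrable for every constant c ∈ ℝ and every n. Define, with suprema taken in ℝ ∪ {±∞}: Π := sup{ Σ_{n=1}^N E_P[u_n(X^n+Y^n)] : Y^n ∈ ℒ^n and u_n(X^n+Y^n) P-integrable for every n, Σ_{n=1}^N E_{Q^n}[Y^n] ≤ A }; U_n(a) := sup{ E_P[u_n(X^n+Y)] : Y ∈ ℒ^n, u_n(X^n+Y) P-integrable, E_{Q^n}[Y] ≤ a } for a ∈ ℝ; and S := sup{ Σ_{n=1}^N U_n(a^n) : a ∈ ℝ^N, Σ_{n=1}^N a^n = A }. Then Π = S. -/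
/-!
Budget redistribution: a feasible systemic allocation `(Yⁿ)` with `Σₙ E_{Qⁿ}[Yⁿ] ≤ A` is feasible
for the single-agent problems with the budgets `aⁿ = E_{Qⁿ}[Yⁿ]`, the slack `A - Σₙ aⁿ` being
added to one agent, so `Π ≤ S`. Conversely, a finite sum of suprema in `EReal` is the supremum of
the sums of simultaneous selections, and each such selection is a feasible systemic allocation, so
`S ≤ Π`.
-/

open MeasureTheory

namespace EReal

@[simp, norm_cast]
lemma coe_finset_sum {ι : Type*} (s : Finset ι) (f : ι → ℝ) :
    ((∑ i ∈ s, f i : ℝ) : EReal) = ∑ i ∈ s, (f i : EReal) :=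
  map_sum (⟨⟨(↑), coe_zero⟩, coe_add⟩ : ℝ →+ EReal) f s

lemma sSup_add_sSup_le {A B : Set EReal} {c : EReal} (h : ∀ a ∈ A, ∀ b ∈ B, a + b ≤ c) :
    sSup A + sSup B ≤ c :=
  add_le_of_forall_lt fun a' ha' b' hb' => by
    obtain ⟨a, ha, ha'a⟩ := lt_sSup_iff.1 ha'
    obtain ⟨b, hb, hb'b⟩ := lt_sSup_iff.1 hb'
    exact (add_le_add ha'a.le hb'b.le).trans (h a ha b hb)

lemma sum_sSup_le_sSup_sum {ι : Type*} [DecidableEq ι] (s : Finset ι) (T : ι → Set EReal) :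
    ∑ i ∈ s, sSup (T i) ≤ sSup ((fun t => ∑ i ∈ s, t i) '' (s : Set ι).pi T) := by
  induction s using Finset.induction_on with
  | empty => exact le_sSup ⟨0, by simp, by simp⟩
  | insert a s ha ih =>
    rw [Finset.sum_insert ha]
    refine (add_le_add_right ih _).trans (sSup_add_sSup_le ?_)
    rintro x hx _ ⟨t, ht, rfl⟩
    refine le_sSup ⟨Function.update t a x, fun i hi => ?_, ?_⟩
    · rcases eq_or_ne i a with rfl | hia
      · simpa using hx
      · simpa [hia] using ht i (by simpa [hia] using hi)
    · simp [Finset.sum_insert ha, Finset.sum_update_of_notMem ha]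

end EReal

lemma exists_le_sum_eq_of_sum_le {ι M : Type*} [Fintype ι] [Nonempty ι] [AddCommGroup M]
    [PartialOrder M] [IsOrderedAddMonoid M] {b : ι → M} {A : M} (h : ∑ i, b i ≤ A) :
    ∃ a, b ≤ a ∧ ∑ i, a i = A := by
  classical
  let i₀ := Classical.arbitrary ι
  refine ⟨b + Pi.single i₀ (A - ∑ i, b i), fun i => le_add_of_nonneg_right ?_, ?_⟩
  · exact (Pi.single_nonneg (α := fun _ => M)).2 (sub_nonneg.2 h) i
  · simp [Finset.sum_add_distrib]

theorem systemic_sup_eq_allocation_sup_general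
    {Ω : Type*} [MeasurableSpace Ω] (P : Measure Ω)
    (N : ℕ) (hN : 1 ≤ N)
    (Q : Fin N → Measure Ω)
    (L : Fin N → Set (Ω → ℝ))
    (u : Fin N → ℝ → ℝ)
    (A : ℝ) (X : Fin N → Ω → ℝ) :
    sSup {r : EReal | ∃ Y : Fin N → Ω → ℝ, (∀ n, Y n ∈ L n) ∧
        (∀ n, Integrable (fun ω => u n (X n ω + Y n ω)) P) ∧
        (∑ n, ∫ ω, Y n ω ∂(Q n)) ≤ A ∧
        r = ((∑ n, ∫ ω, u n (X n ω + Y n ω) ∂P : ℝ) : EReal)} =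
    sSup {r : EReal | ∃ a : Fin N → ℝ, (∑ n, a n) = A ∧
        r = ∑ n, sSup {s : EReal | ∃ Y ∈ L n,
          Integrable (fun ω => u n (X n ω + Y ω)) P ∧
          (∫ ω, Y ω ∂(Q n)) ≤ a n ∧
          s = ((∫ ω, u n (X n ω + Y ω) ∂P : ℝ) : EReal)}} := by
  have : Nonempty (Fin N) := Fin.pos_iff_nonempty.1 hN
  apply le_antisymm
  · refine sSup_le ?_
    rintro _ ⟨Y, hYL, hYint, hbudget, rfl⟩
    obtain ⟨a, hYa, hsum⟩ := exists_le_sum_eq_of_sum_le hbudget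
    refine le_trans ?_ (le_sSup ⟨a, hsum, rfl⟩)
    push_cast
    exact Finset.sum_le_sum fun n _ => le_sSup ⟨Y n, hYL n, hYint n, hYa n, rfl⟩
  · refine sSup_le ?_
    rintro _ ⟨a, hsum, rfl⟩
    refine (EReal.sum_sSup_le_sSup_sum _ _).trans (sSup_le ?_)
    rintro _ ⟨t, ht, rfl⟩
    choose Y hYL hYint hYa hYt using fun n => ht n (Finset.mem_coe.2 (Finset.mem_univ n))
    refine le_sSup ⟨Y, hYL, hYint, hsum ▸ Finset.sum_le_sum fun n _ => hYa n, ?_⟩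
    push_cast
    exact Finset.sum_congr rfl fun n _ => hYt n

/-- Lemma 4.10: the systemic utility maximization problem `Π^Q(A)` under the overall
    budget constraint `Σₙ E_{Q^n}[Y^n] ≤ A` equals `S^Q(A)`, the supremum over
    deterministic allocations `a` with `Σₙ aⁿ = A` of the sum of the single-agent
    optimal values with budgets `aⁿ`. Suprema are taken in `ℝ ∪ {±∞}`. -/
theorem systemic_sup_eq_allocation_sup
    {Ω : Type*} [MeasurableSpace Ω] (P : Measure Ω) [IsProbabilityMeasure P]
    (N : ℕ) (hN : 1 ≤ N)
    (Q : Fin N → Measure Ω) [∀ n, IsProbabilityMeasure (Q n)]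
    (hQP : ∀ n, Q n ≪ P)
    (L : Fin N → Set (Ω → ℝ))
    (hLconst : ∀ n (c : ℝ), (fun _ => c) ∈ L n)
    (hLadd : ∀ n, ∀ Y ∈ L n, ∀ Z ∈ L n, Y + Z ∈ L n)
    (hLsmul : ∀ n (c : ℝ), ∀ Y ∈ L n, c • Y ∈ L n)
    (hLint : ∀ n, ∀ Y ∈ L n, Integrable Y (Q n))
    (u : Fin N → ℝ → ℝ) (hu : ∀ n, Measurable (u n))
    (A : ℝ) (X : Fin N → Ω → ℝ)
    (hXc : ∀ n (c : ℝ), Integrable (fun ω => u n (X n ω + c)) P) :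
    sSup {r : EReal | ∃ Y : Fin N → Ω → ℝ, (∀ n, Y n ∈ L n) ∧
        (∀ n, Integrable (fun ω => u n (X n ω + Y n ω)) P) ∧
        (∑ n, ∫ ω, Y n ω ∂(Q n)) ≤ A ∧
        r = ((∑ n, ∫ ω, u n (X n ω + Y n ω) ∂P : ℝ) : EReal)} =
    sSup {r : EReal | ∃ a : Fin N → ℝ, (∑ n, a n) = A ∧
        r = ∑ n, sSup {s : EReal | ∃ Y ∈ L n,
          Integrable (fun ω => u n (X n ω + Y ω)) P ∧
          (∫ ω, Y ω ∂(Q n)) ≤ a n ∧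
          s = ((∫ ω, u n (X n ω + Y ω) ∂P : ℝ) : EReal)}} :=
  systemic_sup_eq_allocation_sup_general P N hN Q L u A X
end

section
/- Let B ⊆ C_ℝ satisfy ℝ^N + B = B (i.e. b + Y ∈ B for every b ∈ ℝ^N and Y ∈ B). Let Q^1,…,Q^N be probability measures on (Ω, 𝓕) absolutely continuous with respect to P such that Σ_{n=1}^N E_{Q^n}[Z^n] ≤ 0 for every Z ∈ B with Σ_{n=1}^N Z^n = 0 P-a.s. and Z^n ∈ L^1(Q^n) for every n. Then for every Y ∈ B with Y^n ∈ L^1(Q^n) for every n one has Σ_{n=1}^N E_{Q^n}[Y^n] ≤ c, where c ∈ ℝ is the constant with Σ_{n=1}^N Y^n = c P-a.s. -/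
/-! Translating `Y` by `-c` in a single coordinate gives an element of `B` whose components
sum to `0` a.s.; since every `Q n` is a probability measure, the translation lowers the aggregate
price by exactly `c`, so polarity yields the bound. -/

open MeasureTheory

section ConstShift

variable {Ω ι : Type*} [MeasurableSpace Ω] [Fintype ι]

theorem ae_sum_const_add_eq (μ : Measure Ω) (b : ι → ℝ) {Y : ι → Ω → ℝ} {c : ℝ}
    (hc : ∀ᵐ ω ∂μ, ∑ i, Y i ω = c) :
    ∀ᵐ ω ∂μ, ∑ i, (b i + Y i ω) = ∑ i, b i + c := by
  filter_upwards [hc] with ω hω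
  rw [Finset.sum_add_distrib, hω]

theorem sum_integral_const_add (Q : ι → Measure Ω) [∀ i, IsProbabilityMeasure (Q i)]
    (b : ι → ℝ) {Y : ι → Ω → ℝ} (hY : ∀ i, Integrable (Y i) (Q i)) :
    ∑ i, ∫ ω, b i + Y i ω ∂(Q i) = ∑ i, b i + ∑ i, ∫ ω, Y i ω ∂(Q i) := by
  simp only [fun i => integral_add (integrable_const (b i)) (hY i), integral_const,
    probReal_univ, one_smul, Finset.sum_add_distrib]

end ConstShift

theorem aggregate_price_dominated_by_sum_general
    {Ω : Type*} [MeasurableSpace Ω] (P : Measure Ω)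
    (N : ℕ) (hN : 1 ≤ N)
    (B : Set (Fin N → Ω → ℝ))
    -- `ℝ^N + B = B`
    (hBtrans : ∀ (b : Fin N → ℝ), ∀ Y ∈ B, (fun n ω => b n + Y n ω) ∈ B)
    (Q : Fin N → Measure Ω) [∀ n, IsProbabilityMeasure (Q n)]
    -- polarity: `Σₙ E_{Q^n}[Z^n] ≤ 0` for every `Z ∈ B` with `Σₙ Z^n = 0` a.s.
    (hpolar : ∀ Z ∈ B, (∀ᵐ ω ∂P, ∑ n, Z n ω = 0) →
      (∀ n, Integrable (Z n) (Q n)) → ∑ n, ∫ ω, Z n ω ∂(Q n) ≤ 0)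
    (Y : Fin N → Ω → ℝ) (hY : Y ∈ B)
    (hYint : ∀ n, Integrable (Y n) (Q n))
    (c : ℝ) (hc : ∀ᵐ ω ∂P, ∑ n, Y n ω = c) :
    ∑ n, ∫ ω, Y n ω ∂(Q n) ≤ c := by
  set b : Fin N → ℝ := Pi.single ⟨0, hN⟩ (-c)
  have hb : ∑ n, b n = -c := Finset.sum_pi_single' _ _ _ |>.trans (if_pos (Finset.mem_univ _))
  have hsum : ∀ᵐ ω ∂P, ∑ n, (b n + Y n ω) = 0 := by
    simpa only [hb, neg_add_cancel] using ae_sum_const_add_eq P b hc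
  have hprice := hpolar _ (hBtrans b Y hY) hsum fun n => (integrable_const (b n)).add (hYint n)
  rw [sum_integral_const_add Q b hYint, hb] at hprice
  linarith

/-- Proposition 4.6: for polar pricing vectors `Q`, the aggregate price of any feasible
    allocation `Y ∈ B` is dominated by its (deterministic) componentwise sum `c`. -/
theorem aggregate_price_dominated_by_sum
    {Ω : Type*} [MeasurableSpace Ω] (P : Measure Ω) [IsProbabilityMeasure P]
    (N : ℕ) (hN : 1 ≤ N)
    (B : Set (Fin N → Ω → ℝ))
    -- `B ⊆ C_ℝ` : the componentwise sum of every element of `B` is a.s. constant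
    (hBCR : ∀ Y ∈ B, ∃ c : ℝ, ∀ᵐ ω ∂P, ∑ n, Y n ω = c)
    -- `ℝ^N + B = B`
    (hBtrans : ∀ (b : Fin N → ℝ), ∀ Y ∈ B, (fun n ω => b n + Y n ω) ∈ B)
    (Q : Fin N → Measure Ω) [∀ n, IsProbabilityMeasure (Q n)]
    (hQP : ∀ n, Q n ≪ P)
    -- polarity: `Σₙ E_{Q^n}[Z^n] ≤ 0` for every `Z ∈ B` with `Σₙ Z^n = 0` a.s.
    (hpolar : ∀ Z ∈ B, (∀ᵐ ω ∂P, ∑ n, Z n ω = 0) →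
      (∀ n, Integrable (Z n) (Q n)) → ∑ n, ∫ ω, Z n ω ∂(Q n) ≤ 0)
    (Y : Fin N → Ω → ℝ) (hY : Y ∈ B)
    (hYint : ∀ n, Integrable (Y n) (Q n))
    (c : ℝ) (hc : ∀ᵐ ω ∂P, ∑ n, Y n ω = c) :
    ∑ n, ∫ ω, Y n ω ∂(Q n) ≤ c :=
  aggregate_price_dominated_by_sum_general P N hN B hBtrans Q hpolar Y hY hYint c hc
end

section
/- Let B ⊆ C_ℝ be closed under truncation, let A ∈ ℝ, and let Q^1,…,Q^N be probability measures on (Ω, 𝓕) absolutely continuous with respect to P such that Σ_{n=1}^N E_{Q^n}[W^n] ≤ c_W for every bounded W ∈ B, where c_W ∈ ℝ denotes the constant with Σ_{n=1}^N W^n = c_W P-a.s. Then every Y ∈ B with Y^n ∈ L^1(Q^n) for every n and Σ_{n=1}^N Y^n ≤ A P-a.s. satisfies Σ_{n=1}^N E_{Q^n}[Y^n] ≤ A. -/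
/-!
Truncating `Y` at level `m` (replacing it by the constant vector `c` wherever some component
reaches `m`) gives a bounded element of `B` with the same constant sum `c_Y`, so its price is at
most `c_Y`. As `m → ∞` the truncations converge pointwise to `Y` and are dominated by
`|Yⁿ| + |cⁿ| ∈ L¹(Qⁿ)`, so the prices converge to that of `Y`; finally `c_Y ≤ A` because
`Σₙ Yⁿ = c_Y ≤ A` on a set of positive measure.
-/

open MeasureTheory Filter Topology

namespace TruncationClosed

variable {Ω ι : Type*} [Fintype ι]

noncomputable def truncate (Y : ι → Ω → ℝ) (c : ι → ℝ) (m : ℝ) : ι → Ω → ℝ :=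
  fun n ω => if ∀ k, |Y k ω| < m then Y n ω else c n

variable {Y : ι → Ω → ℝ} {c : ι → ℝ}

/-- Needed because an `if` over `∀ k : Fin N, …` is decided by `Nat.decidableForallFin`, which is
not definitionally the `Fintype` instance chosen in `truncate`. -/
theorem ite_eq_truncate (m : ℝ) [∀ ω, Decidable (∀ k, |Y k ω| < m)] :
    (fun n ω => if ∀ k, |Y k ω| < m then Y n ω else c n) = truncate Y c m := by
  funext n ω
  unfold truncate
  congr

theorem abs_truncate_le_add_sum {m : ℝ} (hm : 0 ≤ m) (n : ι) (ω : Ω) :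
    |truncate Y c m n ω| ≤ m + ∑ k, |c k| := by
  have hc : |c n| ≤ ∑ k, |c k| :=
    Finset.single_le_sum (fun k _ => abs_nonneg (c k)) (Finset.mem_univ n)
  unfold truncate
  split_ifs with hlt
  · linarith [hlt n, Finset.sum_nonneg fun k (_ : k ∈ Finset.univ) => abs_nonneg (c k)]
  · linarith

theorem abs_truncate_le_abs_add_abs (m : ℝ) (n : ι) (ω : Ω) :
    |truncate Y c m n ω| ≤ |Y n ω| + |c n| := by
  unfold truncate
  split_ifs
  · linarith [abs_nonneg (c n)]
  · linarith [abs_nonneg (Y n ω)]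

theorem sum_truncate_eq {s : ℝ} {ω : Ω} (hY : ∑ n, Y n ω = s) (hc : ∑ n, c n = s) (m : ℝ) :
    ∑ n, truncate Y c m n ω = s := by
  unfold truncate
  split_ifs
  exacts [hY, hc]

theorem eventually_truncate_eq (ω : Ω) :
    ∀ᶠ m : ℕ in atTop, ∀ n, truncate Y c m n ω = Y n ω := by
  have hlarge : ∀ᶠ m : ℕ in atTop, ∀ k, |Y k ω| < m :=
    eventually_all.2 fun k => tendsto_natCast_atTop_atTop.eventually_gt_atTop _
  filter_upwards [hlarge] with m hm n
  exact if_pos hm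

theorem tendsto_integral_truncate [MeasurableSpace Ω] {μ : Measure Ω} [IsFiniteMeasure μ]
    {n : ι} (hY : Integrable (Y n) μ)
    (hmeas : ∀ᶠ m : ℕ in atTop, AEStronglyMeasurable (truncate Y c m n) μ) :
    Tendsto (fun m : ℕ => ∫ ω, truncate Y c m n ω ∂μ) atTop (𝓝 (∫ ω, Y n ω ∂μ)) :=
  tendsto_integral_filter_of_dominated_convergence (fun ω => |Y n ω| + |c n|) hmeas
    (Eventually.of_forall fun m => ae_of_all _ fun ω => abs_truncate_le_abs_add_abs m n ω)
    (hY.abs.add (integrable_const _))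
    (ae_of_all _ fun ω =>
      tendsto_const_nhds.congr' ((eventually_truncate_eq ω).mono fun _ hm => (hm n).symm))

end TruncationClosed

open TruncationClosed

theorem truncation_closed_price_bound_general
    {Ω : Type*} [MeasurableSpace Ω] (P : Measure Ω) [IsProbabilityMeasure P]
    (N : ℕ) (A : ℝ)
    (B : Set (Fin N → Ω → ℝ))
    -- elements of `B` are (vectors of) random variables
    (hBmeas : ∀ Y ∈ B, ∀ n, AEStronglyMeasurable (Y n) P)
    -- `B ⊆ C_ℝ`
    (hBCR : ∀ Y ∈ B, ∃ c : ℝ, ∀ᵐ ω ∂P, ∑ n, Y n ω = c)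
    -- `B` is closed under truncation
    (hBtrunc : ∀ Y ∈ B, ∀ cY : ℝ, (∀ᵐ ω ∂P, ∑ n, Y n ω = cY) →
      ∃ (mY : ℕ) (c : Fin N → ℝ), (∑ n, c n) = cY ∧ ∀ m : ℕ, mY ≤ m →
        (fun n ω => if ∀ k, |Y k ω| < (m : ℝ) then Y n ω else c n) ∈ B)
    (Q : Fin N → Measure Ω) [∀ n, IsProbabilityMeasure (Q n)]
    (hQP : ∀ n, Q n ≪ P)
    -- the price bound holds for every bounded element of `B`
    (hpolar : ∀ W ∈ B, ∀ C : ℝ, (∀ n ω, |W n ω| ≤ C) → ∀ cW : ℝ,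
      (∀ᵐ ω ∂P, ∑ n, W n ω = cW) → ∑ n, ∫ ω, W n ω ∂(Q n) ≤ cW)
    (Y : Fin N → Ω → ℝ) (hY : Y ∈ B)
    (hYint : ∀ n, Integrable (Y n) (Q n))
    (hYA : ∀ᵐ ω ∂P, ∑ n, Y n ω ≤ A) :
    ∑ n, ∫ ω, Y n ω ∂(Q n) ≤ A := by
  obtain ⟨cY, hcY⟩ := hBCR Y hY
  have hcYA : cY ≤ A := by
    obtain ⟨ω, hω, hωA⟩ := (hcY.and hYA).exists
    exact hω ▸ hωA
  obtain ⟨mY, c, hcsum, htrunc⟩ := hBtrunc Y hY cY hcY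
  replace htrunc : ∀ m : ℕ, mY ≤ m → truncate Y c m ∈ B := fun m hm =>
    ite_eq_truncate (Y := Y) (c := c) (m : ℝ) ▸ htrunc m hm
  have hprice : ∀ᶠ m : ℕ in atTop, ∑ n, ∫ ω, truncate Y c m n ω ∂(Q n) ≤ cY :=
    (eventually_ge_atTop mY).mono fun m hm =>
      hpolar _ (htrunc m hm) _ (abs_truncate_le_add_sum m.cast_nonneg) cY
        (hcY.mono fun _ hω => sum_truncate_eq hω hcsum m)
  have hlim : Tendsto (fun m : ℕ => ∑ n, ∫ ω, truncate Y c m n ω ∂(Q n)) atTop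
      (𝓝 (∑ n, ∫ ω, Y n ω ∂(Q n))) :=
    tendsto_finsetSum _ fun n _ => tendsto_integral_truncate (hYint n)
      ((eventually_ge_atTop mY).mono fun m hm => (hBmeas _ (htrunc m hm) n).mono_ac (hQP n))
  exact (le_of_tendsto hlim hprice).trans hcYA

/-- Lemma 4.14: if `B ⊆ C_ℝ` is closed under truncation and the pricing vector `Q`
    satisfies `Σₙ E_{Q^n}[W^n] ≤ c_W` for every bounded `W ∈ B`, then every `Y ∈ B`
    with `Y^n ∈ L¹(Q^n)` and `Σₙ Y^n ≤ A` a.s. satisfies `Σₙ E_{Q^n}[Y^n] ≤ A`. -/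
theorem truncation_closed_price_bound
    {Ω : Type*} [MeasurableSpace Ω] (P : Measure Ω) [IsProbabilityMeasure P]
    (N : ℕ) (hN : 1 ≤ N) (A : ℝ)
    (B : Set (Fin N → Ω → ℝ))
    -- elements of `B` are (vectors of) random variables
    (hBmeas : ∀ Y ∈ B, ∀ n, AEStronglyMeasurable (Y n) P)
    -- `B ⊆ C_ℝ`
    (hBCR : ∀ Y ∈ B, ∃ c : ℝ, ∀ᵐ ω ∂P, ∑ n, Y n ω = c)
    -- `B` is closed under truncation
    (hBtrunc : ∀ Y ∈ B, ∀ cY : ℝ, (∀ᵐ ω ∂P, ∑ n, Y n ω = cY) →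
      ∃ (mY : ℕ) (c : Fin N → ℝ), (∑ n, c n) = cY ∧ ∀ m : ℕ, mY ≤ m →
        (fun n ω => if ∀ k, |Y k ω| < (m : ℝ) then Y n ω else c n) ∈ B)
    (Q : Fin N → Measure Ω) [∀ n, IsProbabilityMeasure (Q n)]
    (hQP : ∀ n, Q n ≪ P)
    -- the price bound holds for every bounded element of `B`
    (hpolar : ∀ W ∈ B, ∀ C : ℝ, (∀ n ω, |W n ω| ≤ C) → ∀ cW : ℝ,
      (∀ᵐ ω ∂P, ∑ n, W n ω = cW) → ∑ n, ∫ ω, W n ω ∂(Q n) ≤ cW)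
    (Y : Fin N → Ω → ℝ) (hY : Y ∈ B)
    (hYint : ∀ n, Integrable (Y n) (Q n))
    (hYA : ∀ᵐ ω ∂P, ∑ n, Y n ω ≤ A) :
    ∑ n, ∫ ω, Y n ω ∂(Q n) ≤ A :=
  truncation_closed_price_bound_general P N A B hBmeas hBCR hBtrunc Q hQP hpolar Y hY hYint hYA
end

section
/- Let A_1,…,A_K ∈ 𝓕 be a measurable partition of Ω and, for each i = 1,…,K, let I^i = (I^i_m)_{m=1,…,h_i} be a partition of {1,…,N}. Let B be the set of N-vectors Y of real random variables such that Σ_{n=1}^N Y^n is P-a.s. constant and, for every i and every m, Σ_{n∈I^i_m} Y^n is P-a.s. constant on A_i. Let Q^1,…,Q^N be probability measures on (Ω, 𝓕) absolutely continuous with respect to P such that Σ_{n=1}^N E_{Q^n}[Z^n] ≤ 0 for every bounded Z ∈ B with Σ_{n=1}^N Z^n = 0 P-a.s. Then for every i, every m, all j, k ∈ I^i_m and every F ∈ 𝓕, Q^j(F ∩ A_i) = Q^k(F ∩ A_i). -/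
/-!
Fix agents `j, k` in the same cluster of the `i`-th partition and a bounded measurable `g`
vanishing off `A i`. Transferring the amount `g` from agent `k` to agent `j` gives a vector
`Z = (𝟙_j - 𝟙_k) g` whose total sum is zero and whose cluster sums vanish: on `A i` because
`j` and `k` lie in the same cluster, off `A i` because `g` does. Polarity therefore gives
`E_{Q^j}[g] ≤ E_{Q^k}[g]`, and the transfer in the opposite direction gives equality.
With `g = 𝟙_{F ∩ A i}` this is `Q^j(F ∩ A i) = Q^k(F ∩ A i)`.
-/

open MeasureTheory

section TransferVector

variable {Ω ι : Type*} [DecidableEq ι]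

def transferVector (j k : ι) (g : Ω → ℝ) : ι → Ω → ℝ :=
  fun n ω => (Pi.single j 1 - Pi.single k 1 : ι → ℝ) n * g ω

variable (j k : ι)

theorem sum_transferVector (g : Ω → ℝ) (S : Finset ι) (ω : Ω) :
    ∑ n ∈ S, transferVector j k g n ω =
      ((if j ∈ S then 1 else 0) - (if k ∈ S then 1 else 0)) * g ω := by
  simp only [transferVector, ← Finset.sum_mul, Pi.sub_apply, Finset.sum_sub_distrib,
    Finset.sum_pi_single']

theorem sum_transferVector_eq_zero (g : Ω → ℝ) {S : Finset ι} (hS : j ∈ S ↔ k ∈ S) (ω : Ω) :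
    ∑ n ∈ S, transferVector j k g n ω = 0 := by
  rw [sum_transferVector]
  by_cases hj : j ∈ S <;> simp [hj, ← hS]

theorem measurable_transferVector [MeasurableSpace Ω] {g : Ω → ℝ} (hg : Measurable g) (n : ι) :
    Measurable (transferVector j k g n) :=
  measurable_const.mul hg

theorem abs_transferVector_le {g : Ω → ℝ} {C : ℝ} (hg : ∀ ω, |g ω| ≤ C) (n : ι) (ω : Ω) :
    |transferVector j k g n ω| ≤ C := by
  have hcoef : |(Pi.single j 1 - Pi.single k 1 : ι → ℝ) n| ≤ 1 := by
    simp only [Pi.sub_apply, Pi.single_apply]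
    split_ifs <;> norm_num
  calc |transferVector j k g n ω| ≤ 1 * |g ω| := by
        rw [transferVector, abs_mul]
        exact mul_le_mul_of_nonneg_right hcoef (abs_nonneg _)
    _ ≤ C := by rw [one_mul]; exact hg ω

theorem sum_integral_transferVector [Fintype ι] [MeasurableSpace Ω] (g : Ω → ℝ)
    (Q : ι → Measure Ω) :
    ∑ n, ∫ ω, transferVector j k g n ω ∂Q n = ∫ ω, g ω ∂Q j - ∫ ω, g ω ∂Q k := by
  simp_rw [transferVector, integral_const_mul]
  simp only [Pi.sub_apply, sub_mul, Finset.sum_sub_distrib, Pi.single_apply, ite_mul, one_mul,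
    zero_mul, Finset.sum_ite_eq', Finset.mem_univ, if_true]

end TransferVector

def IsPolarPricing {Ω : Type*} [MeasurableSpace Ω] (P : Measure Ω) {N K : ℕ}
    (A : Fin K → Set Ω) (c : Fin K → Fin N → ℕ) (Q : Fin N → Measure Ω) : Prop :=
  ∀ Z : Fin N → Ω → ℝ,
    (∀ n, Measurable (Z n)) →
    (∃ C : ℝ, ∀ n ω, |Z n ω| ≤ C) →
    (∃ const : ℝ, ∀ᵐ ω ∂P, ∑ n, Z n ω = const) →
    (∀ (i : Fin K) (m : ℕ), ∃ d : ℝ, ∀ᵐ ω ∂P, ω ∈ A i →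
      ∑ n ∈ Finset.univ.filter (fun n => c i n = m), Z n ω = d) →
    (∀ᵐ ω ∂P, ∑ n, Z n ω = 0) →
    ∑ n, ∫ ω, Z n ω ∂(Q n) ≤ 0

theorem IsPolarPricing.integral_le {Ω : Type*} [MeasurableSpace Ω] {P : Measure Ω} {N K : ℕ}
    {A : Fin K → Set Ω} {c : Fin K → Fin N → ℕ} {Q : Fin N → Measure Ω}
    (hQ : IsPolarPricing P A c Q) (hAdisj : Pairwise (Function.onFun Disjoint A))
    {i : Fin K} {j k : Fin N} (hjk : c i j = c i k)
    {g : Ω → ℝ} (hg : Measurable g) {C : ℝ} (hgC : ∀ ω, |g ω| ≤ C) (hgA : ∀ ω ∉ A i, g ω = 0) :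
    ∫ ω, g ω ∂Q j ≤ ∫ ω, g ω ∂Q k := by
  have hsum : ∀ ω, ∑ n, transferVector j k g n ω = 0 :=
    sum_transferVector_eq_zero j k g (by simp)
  have hcluster : ∀ (i' : Fin K) (m : ℕ) (ω : Ω), ω ∈ A i' →
      ∑ n ∈ Finset.univ.filter (fun n => c i' n = m), transferVector j k g n ω = 0 := by
    intro i' m ω hω
    rcases eq_or_ne i' i with rfl | hi
    · exact sum_transferVector_eq_zero j k g (by simp [hjk]) ω
    · rw [sum_transferVector, hgA ω ((hAdisj hi).notMem_of_mem_left hω), mul_zero]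
  have h := hQ (transferVector j k g) (measurable_transferVector j k hg)
    ⟨C, abs_transferVector_le j k hgC⟩ ⟨0, .of_forall hsum⟩
    (fun i' m => ⟨0, .of_forall fun ω => hcluster i' m ω⟩) (.of_forall hsum)
  rw [sum_integral_transferVector] at h
  linarith

theorem cluster_components_agree_general
    {Ω : Type*} [MeasurableSpace Ω] (P : Measure Ω)
    (N K : ℕ)
    (A : Fin K → Set Ω) (hAmeas : ∀ i, MeasurableSet (A i))
    (hAdisj : Pairwise (Function.onFun Disjoint A))
    (c : Fin K → Fin N → ℕ)
    (Q : Fin N → Measure Ω) [∀ n, IsProbabilityMeasure (Q n)]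
    -- `Σₙ E_{Q^n}[Z^n] ≤ 0` for every bounded `Z ∈ B` with `Σₙ Z^n = 0` a.s.,
    -- where `Z ∈ B` means: `Σₙ Z^n` is a.s. constant and each cluster sum of the
    -- `i`-th partition is a.s. constant on `A i`.
    (hpolar : ∀ Z : Fin N → Ω → ℝ,
      (∀ n, Measurable (Z n)) →
      (∃ C : ℝ, ∀ n ω, |Z n ω| ≤ C) →
      (∃ const : ℝ, ∀ᵐ ω ∂P, ∑ n, Z n ω = const) →
      (∀ (i : Fin K) (m : ℕ), ∃ d : ℝ, ∀ᵐ ω ∂P, ω ∈ A i →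
        ∑ n ∈ Finset.univ.filter (fun n => c i n = m), Z n ω = d) →
      (∀ᵐ ω ∂P, ∑ n, Z n ω = 0) →
      ∑ n, ∫ ω, Z n ω ∂(Q n) ≤ 0) :
    ∀ (i : Fin K) (j k : Fin N), c i j = c i k →
      ∀ F : Set Ω, MeasurableSet F → Q j (F ∩ A i) = Q k (F ∩ A i) := by
  intro i j k hjk F hF
  have hQ : IsPolarPricing P A c Q := hpolar
  have hs : MeasurableSet (F ∩ A i) := hF.inter (hAmeas i)
  set g : Ω → ℝ := (F ∩ A i).indicator 1
  have hg : Measurable g := measurable_one.indicator hs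
  have hgC : ∀ ω, |g ω| ≤ 1 := fun ω => by
    by_cases hω : ω ∈ F ∩ A i <;> simp [g, hω]
  have hgA : ∀ ω ∉ A i, g ω = 0 := fun ω hω =>
    Set.indicator_of_notMem (fun h => hω h.2) _
  have hint : ∫ ω, g ω ∂Q j = ∫ ω, g ω ∂Q k :=
    le_antisymm (hQ.integral_le hAdisj hjk hg hgC hgA)
      (hQ.integral_le hAdisj hjk.symm hg hgC hgA)
  rwa [integral_indicator_one hs, integral_indicator_one hs,
    measureReal_eq_measureReal_iff] at hint

/-- Lemma 4.20: for scenario-dependent clustering constraint sets, the components of any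
    polar pricing vector corresponding to agents in the same cluster agree on the trace
    σ-algebra of the corresponding scenario.  The partition of `{1,…,N}` associated with
    the scenario `A i` is encoded by the labelling map `c i : Fin N → ℕ` (two agents lie
    in the same cluster of the `i`-th partition iff they carry the same label). -/
theorem cluster_components_agree
    {Ω : Type*} [MeasurableSpace Ω] (P : Measure Ω) [IsProbabilityMeasure P]
    (N K : ℕ) (hN : 1 ≤ N)
    (A : Fin K → Set Ω) (hAmeas : ∀ i, MeasurableSet (A i))
    (hAdisj : Pairwise (Function.onFun Disjoint A))
    (hAcover : (⋃ i, A i) = Set.univ)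
    (c : Fin K → Fin N → ℕ)
    (Q : Fin N → Measure Ω) [∀ n, IsProbabilityMeasure (Q n)]
    (hQP : ∀ n, Q n ≪ P)
    -- `Σₙ E_{Q^n}[Z^n] ≤ 0` for every bounded `Z ∈ B` with `Σₙ Z^n = 0` a.s.,
    -- where `Z ∈ B` means: `Σₙ Z^n` is a.s. constant and each cluster sum of the
    -- `i`-th partition is a.s. constant on `A i`.
    (hpolar : ∀ Z : Fin N → Ω → ℝ,
      (∀ n, Measurable (Z n)) →
      (∃ C : ℝ, ∀ n ω, |Z n ω| ≤ C) →
      (∃ const : ℝ, ∀ᵐ ω ∂P, ∑ n, Z n ω = const) →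
      (∀ (i : Fin K) (m : ℕ), ∃ d : ℝ, ∀ᵐ ω ∂P, ω ∈ A i →
        ∑ n ∈ Finset.univ.filter (fun n => c i n = m), Z n ω = d) →
      (∀ᵐ ω ∂P, ∑ n, Z n ω = 0) →
      ∑ n, ∫ ω, Z n ω ∂(Q n) ≤ 0) :
    ∀ (i : Fin K) (j k : Fin N), c i j = c i k →
      ∀ F : Set Ω, MeasurableSet F → Q j (F ∩ A i) = Q k (F ∩ A i) :=
  cluster_components_agree_general P N K A hAmeas hAdisj c Q hpolar
end

section
/- Let v_1,…,v_N : (0,∞) → ℝ be convex functions bounded from below, λ > 0, A ∈ ℝ, 𝒢 ⊆ 𝓕 a sub-σ-algebra, Z a random variable with Z > 0 P-a.s. and E_P[Z] = 1, and X^1,…,X^N real random variables such that X̄ := Σ_{n=1}^N X^n is 𝒢-measurable, X̄·Z ∈ L^1(P), and v_n(λZ) ∈ L^1(P) for every n. Set Z' := E_P[Z | 𝒢]. Then Z' > 0 P-a.s., X̄·Z' ∈ L^1(P), v_n(λZ') ∈ L^1(P) for every n, and λ·(E_P[X̄·Z'] + A) + Σ_{n=1}^N E_P[v_n(λZ')]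 ≤ λ·(E_P[X̄·Z] + A) + Σ_{n=1}^N E_P[v_n(λZ)]. -/
open MeasureTheory Set

set_option maxHeartbeats 1000000

noncomputable def lslope (f : ℝ → ℝ) (p q : ℝ) : ℝ := (f q - f p) / (q - p)
noncomputable def lcorr (f : ℝ → ℝ) (p q : ℝ) : ℝ :=
  sInf ((fun x => f x - (f p + lslope f p q * (x - p))) '' Icc p q)

lemma chord_le {f : ℝ → ℝ} (hf : ConvexOn ℝ (Ioi 0) f) {p q x : ℝ}
    (hp : 0 < p) (hpq : p < q) (hx : 0 < x) (hout : x < p ∨ q < x) :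
    f p + lslope f p q * (x - p) ≤ f x := by
  rcases hout with h | h
  · have hs := hf.slope_mono_adjacent (mem_Ioi.2 hx) (mem_Ioi.2 (hp.trans hpq)) h hpq
    have h1 : f p - f x ≤ lslope f p q * (p - x) := by
      rw [lslope]
      have := (div_le_iff₀ (by linarith : (0:ℝ) < p - x)).1 hs
      linarith [this]
    nlinarith [h1]
  · have hs := hf.slope_mono_adjacent (mem_Ioi.2 hp) (mem_Ioi.2 (hp.trans (hpq.trans h))) hpq h
    have h1 : lslope f p q * (x - q) ≤ f x - f q := by
      rw [lslope]
      have := (le_div_iff₀ (by linarith : (0:ℝ) < x - q)).1 hs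
      linarith [this]
    have h2 : lslope f p q * (q - p) = f q - f p := by
      rw [lslope]; exact div_mul_cancel₀ _ (sub_ne_zero.2 hpq.ne')
    nlinarith [h1, h2]

lemma lcorr_bdd {f : ℝ → ℝ} (hf : ConvexOn ℝ (Ioi 0) f) {p q : ℝ}
    (hp : 0 < p) (hpq : p ≤ q) :
    BddBelow ((fun x => f x - (f p + lslope f p q * (x - p))) '' Icc p q) := by
  have hsub : Icc p q ⊆ Ioi 0 := fun y hy => lt_of_lt_of_le hp hy.1
  have hcont : ContinuousOn (fun x => f x - (f p + lslope f p q * (x - p))) (Icc p q) := by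
    apply ContinuousOn.sub ((hf.continuousOn isOpen_Ioi).mono hsub)
    fun_prop
  exact (isCompact_Icc.image_of_continuousOn hcont).bddBelow

lemma lcorr_nonpos {f : ℝ → ℝ} (hf : ConvexOn ℝ (Ioi 0) f) {p q : ℝ}
    (hp : 0 < p) (hpq : p ≤ q) : lcorr f p q ≤ 0 := by
  have h0 : (0:ℝ) ∈ (fun x => f x - (f p + lslope f p q * (x - p))) '' Icc p q :=
    ⟨p, ⟨le_refl _, hpq⟩, by ring⟩
  exact csInf_le (lcorr_bdd hf hp hpq) h0

lemma lline_le {f : ℝ → ℝ} (hf : ConvexOn ℝ (Ioi 0) f) {p q x : ℝ}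
    (hp : 0 < p) (hpq : p < q) (hx : 0 < x) :
    f p + lslope f p q * (x - p) + lcorr f p q ≤ f x := by
  by_cases hmem : x ∈ Icc p q
  · have h2 := csInf_le (lcorr_bdd hf hp hpq.le) ⟨x, hmem, rfl⟩
    simp only at h2
    simp only [lcorr]
    linarith [h2]
  · have hout : x < p ∨ q < x := by
      rcases not_and_or.1 hmem with h | h
      · exact Or.inl (lt_of_not_ge h)
      · exact Or.inr (lt_of_not_ge h)
    have := chord_le hf hp hpq hx hout
    linarith [lcorr_nonpos hf hp hpq.le]

lemma lcorr_ge {f : ℝ → ℝ} {p q c : ℝ} (hpq : p ≤ q)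
    (h : ∀ y ∈ Icc p q, c ≤ f y - (f p + lslope f p q * (y - p))) :
    c ≤ lcorr f p q :=
  le_csInf (Nonempty.image _ (nonempty_Icc.2 hpq)) (fun b ⟨y, hy, hyb⟩ => hyb ▸ h y hy)

lemma lline_approx {f : ℝ → ℝ} (hf : ConvexOn ℝ (Ioi 0) f) {x₀ ε : ℝ}
    (hx₀ : 0 < x₀) (hε : 0 < ε) :
    ∃ p q : ℚ, 0 < (p:ℝ) ∧ (p:ℝ) < (q:ℝ) ∧
      f x₀ - ε ≤ f p + lslope f p q * (x₀ - p) + lcorr f p q := by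
  set ε₁ := ε / 4 with hε₁def
  have hε₁ : 0 < ε₁ := by positivity
  have hcont : ContinuousAt f x₀ :=
    (hf.continuousOn isOpen_Ioi).continuousAt (isOpen_Ioi.mem_nhds hx₀)
  obtain ⟨δ₀, hδ₀pos, hδ₀⟩ := Metric.continuousAt_iff.1 hcont ε₁ hε₁
  set m₁ := (f (x₀/2) - f (x₀/4)) / (x₀/2 - x₀/4) with hm₁def
  set m₂ := (f (x₀+2) - f (x₀+1)) / ((x₀+2) - (x₀+1)) with hm₂def
  set c := 1 + |m₁| + |m₂| with hcdef
  have hc : 0 < c := by positivity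
  set δ := min (δ₀/2) (min (x₀/8) (ε₁/c)) with hδdef
  have hδpos : 0 < δ := by
    apply lt_min (by positivity) (lt_min (by positivity) (by positivity))
  have hδ1 : δ ≤ δ₀/2 := min_le_left _ _
  have hδ2 : δ ≤ x₀/8 := le_trans (min_le_right _ _) (min_le_left _ _)
  have hδ3 : δ ≤ ε₁/c := le_trans (min_le_right _ _) (min_le_right _ _)
  have hδ3' : δ * c ≤ ε₁ := by
    rw [← le_div_iff₀ hc]; exact hδ3
  obtain ⟨p, hp1, hp2⟩ := exists_rat_btwn (show x₀ - δ < x₀ - δ/2 by linarith)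
  obtain ⟨q, hq1, hq2⟩ := exists_rat_btwn (show x₀ - δ/2 < x₀ by linarith)
  have hppos : 0 < (p:ℝ) := by linarith
  have hpq : (p:ℝ) < (q:ℝ) := lt_trans hp2 hq1
  refine ⟨p, q, hppos, hpq, ?_⟩
  set P := (p:ℝ)
  set Q := (q:ℝ)
  set s := lslope f P Q with hsdef
  -- near-x₀ values of f
  have hnear : ∀ y : ℝ, P ≤ y → y ≤ Q → |f y - f x₀| < ε₁ := by
    intro y hy1 hy2
    have : dist y x₀ < δ₀ := by
      rw [Real.dist_eq, abs_lt]
      constructor <;> nlinarith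
    have := hδ₀ this
    rwa [Real.dist_eq] at this
  -- slope bounds
  have hx24 : (0:ℝ) < x₀/4 := by linarith
  have hPmem : x₀/2 < P := by linarith
  have hs_lb : m₁ ≤ s := by
    have h1 := hf.slope_mono_adjacent (mem_Ioi.2 hx24) (mem_Ioi.2 hppos)
      (show x₀/4 < x₀/2 by linarith) hPmem
    have h2 := hf.slope_mono_adjacent (mem_Ioi.2 (by linarith : (0:ℝ) < x₀/2))
      (mem_Ioi.2 (by linarith : (0:ℝ) < Q)) hPmem hpq
    rw [hsdef, lslope, hm₁def]
    calc (f (x₀/2) - f (x₀/4)) / (x₀/2 - x₀/4) ≤ (f P - f (x₀/2)) / (P - x₀/2) := h1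
    _ ≤ (f Q - f P) / (Q - P) := h2
  have hs_ub : s ≤ m₂ := by
    have h1 := hf.slope_mono_adjacent (mem_Ioi.2 hppos)
      (mem_Ioi.2 (by linarith : (0:ℝ) < x₀+1)) hpq (by linarith : Q < x₀+1)
    have h2 := hf.slope_mono_adjacent (mem_Ioi.2 (by linarith : (0:ℝ) < Q))
      (mem_Ioi.2 (by linarith : (0:ℝ) < x₀+2)) (by linarith : Q < x₀+1)
      (by linarith : (x₀+1) < x₀+2)
    rw [hsdef, lslope, hm₂def]
    calc (f Q - f P) / (Q - P) ≤ (f (x₀+1) - f Q) / ((x₀+1) - Q) := h1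
    _ ≤ (f (x₀+2) - f (x₀+1)) / ((x₀+2) - (x₀+1)) := h2
  -- f values at P, Q
  have hfP : |f P - f x₀| < ε₁ := hnear P le_rfl hpq.le
  have hfQ : |f Q - f x₀| < ε₁ := hnear Q hpq.le le_rfl
  rw [abs_lt] at hfP hfQ
  -- corr lower bound
  have hsQ : f P + s * (Q - P) = f Q := by
    rw [hsdef, lslope, div_mul_cancel₀ _ (sub_ne_zero.2 hpq.ne')]; ring
  have hcorr : -(2*ε₁) ≤ lcorr f P Q := by
    apply lcorr_ge hpq.le
    intro y hy
    have hfy : |f y - f x₀| < ε₁ := hnear y hy.1 hy.2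
    rw [abs_lt] at hfy
    have hline : f P + s * (y - P) ≤ max (f P) (f Q) := by
      rcases le_or_gt 0 s with hs0 | hs0
      · have : s * (y - P) ≤ s * (Q - P) := by nlinarith [hy.2]
        calc f P + s * (y - P) ≤ f P + s * (Q - P) := by linarith
        _ = f Q := hsQ
        _ ≤ max (f P) (f Q) := le_max_right _ _
      · have : s * (y - P) ≤ 0 := by nlinarith [hy.1]
        calc f P + s * (y - P) ≤ f P := by linarith
        _ ≤ max (f P) (f Q) := le_max_left _ _
    have hmax : max (f P) (f Q) ≤ f x₀ + ε₁ := max_le (by linarith) (by linarith)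
    rw [← hsdef]
    have : f x₀ - ε₁ ≤ f y := by linarith
    linarith [hline, hmax, this]
  -- the slope term
  have hterm : -ε₁ ≤ s * (x₀ - P) := by
    have h0 : 0 ≤ x₀ - P := by linarith
    have h1 : x₀ - P ≤ δ := by linarith
    rcases le_or_gt 0 s with hs0 | hs0
    · nlinarith
    · have : s * (x₀ - P) ≥ s * δ := by nlinarith
      have h2 : m₁ * δ ≥ -|m₁| * δ := by nlinarith [neg_abs_le m₁, hδpos.le]
      have h3 : -|m₁| * δ ≥ -ε₁ := by nlinarith [abs_nonneg m₂, hδpos.le]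
      nlinarith [mul_le_mul_of_nonneg_right hs_lb hδpos.le]
  have : f x₀ - ε₁ ≤ f P := by linarith
  have hfinal : f x₀ - ε ≤ (f x₀ - ε₁) + (-ε₁) + (-(2*ε₁)) := by
    rw [hε₁def]; linarith
  calc f x₀ - ε ≤ (f x₀ - ε₁) + (-ε₁) + (-(2*ε₁)) := hfinal
  _ ≤ f P + s * (x₀ - P) + lcorr f P Q := by linarith [hcorr, hterm, this]

lemma condexp_pos_of_pos {Ω : Type*} [m : MeasurableSpace Ω] (P : Measure Ω)
    [IsProbabilityMeasure P] (G : MeasurableSpace Ω) (hG : G ≤ m)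
    {Z : Ω → ℝ} (hZint : Integrable Z P) (hZpos : ∀ᵐ ω ∂P, 0 < Z ω) :
    ∀ᵐ ω ∂P, 0 < (P[Z|G]) ω := by
  set Z' := P[Z|G] with hZ'
  have hZ'meas : Measurable[G] Z' := stronglyMeasurable_condExp.measurable
  set s : Set Ω := {ω | Z' ω ≤ 0} with hs
  have hsG : MeasurableSet[G] s := measurableSet_le hZ'meas measurable_const
  have hsm : MeasurableSet[m] s := hG _ hsG
  have h1 : ∫ ω in s, Z' ω ∂P = ∫ ω in s, Z ω ∂P := setIntegral_condExp hG hZint hsG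
  have hmem : ∀ᵐ ω ∂P.restrict s, ω ∈ s := ae_restrict_mem hsm
  have h2 : ∫ ω in s, Z' ω ∂P ≤ 0 :=
    integral_nonpos_of_ae (hmem.mono fun ω hω => hω)
  have h3 : 0 ≤ ∫ ω in s, Z ω ∂P :=
    integral_nonneg_of_ae (ae_restrict_of_ae (hZpos.mono fun ω hω => hω.le))
  have h4 : ∫ ω in s, Z ω ∂P = 0 := le_antisymm (h1 ▸ h2) h3
  have h5 : Z =ᵐ[P.restrict s] 0 :=
    (integral_eq_zero_iff_of_nonneg_ae
      ((ae_restrict_of_ae (hZpos.mono fun ω hω => hω.le)))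
      (hZint.restrict)).1 h4
  have h6 : ∀ᵐ ω ∂P.restrict s, (0:ℝ) < Z ω := ae_restrict_of_ae hZpos
  have h7 : ∀ᵐ _ω ∂P.restrict s, False := by
    filter_upwards [h5, h6] with ω hω1 hω2
    simp only [Pi.zero_apply] at hω1
    exact absurd hω1 (ne_of_gt hω2)
  have h8 : P s = 0 := by
    have := h7
    rw [ae_iff] at this
    simpa [Measure.restrict_apply_univ] using this
  have h9 : ∀ᵐ ω ∂P, ω ∉ s := measure_eq_zero_iff_ae_notMem.1 h8
  filter_upwards [h9] with ω hω
  simpa [hs, not_le] using hω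

lemma condexp_convex_le {Ω : Type*} [m : MeasurableSpace Ω] (P : Measure Ω)
    [IsProbabilityMeasure P] {f : ℝ → ℝ} (hf : ConvexOn ℝ (Set.Ioi 0) f)
    {b : ℝ} (hb : ∀ y : ℝ, 0 < y → b ≤ f y)
    (G : MeasurableSpace Ω) (hG : G ≤ m)
    {Z : Ω → ℝ} (hZint : Integrable Z P)
    (hZpos : ∀ᵐ ω ∂P, 0 < Z ω)
    (hZ'pos : ∀ᵐ ω ∂P, 0 < (P[Z|G]) ω)
    (hfZ : Integrable (fun ω => f (Z ω)) P) :
    Integrable (fun ω => f ((P[Z|G]) ω)) P ∧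
      ∫ ω, f ((P[Z|G]) ω) ∂P ≤ ∫ ω, f (Z ω) ∂P := by
  set Z' := P[Z|G] with hZ'def
  set h := P[(fun ω => f (Z ω))|G] with hhdef
  -- countable family of affine minorants
  have key : ∀ i : {pq : ℚ × ℚ // 0 < ((pq.1 : ℝ)) ∧ ((pq.1 : ℝ)) < ((pq.2 : ℝ))},
      ∀ᵐ ω ∂P, lslope f i.1.1 i.1.2 * Z' ω +
        (f i.1.1 - lslope f i.1.1 i.1.2 * i.1.1 + lcorr f i.1.1 i.1.2) ≤ h ω := by
    rintro ⟨⟨p, q⟩, hp, hpq⟩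
    simp only
    set a := lslope f (p:ℝ) (q:ℝ) with hadef
    set c := f (p:ℝ) - a * (p:ℝ) + lcorr f (p:ℝ) (q:ℝ) with hcdef
    have hle : (fun ω => a * Z ω + c) ≤ᵐ[P] fun ω => f (Z ω) := by
      filter_upwards [hZpos] with ω hω
      have h1 := lline_le hf hp hpq hω
      calc a * Z ω + c = f (p:ℝ) + a * (Z ω - p) + lcorr f (p:ℝ) (q:ℝ) := by
            rw [hcdef]; ring
      _ ≤ f (Z ω) := h1
    have hint : Integrable (fun ω => a * Z ω + c) P :=
      (hZint.const_mul a).add (integrable_const c)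
    have hcm : P[(fun ω => a * Z ω + c)|G] ≤ᵐ[P] h := condExp_mono hint hfZ hle
    have heq : P[(fun ω => a * Z ω + c)|G] =ᵐ[P] fun ω => a * Z' ω + c := by
      have e1 : (fun ω => a * Z ω + c) = (a • Z + fun _ => c) := by
        funext ω; simp [smul_eq_mul]
      rw [e1]
      have h1 := condExp_add (μ := P) (m := G) (hZint.smul a) (integrable_const c)
      refine h1.trans ?_
      have h2 := condExp_smul (μ := P) (m := G) a Z
      have h3 : P[(fun _ : Ω => c)|G] = fun _ => c := condExp_const hG c
      rw [h3]
      filter_upwards [h2] with ω hω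
      simp only [Pi.add_apply, Pi.smul_apply, smul_eq_mul] at hω ⊢
      rw [hω]
    filter_upwards [hcm, heq] with ω h1 h2
    rw [← h2]
    exact h1
  have key2 : ∀ᵐ ω ∂P, ∀ i : {pq : ℚ × ℚ // 0 < ((pq.1 : ℝ)) ∧ ((pq.1 : ℝ)) < ((pq.2 : ℝ))},
      lslope f i.1.1 i.1.2 * Z' ω +
        (f i.1.1 - lslope f i.1.1 i.1.2 * i.1.1 + lcorr f i.1.1 i.1.2) ≤ h ω :=
    ae_all_iff.2 key
  have main_ae : ∀ᵐ ω ∂P, f (Z' ω) ≤ h ω := by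
    filter_upwards [key2, hZ'pos] with ω hall hpos
    by_contra hlt
    push_neg at hlt
    have hε : 0 < f (Z' ω) - h ω := by linarith
    obtain ⟨p, q, hp, hpq, happrox⟩ := lline_approx hf hpos (half_pos hε)
    have h1 := hall ⟨(p, q), hp, hpq⟩
    simp only at h1
    have h2 : lslope f (p:ℝ) (q:ℝ) * Z' ω +
        (f (p:ℝ) - lslope f (p:ℝ) (q:ℝ) * (p:ℝ) + lcorr f (p:ℝ) (q:ℝ)) =
        f (p:ℝ) + lslope f (p:ℝ) (q:ℝ) * (Z' ω - (p:ℝ)) + lcorr f (p:ℝ) (q:ℝ) := by ring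
    rw [h2] at h1
    linarith
  -- measurability of f ∘ Z'
  have hZ'meas : Measurable[m] Z' := (stronglyMeasurable_condExp.mono hG).measurable
  set W : Ω → ℝ := fun ω => if 0 < Z' ω then Z' ω else 1 with hWdef
  have hW : Measurable[m] W :=
    Measurable.ite (measurableSet_lt measurable_const hZ'meas) hZ'meas measurable_const
  have hWpos : ∀ ω, W ω ∈ Ioi (0:ℝ) := by
    intro ω
    by_cases hc : 0 < Z' ω <;> simp [hWdef, hc]
  have hg : Continuous ((Ioi (0:ℝ)).restrict f) :=
    continuousOn_iff_continuous_restrict.1 (hf.continuousOn isOpen_Ioi)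
  have hF : Measurable[m] (fun ω => (Ioi (0:ℝ)).restrict f ⟨W ω, hWpos ω⟩) :=
    hg.measurable.comp (hW.subtype_mk)
  have haesm : AEStronglyMeasurable[m] (fun ω => f (Z' ω)) P := by
    refine hF.aestronglyMeasurable.congr ?_
    filter_upwards [hZ'pos] with ω hω
    simp only [Set.restrict_apply, hWdef, if_pos hω]
    rfl
  -- integrability
  have hbound_int : Integrable (fun ω => |h ω| + |b|) P :=
    (integrable_condExp.abs).add (integrable_const _)
  have hfZ'int : Integrable (fun ω => f (Z' ω)) P := by
    refine Integrable.mono' hbound_int haesm ?_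
    filter_upwards [main_ae, hZ'pos] with ω h1 h2
    rw [Real.norm_eq_abs, abs_le]
    constructor
    · have := hb _ h2
      have := neg_abs_le b
      have := abs_nonneg (h ω)
      linarith
    · have := le_abs_self (h ω)
      have := abs_nonneg b
      linarith
  refine ⟨hfZ'int, ?_⟩
  calc ∫ ω, f (Z' ω) ∂P ≤ ∫ ω, h ω ∂P :=
        integral_mono_ae hfZ'int integrable_condExp main_ae
  _ = ∫ ω, f (Z ω) ∂P := integral_condExp hG

/-- Conditioning inequality for the dual functional
    `K(λ, Z) = λ(E_P[X̄ Z] + A) + Σₙ E_P[vₙ(λ Z)]` : replacing the density `Z` by its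
    conditional expectation `Z' = E_P[Z | 𝒢]` (with `X̄ = Σₙ Xⁿ` being `𝒢`-measurable)
    does not increase the value (key step of Proposition 5.1). -/
theorem conditioning_decreases_dual_functional
    {Ω : Type*} (G : MeasurableSpace Ω) [m : MeasurableSpace Ω] (P : Measure Ω) [IsProbabilityMeasure P]
    (N : ℕ) (hN : 1 ≤ N)
    (v : Fin N → ℝ → ℝ)
    (hv_conv : ∀ n, ConvexOn ℝ (Set.Ioi 0) (v n))
    (hv_bdd : ∀ n, ∃ b : ℝ, ∀ y : ℝ, 0 < y → b ≤ v n y)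
    (lam A : ℝ) (hlam : 0 < lam)
    (hG : G ≤ m)
    (Z : Ω → ℝ) (hZmeas : Measurable Z) (hZint : Integrable Z P)
    (hZpos : ∀ᵐ ω ∂P, 0 < Z ω) (hZone : ∫ ω, Z ω ∂P = 1)
    (X : Fin N → Ω → ℝ)
    (hXG : Measurable[G] (fun ω => ∑ n, X n ω))
    (hXZ : Integrable (fun ω => (∑ n, X n ω) * Z ω) P)
    (hvZ : ∀ n, Integrable (fun ω => v n (lam * Z ω)) P) :
    (∀ᵐ ω ∂P, 0 < (P[Z|G]) ω) ∧
    Integrable (fun ω => (∑ n, X n ω) * (P[Z|G]) ω) P ∧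
    (∀ n, Integrable (fun ω => v n (lam * (P[Z|G]) ω)) P) ∧
    lam * ((∫ ω, (∑ n, X n ω) * (P[Z|G]) ω ∂P) + A)
        + ∑ n, ∫ ω, v n (lam * (P[Z|G]) ω) ∂P ≤
      lam * ((∫ ω, (∑ n, X n ω) * Z ω ∂P) + A)
        + ∑ n, ∫ ω, v n (lam * Z ω) ∂P := by
  
  have hZ'pos : ∀ᵐ ω ∂P, 0 < (P[Z|G]) ω := condexp_pos_of_pos (m := m) P G hG hZint hZpos
  -- pull-out property for the X̄ term
  set Xb : Ω → ℝ := fun ω => ∑ n, X n ω with hXbdef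
  have hXbG : StronglyMeasurable[G] Xb := hXG.stronglyMeasurable
  have hmul : P[Xb * Z|G] =ᵐ[P] Xb * P[Z|G] :=
    condExp_mul_of_stronglyMeasurable_left hXbG hXZ hZint
  have hXZ'int : Integrable (fun ω => Xb ω * (P[Z|G]) ω) P :=
    (integrable_condExp.congr hmul)
  have hXint_eq : ∫ ω, Xb ω * (P[Z|G]) ω ∂P = ∫ ω, Xb ω * Z ω ∂P := by
    calc ∫ ω, Xb ω * (P[Z|G]) ω ∂P = ∫ ω, (P[Xb * Z|G]) ω ∂P :=
          integral_congr_ae (Filter.EventuallyEq.symm hmul)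
    _ = ∫ ω, Xb ω * Z ω ∂P := integral_condExp hG
  -- Jensen for each v n
  have hconv : ∀ n, ConvexOn ℝ (Set.Ioi 0) (fun x => v n (lam * x)) := by
    intro n
    refine ⟨convex_Ioi 0, ?_⟩
    intro x hx y hy a b ha hb hab
    have h := (hv_conv n).2 (mem_Ioi.2 (mul_pos hlam hx)) (mem_Ioi.2 (mul_pos hlam hy))
      ha hb hab
    simp only [smul_eq_mul] at h ⊢
    calc v n (lam * (a * x + b * y)) = v n (a * (lam * x) + b * (lam * y)) := by
          rw [show lam * (a * x + b * y) = a * (lam * x) + b * (lam * y) from by ring]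
    _ ≤ a * v n (lam * x) + b * v n (lam * y) := h
  have hjensen : ∀ n, Integrable (fun ω => v n (lam * (P[Z|G]) ω)) P ∧
      ∫ ω, v n (lam * (P[Z|G]) ω) ∂P ≤ ∫ ω, v n (lam * Z ω) ∂P := by
    intro n
    obtain ⟨b, hbb⟩ := hv_bdd n
    exact condexp_convex_le (m := m) P (hconv n)
      (fun y hy => hbb _ (mul_pos hlam hy)) G hG hZint hZpos hZ'pos (hvZ n)
  refine ⟨hZ'pos, hXZ'int, fun n => (hjensen n).1, ?_⟩
  have hsum : ∑ n, ∫ ω, v n (lam * (P[Z|G]) ω) ∂P ≤ ∑ n, ∫ ω, v n (lam * Z ω) ∂P :=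
    Finset.sum_le_sum (fun n _ => (hjensen n).2)
  have : ∫ ω, Xb ω * (P[Z|G]) ω ∂P = ∫ ω, Xb ω * Z ω ∂P := hXint_eq
  simp only [hXbdef] at this
  rw [this]
  linarith [hsum]
end

section
/- For every vector Y = (Y^1,…,Y^N) of random variables such that, for each n, Y^n ∈ L^1(Q̂^{m(n)}) and u_n(X^n+Y^n) is P-integrable, and such that Σ_{n=1}^N E_{Q̂^{m(n)}}[Y^n] ≤ A, one has Σ_{n=1}^N E_P[u_n(X^n+Y^n)] ≤ Σ_{n=1}^N E_P[u_n(X^n+Ŷ^n)]. -/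
open MeasureTheory

lemma integrable_exp_combo {Ω : Type*} [MeasurableSpace Ω] (P : Measure Ω)
    [IsProbabilityMeasure P] {N : ℕ} (hN : 1 ≤ N) (X : Fin N → Ω → ℝ)
    (hXmeas : ∀ n, Measurable (X n))
    (hXexp : ∀ n, ∀ a : ℝ, 0 < a → Integrable (fun ω => Real.exp (a * |X n ω|)) P)
    (c : Fin N → ℝ) (hc : ∀ n, 0 ≤ c n) :
    Integrable (fun ω => Real.exp (∑ n, c n * |X n ω|)) P := by
  have hNpos : (0:ℝ) < N := by exact_mod_cast hN
  have hint : ∀ n : Fin N, Integrable (fun ω => Real.exp ((N:ℝ) * c n * |X n ω|)) P := by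
    intro n
    rcases eq_or_lt_of_le (hc n) with hc0 | hc0
    · simp [← hc0]
    · exact hXexp n _ (by positivity)
  have hbound : ∀ ω, Real.exp (∑ n, c n * |X n ω|)
      ≤ ∑ n, (N:ℝ)⁻¹ * Real.exp ((N:ℝ) * c n * |X n ω|) := by
    intro ω
    have h := Real.geom_mean_le_arith_mean_weighted Finset.univ
      (fun _ : Fin N => (N:ℝ)⁻¹) (fun n => Real.exp ((N:ℝ) * c n * |X n ω|))
      (fun i _ => by positivity)
      (by simp [Finset.sum_const, Finset.card_univ, mul_comm, mul_inv_cancel₀ hNpos.ne'])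
      (fun i _ => (Real.exp_pos _).le)
    calc Real.exp (∑ n, c n * |X n ω|)
        = ∏ n, Real.exp ((N:ℝ) * c n * |X n ω|) ^ ((N:ℝ)⁻¹) := by
          rw [Real.exp_sum]
          refine Finset.prod_congr rfl (fun n _ => ?_)
          rw [← Real.exp_mul]
          congr 1
          field_simp
      _ ≤ _ := h
  refine Integrable.mono' (g := fun ω => ∑ n, (N:ℝ)⁻¹ * Real.exp ((N:ℝ) * c n * |X n ω|))
    (integrable_finset_sum Finset.univ (fun n _ => (hint n).const_mul _)) ?_ ?_
  · exact (Real.measurable_exp.comp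
      (Finset.measurable_sum _ (fun n _ => ((hXmeas n).abs.const_mul _)))).aestronglyMeasurable
  · exact Filter.Eventually.of_forall fun ω => by
      rw [Real.norm_eq_abs, abs_of_pos (Real.exp_pos _)]; exact hbound ω

lemma integrable_exp_combo_mul {Ω : Type*} [MeasurableSpace Ω] (P : Measure Ω)
    [IsProbabilityMeasure P] {N : ℕ} (hN : 1 ≤ N) (X : Fin N → Ω → ℝ)
    (hXmeas : ∀ n, Measurable (X n))
    (hXexp : ∀ n, ∀ a : ℝ, 0 < a → Integrable (fun ω => Real.exp (a * |X n ω|)) P)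
    (c : Fin N → ℝ) (hc : ∀ n, 0 ≤ c n) (k : Fin N) :
    Integrable (fun ω => Real.exp (∑ n, c n * |X n ω|) * X k ω) P := by
  have hbig := integrable_exp_combo P hN X hXmeas hXexp
    (fun n => c n + if n = k then 1 else 0) (fun n => add_nonneg (hc n) (by split <;> norm_num))
  refine Integrable.mono' hbig ?_ ?_
  · exact ((Real.measurable_exp.comp
      (Finset.measurable_sum _ (fun n _ => ((hXmeas n).abs.const_mul _)))).mul
      (hXmeas k)).aestronglyMeasurable
  · refine Filter.Eventually.of_forall fun ω => ?_
    rw [Real.norm_eq_abs, abs_mul, abs_of_pos (Real.exp_pos _)]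
    have : ∑ n, (c n + if n = k then 1 else 0) * |X n ω|
        = (∑ n, c n * |X n ω|) + |X k ω| := by
      simp [add_mul, Finset.sum_add_distrib, Finset.sum_ite_eq', ite_mul]
    rw [this, Real.exp_add]
    have h1 : |X k ω| ≤ Real.exp |X k ω| :=
      (Real.add_one_le_exp _).trans' (by linarith [abs_nonneg (X k ω)])
    exact mul_le_mul_of_nonneg_left h1 (Real.exp_pos _).le

/-- `Ŷ` attains the fixed-measure systemic optimum `π^{Q̂}(A)` in the exponential case
    (Theorem 5.5): any allocation `Y` with `Yⁿ ∈ L¹(Q̂^{m(n)})`, `uₙ(Xⁿ+Yⁿ)` integrable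
    and `Σₙ E_{Q̂^{m(n)}}[Yⁿ] ≤ A` has aggregate expected utility at most that of `Ŷ`. -/
theorem exponential_Yhat_optimal_fixed_measure
    {Ω : Type*} [MeasurableSpace Ω] (P : Measure Ω) [IsProbabilityMeasure P]
    (N h : ℕ) (hN : 1 ≤ N) (A : ℝ)
    (α : Fin N → ℝ) (hα : ∀ n, 0 < α n)
    -- exponential utilities
    (u : Fin N → ℝ → ℝ) (hu : ∀ n x, u n x = 1 - Real.exp (-(α n * x)))
    -- the partition `(I_m)` of `{1,…,N}`: agent `n` belongs to group `p n`
    (p : Fin N → Fin h) (hp : Function.Surjective p)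
    (X : Fin N → Ω → ℝ) (hXmeas : ∀ n, Measurable (X n))
    (βm : Fin h → ℝ)
    (hβm : ∀ m, βm m = ∑ n ∈ Finset.univ.filter (fun n => p n = m), (α n)⁻¹)
    (β : ℝ) (hβ : β = ∑ n, (α n)⁻¹)
    (Xbar : Fin h → Ω → ℝ)
    (hXbar : ∀ m ω, Xbar m ω = ∑ n ∈ Finset.univ.filter (fun n => p n = m), X n ω)
    (ER : ℝ) (hER : ER = ∑ n, ((α n)⁻¹ / β) * Real.log (α n))
    -- `E_m := E_P[exp(−X̄_m/β_m)] < ∞`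
    (hEint : ∀ m, Integrable (fun ω => Real.exp (-(Xbar m ω / βm m))) P)
    (Em : Fin h → ℝ) (hEm : ∀ m, Em m = ∫ ω, Real.exp (-(Xbar m ω / βm m)) ∂P)
    (d : Fin h → ℝ)
    (hd : ∀ m, d m = (∑ j, (βm j / β) * Real.log (Em j)) - Real.log (Em m))
    -- the candidate equilibrium pricing measures
    (Qhat : Fin h → Measure Ω)
    (hQhat : ∀ m, Qhat m
      = P.withDensity (fun ω => ENNReal.ofReal (Real.exp (-(Xbar m ω / βm m)) / Em m)))
    -- the candidate optimal allocation
    (Yhat : Fin N → Ω → ℝ)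
    (hYhat : ∀ k ω, Yhat k ω
      = -X k ω + (α k)⁻¹ * (Xbar (p k) ω / βm (p k) - d (p k))
        + (α k)⁻¹ * (A / β + Real.log (α k) - ER))
    -- all exponential moments of the `Xⁿ` are finite
    (hXexp : ∀ n, ∀ a : ℝ, 0 < a → Integrable (fun ω => Real.exp (a * |X n ω|)) P) :
    ∀ Y : Fin N → Ω → ℝ,
      (∀ n, Integrable (Y n) (Qhat (p n))) →
      (∀ n, Integrable (fun ω => u n (X n ω + Y n ω)) P) →
      (∑ n, ∫ ω, Y n ω ∂(Qhat (p n))) ≤ A →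
      ∑ n, ∫ ω, u n (X n ω + Y n ω) ∂P ≤ ∑ n, ∫ ω, u n (X n ω + Yhat n ω) ∂P := by
  intro Y hYL1 hUint hYA
  -- basic positivity facts
  have hαne : ∀ n, (α n) ≠ 0 := fun n => (hα n).ne'
  have hβpos : 0 < β := by
    rw [hβ]
    exact Finset.sum_pos (fun n _ => inv_pos.2 (hα n))
      ⟨⟨0, hN⟩, Finset.mem_univ _⟩
  have hβmnn : ∀ m, 0 ≤ βm m := fun m => by
    rw [hβm]; exact Finset.sum_nonneg fun n _ => (inv_pos.2 (hα n)).le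
  have hfibpos : ∀ m, (Finset.univ.filter fun n => p n = m).Nonempty → 0 < βm m := by
    intro m hne
    rw [hβm]
    exact Finset.sum_pos (fun n _ => inv_pos.2 (hα n)) hne
  have hXbarmeas : ∀ m, Measurable (Xbar m) := by
    intro m
    have e : Xbar m = fun ω => ∑ n ∈ Finset.univ.filter (fun n => p n = m), X n ω :=
      funext (hXbar m)
    rw [e]; exact Finset.measurable_sum _ fun n _ => hXmeas n
  have hEmpos : ∀ m, 0 < Em m := fun m => by
    rw [hEm]; exact integral_exp_pos (hEint m)
  -- the normalized densities
  set f : Fin h → Ω → ℝ := fun m ω => Real.exp (-(Xbar m ω / βm m)) / Em m with hf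
  have hfmeas : ∀ m, Measurable (f m) := fun m =>
    ((Real.measurable_exp.comp ((hXbarmeas m).div_const _).neg).div_const _)
  have hfnonneg : ∀ m ω, 0 ≤ f m ω := fun m ω =>
    div_nonneg (Real.exp_pos _).le (hEmpos m).le
  have hfint : ∀ m, Integrable (f m) P := fun m => (hEint m).div_const _
  have hf1 : ∀ m, ∫ ω, f m ω ∂P = 1 := by
    intro m
    simp only [hf]
    rw [integral_div, ← hEm, div_self (hEmpos m).ne']
  -- integrability transfer between `Qhat m` and `P`
  have hQint : ∀ m (W : Ω → ℝ), Integrable W (Qhat m) ↔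
      Integrable (fun ω => W ω * f m ω) P := by
    intro m W
    rw [hQhat m, integrable_withDensity_iff
      ((hfmeas m).ennreal_ofReal)
      (Filter.Eventually.of_forall fun ω => ENNReal.ofReal_lt_top)]
    have e : (fun x => W x * (ENNReal.ofReal (f m x)).toReal) = fun ω => W ω * f m ω :=
      funext fun ω => by rw [ENNReal.toReal_ofReal (hfnonneg m ω)]
    rw [e]
  have hQeq : ∀ m (W : Ω → ℝ), ∫ ω, W ω ∂(Qhat m) = ∫ ω, f m ω * W ω ∂P := by
    intro m W
    rw [hQhat m]
    have e : (fun ω => ENNReal.ofReal (f m ω))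
        = fun ω => ((Real.toNNReal (f m ω) : NNReal) : ENNReal) := rfl
    rw [e, integral_withDensity_eq_integral_smul ((hfmeas m).real_toNNReal)]
    congr 1
    funext ω
    rw [NNReal.smul_def, smul_eq_mul, Real.coe_toNNReal _ (hfnonneg m ω)]
  -- integrability of `f m * X k`
  have hfXint : ∀ m k, Integrable (fun ω => f m ω * X k ω) P := by
    intro m k
    have hcnn : ∀ n, 0 ≤ (if p n = m then (βm m)⁻¹ else 0 : ℝ) := by
      intro n; split
      · exact inv_nonneg.2 (hβmnn m)
      · exact le_rfl
    have hle : ∀ ω, Real.exp (-(Xbar m ω / βm m))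
        ≤ Real.exp (∑ n, (if p n = m then (βm m)⁻¹ else 0) * |X n ω|) := by
      intro ω
      apply Real.exp_le_exp.2
      have h1 : -Xbar m ω ≤ ∑ n ∈ Finset.univ.filter (fun n => p n = m), |X n ω| := by
        rw [hXbar]
        exact (neg_le_abs _).trans (Finset.abs_sum_le_sum_abs _ _)
      have h2 : -(Xbar m ω / βm m) = (-Xbar m ω) * (βm m)⁻¹ := by ring
      rw [h2]
      calc (-Xbar m ω) * (βm m)⁻¹
          ≤ (∑ n ∈ Finset.univ.filter (fun n => p n = m), |X n ω|) * (βm m)⁻¹ :=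
            mul_le_mul_of_nonneg_right h1 (inv_nonneg.2 (hβmnn m))
        _ = ∑ n, (if p n = m then (βm m)⁻¹ else 0) * |X n ω| := by
            rw [Finset.sum_mul, Finset.sum_filter]
            exact Finset.sum_congr rfl fun n _ => by split <;> ring
    have hb := (integrable_exp_combo_mul P hN X hXmeas hXexp _ hcnn k).abs
    have hgX : Integrable (fun ω => Real.exp (-(Xbar m ω / βm m)) * X k ω) P := by
      refine Integrable.mono' hb ?_ ?_
      · exact ((Real.measurable_exp.comp ((hXbarmeas m).div_const _).neg).mul
          (hXmeas k)).aestronglyMeasurable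
      · refine Filter.Eventually.of_forall fun ω => ?_
        rw [Real.norm_eq_abs, abs_mul, abs_of_pos (Real.exp_pos _), abs_mul,
          abs_of_pos (Real.exp_pos _)]
        exact mul_le_mul_of_nonneg_right (hle ω) (abs_nonneg _)
    have := hgX.div_const (Em m)
    simpa [hf, div_mul_eq_mul_div] using this
  -- the constants
  set S : ℝ := ∑ j, (βm j / β) * Real.log (Em j) with hS
  set C : ℝ := Real.exp (S + ER - A / β) with hC
  have hCpos : 0 < C := Real.exp_pos _
  -- the key pointwise identity for `Ŷ`
  have Hid : ∀ n ω, Real.exp (-(α n * (X n ω + Yhat n ω))) = (C / α n) * f (p n) ω := by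
    intro n ω
    have e : X n ω + Yhat n ω = (α n)⁻¹ * ((Xbar (p n) ω / βm (p n) - d (p n))
        + (A / β + Real.log (α n) - ER)) := by rw [hYhat]; ring
    have h2 : α n * (X n ω + Yhat n ω)
        = (Xbar (p n) ω / βm (p n) - d (p n)) + (A / β + Real.log (α n) - ER) := by
      rw [e, ← mul_assoc, mul_inv_cancel₀ (hαne n), one_mul]
    have h3 : -(α n * (X n ω + Yhat n ω))
        = (-(Xbar (p n) ω / βm (p n))) + ((S + ER - A / β)
          + (-(Real.log (Em (p n))) + (-(Real.log (α n))))) := by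
      rw [h2, hd]; ring
    have h4 : Real.exp (-Real.log (Em (p n))) = (Em (p n))⁻¹ := by
      rw [Real.exp_neg, Real.exp_log (hEmpos (p n))]
    have h5 : Real.exp (-Real.log (α n)) = (α n)⁻¹ := by
      rw [Real.exp_neg, Real.exp_log (hα n)]
    rw [h3, Real.exp_add, Real.exp_add, Real.exp_add, h4, h5, ← hC]
    simp only [hf]
    rw [div_eq_mul_inv C, div_eq_mul_inv _ (Em (p n))]
    ring
  -- decomposition of `f * Ŷ`
  have hfYhat_eq : ∀ n, (fun ω => f (p n) ω * Yhat n ω)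
      = fun ω => (-(f (p n) ω * X n ω)
          + ((α n)⁻¹ * (βm (p n))⁻¹)
            * ∑ k ∈ Finset.univ.filter (fun k => p k = p n), f (p n) ω * X k ω)
        + ((α n)⁻¹ * (A / β + Real.log (α n) - ER) - (α n)⁻¹ * d (p n)) * f (p n) ω := by
    intro n; funext ω
    rw [hYhat, hXbar, ← Finset.mul_sum]
    ring
  have hfYhatint : ∀ n, Integrable (fun ω => f (p n) ω * Yhat n ω) P := by
    intro n
    rw [hfYhat_eq n]
    exact (((hfXint _ _).neg.add
      ((integrable_finset_sum _ (fun k _ => hfXint _ k)).const_mul _)).add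
      ((hfint _).const_mul _))
  have hfY : ∀ n, Integrable (fun ω => f (p n) ω * Y n ω) P := by
    intro n
    have := (hQint (p n) (Y n)).1 (hYL1 n)
    simpa [mul_comm] using this
  have hUhat : ∀ n, Integrable (fun ω => u n (X n ω + Yhat n ω)) P := by
    intro n
    have e : (fun ω => u n (X n ω + Yhat n ω)) = fun ω => 1 - (C / α n) * f (p n) ω :=
      funext fun ω => by rw [hu, Hid n ω]
    rw [e]
    exact (integrable_const 1).sub ((hfint _).const_mul _)
  have hVint : ∀ n, Integrable (fun ω => f (p n) ω * (Y n ω - Yhat n ω)) P := by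
    intro n
    have := (hfY n).sub (hfYhatint n)
    simp only [mul_sub]; exact this
  -- the pointwise inequality
  have hpt : ∀ n ω, u n (X n ω + Y n ω)
      ≤ u n (X n ω + Yhat n ω) + C * (f (p n) ω * (Y n ω - Yhat n ω)) := by
    intro n ω
    rw [hu, hu]
    set a := α n * (X n ω + Y n ω) with ha
    set b := α n * (X n ω + Yhat n ω) with hb
    have key : Real.exp (-b) - Real.exp (-b) * (a - b) ≤ Real.exp (-a) := by
      have h1 := Real.add_one_le_exp (b - a)
      have h2 : Real.exp (-b) * Real.exp (b - a) = Real.exp (-a) := by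
        rw [← Real.exp_add]; ring_nf
      calc Real.exp (-b) - Real.exp (-b) * (a - b)
          = Real.exp (-b) * (1 + (b - a)) := by ring
        _ ≤ Real.exp (-b) * Real.exp (b - a) :=
            mul_le_mul_of_nonneg_left (by linarith) (Real.exp_pos _).le
        _ = Real.exp (-a) := h2
    have h3 : C * (f (p n) ω * (Y n ω - Yhat n ω)) = Real.exp (-b) * (a - b) := by
      rw [hb, Hid n ω, ha]
      field_simp [hαne n]
      ring
    linarith [key, h3]
  -- per-agent integral inequality
  have hIneq : ∀ n, ∫ ω, u n (X n ω + Y n ω) ∂P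
      ≤ ∫ ω, u n (X n ω + Yhat n ω) ∂P
        + C * ∫ ω, f (p n) ω * (Y n ω - Yhat n ω) ∂P := by
    intro n
    have h1 := integral_mono (hUint n) ((hUhat n).add ((hVint n).const_mul C)) (hpt n)
    have h2 : ∫ ω, (u n (X n ω + Yhat n ω) + C * (f (p n) ω * (Y n ω - Yhat n ω))) ∂P
        = ∫ ω, u n (X n ω + Yhat n ω) ∂P
          + C * ∫ ω, f (p n) ω * (Y n ω - Yhat n ω) ∂P := by
      rw [integral_add (hUhat n) ((hVint n).const_mul C), integral_const_mul]
    rw [← h2]; exact h1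
  -- integral of `f * Ŷ`
  have hint_fYhat : ∀ n, ∫ ω, f (p n) ω * Yhat n ω ∂P
      = (-(∫ ω, f (p n) ω * X n ω ∂P)
        + ((α n)⁻¹ * (βm (p n))⁻¹)
          * ∑ k ∈ Finset.univ.filter (fun k => p k = p n), ∫ ω, f (p n) ω * X k ω ∂P)
        + ((α n)⁻¹ * (A / β + Real.log (α n) - ER) - (α n)⁻¹ * d (p n)) := by
    intro n
    have hIneg : Integrable (fun ω => -(f (p n) ω * X n ω)) P := (hfXint (p n) n).neg
    have hIsum : Integrable (fun ω => ((α n)⁻¹ * (βm (p n))⁻¹)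
        * ∑ k ∈ Finset.univ.filter (fun k => p k = p n), f (p n) ω * X k ω) P :=
      (integrable_finset_sum _ (fun k _ => hfXint (p n) k)).const_mul _
    have hIc : Integrable (fun ω => ((α n)⁻¹ * (A / β + Real.log (α n) - ER)
        - (α n)⁻¹ * d (p n)) * f (p n) ω) P := (hfint (p n)).const_mul _
    have hI12 : Integrable (fun ω => -(f (p n) ω * X n ω) + ((α n)⁻¹ * (βm (p n))⁻¹)
        * ∑ k ∈ Finset.univ.filter (fun k => p k = p n), f (p n) ω * X k ω) P :=
      hIneg.add hIsum
    rw [hfYhat_eq n, integral_add hI12 hIc, integral_add hIneg hIsum,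
      integral_neg, integral_const_mul, integral_const_mul,
      integral_finset_sum _ (fun k _ => hfXint (p n) k), hf1, mul_one]
  -- arithmetic identities
  have hβsum : ∑ m : Fin h, βm m = β := by
    rw [hβ, show (∑ m, βm m)
        = ∑ m, ∑ n ∈ Finset.univ.filter (fun n => p n = m), (α n)⁻¹ from
      Finset.sum_congr rfl fun m _ => hβm m]
    exact Finset.sum_fiberwise _ _ _
  have hcancel : ∀ x L : ℝ, β * (x / β * L) = x * L := by
    intro x L
    rw [← mul_assoc, mul_div_assoc', mul_comm β x, mul_div_cancel_right₀ _ hβpos.ne']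
  have hβS : β * S = ∑ j, βm j * Real.log (Em j) := by
    rw [hS, Finset.mul_sum]
    exact Finset.sum_congr rfl fun j _ => hcancel _ _
  have hβER : β * ER = ∑ n, (α n)⁻¹ * Real.log (α n) := by
    rw [hER, Finset.mul_sum]
    exact Finset.sum_congr rfl fun n _ => hcancel _ _
  have hdsum : ∑ n, (α n)⁻¹ * d (p n) = 0 := by
    rw [← Finset.sum_fiberwise Finset.univ p (fun n => (α n)⁻¹ * d (p n))]
    have e2 : ∀ m : Fin h, ∑ n ∈ Finset.univ.filter (fun n => p n = m),
        (α n)⁻¹ * d (p n) = βm m * d m := by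
      intro m
      rw [hβm, Finset.sum_mul]
      refine Finset.sum_congr rfl fun n hn => ?_
      rw [(Finset.mem_filter.1 hn).2]
    rw [Finset.sum_congr rfl fun m _ => e2 m]
    have e3 : ∀ m : Fin h, βm m * d m = βm m * S - βm m * Real.log (Em m) := fun m => by
      rw [hd]; ring
    rw [Finset.sum_congr rfl fun m _ => e3 m, Finset.sum_sub_distrib, ← Finset.sum_mul,
      hβsum, hβS]
    exact sub_self _
  -- the budget identity for `Ŷ`
  have KEY : ∑ n, ∫ ω, f (p n) ω * Yhat n ω ∂P = A := by
    rw [Finset.sum_congr rfl fun n _ => hint_fYhat n, Finset.sum_add_distrib]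
    have hzero : ∑ n, (-(∫ ω, f (p n) ω * X n ω ∂P)
        + ((α n)⁻¹ * (βm (p n))⁻¹)
          * ∑ k ∈ Finset.univ.filter (fun k => p k = p n), ∫ ω, f (p n) ω * X k ω ∂P) = 0 := by
      rw [← Finset.sum_fiberwise Finset.univ p (fun n => -(∫ ω, f (p n) ω * X n ω ∂P)
        + ((α n)⁻¹ * (βm (p n))⁻¹)
          * ∑ k ∈ Finset.univ.filter (fun k => p k = p n), ∫ ω, f (p n) ω * X k ω ∂P)]
      refine Finset.sum_eq_zero fun m _ => ?_
      have e2 : ∀ n ∈ Finset.univ.filter (fun n => p n = m),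
          -(∫ ω, f (p n) ω * X n ω ∂P)
            + ((α n)⁻¹ * (βm (p n))⁻¹)
              * ∑ k ∈ Finset.univ.filter (fun k => p k = p n), ∫ ω, f (p n) ω * X k ω ∂P
          = -(∫ ω, f m ω * X n ω ∂P)
            + (α n)⁻¹ * ((βm m)⁻¹
              * ∑ k ∈ Finset.univ.filter (fun k => p k = m), ∫ ω, f m ω * X k ω ∂P) := by
        intro n hn
        rw [(Finset.mem_filter.1 hn).2]
        ring
      rw [Finset.sum_congr rfl e2, Finset.sum_add_distrib, ← Finset.sum_mul, ← hβm]
      by_cases hfe : (Finset.univ.filter fun n => p n = m).Nonempty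
      · rw [← mul_assoc, mul_inv_cancel₀ (hfibpos m hfe).ne', one_mul,
          Finset.sum_neg_distrib]
        simp
      · rw [Finset.not_nonempty_iff_eq_empty.1 hfe]
        simp
    have hcsum : ∑ n, ((α n)⁻¹ * (A / β + Real.log (α n) - ER) - (α n)⁻¹ * d (p n)) = A := by
      have expand : ∀ n : Fin N, (α n)⁻¹ * (A / β + Real.log (α n) - ER) - (α n)⁻¹ * d (p n)
          = (A / β) * (α n)⁻¹ + (α n)⁻¹ * Real.log (α n) - ER * (α n)⁻¹
            - (α n)⁻¹ * d (p n) := fun n => by ring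
      rw [Finset.sum_congr rfl fun n _ => expand n, Finset.sum_sub_distrib,
        Finset.sum_sub_distrib, Finset.sum_add_distrib, ← Finset.mul_sum, ← Finset.mul_sum,
        ← hβ, ← hβER, hdsum, sub_zero]
      field_simp
      ring
    rw [hzero, hcsum, zero_add]
  -- conclusion
  have hVsum : ∑ n, ∫ ω, f (p n) ω * (Y n ω - Yhat n ω) ∂P ≤ 0 := by
    have e : ∀ n : Fin N, ∫ ω, f (p n) ω * (Y n ω - Yhat n ω) ∂P
        = ∫ ω, f (p n) ω * Y n ω ∂P - ∫ ω, f (p n) ω * Yhat n ω ∂P := by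
      intro n
      simp only [mul_sub]
      exact integral_sub (hfY n) (hfYhatint n)
    rw [Finset.sum_congr rfl fun n _ => e n, Finset.sum_sub_distrib, KEY]
    have hle : ∑ n, ∫ ω, f (p n) ω * Y n ω ∂P ≤ A := by
      calc ∑ n, ∫ ω, f (p n) ω * Y n ω ∂P
          = ∑ n, ∫ ω, Y n ω ∂(Qhat (p n)) :=
            Finset.sum_congr rfl fun n _ => (hQeq (p n) (Y n)).symm
        _ ≤ A := hYA
    linarith
  calc ∑ n, ∫ ω, u n (X n ω + Y n ω) ∂P
      ≤ ∑ n, (∫ ω, u n (X n ω + Yhat n ω) ∂P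
          + C * ∫ ω, f (p n) ω * (Y n ω - Yhat n ω) ∂P) :=
        Finset.sum_le_sum fun n _ => hIneq n
    _ = (∑ n, ∫ ω, u n (X n ω + Yhat n ω) ∂P)
        + C * ∑ n, ∫ ω, f (p n) ω * (Y n ω - Yhat n ω) ∂P := by
        rw [Finset.sum_add_distrib, Finset.mul_sum]
    _ ≤ ∑ n, ∫ ω, u n (X n ω + Yhat n ω) ∂P := by nlinarith [hVsum, hCpos]
end

section
/- For every vector Y = (Y^1,…,Y^N) of random variables such that for each m the sum Σ_{k∈I_m} Y^k is P-a.s. equal to a real constant, Σ_{n=1}^N Y^n ≤ A P-a.s., and, for each n, Y^n ∈ L^1(Q̂^{m(n)}) and u_n(X^n+Y^n) is P-integrable, one has Σ_{n=1}^N E_P[u_n(X^n+Y^n)] ≤ Σ_{n=1}^N E_P[u_n(X^n+Ŷ^n)]. -/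
open MeasureTheory Real Finset

/-!
Each `uₙ` is concave, so `uₙ(Xⁿ + Yⁿ) ≤ uₙ(Xⁿ + Ŷⁿ) + uₙ'(Xⁿ + Ŷⁿ) (Yⁿ - Ŷⁿ)` pointwise.
`Ŷ` is built so that the marginal utility `uₙ'(Xⁿ + Ŷⁿ)` is `λ · dQ̂^{m(n)}/dP` with one constant
`λ = exp(E_R[ln α] - A/β + Σⱼ (βⱼ/β) ln Eⱼ)` for all agents. Grouping the first-order term by
clusters, where both `Σ_{k∈I_m} Yᵏ = c_m` (a.s.) and `Σ_{k∈I_m} Ŷᵏ = ĉ_m` are constant, its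
expectation is `λ Σ_m (c_m - ĉ_m) = λ (Σ_m c_m - A) ≤ 0`.
-/

theorem one_sub_exp_neg_mul_le_tangent (a x y : ℝ) :
    1 - exp (-(a * x)) ≤ 1 - exp (-(a * y)) + a * exp (-(a * y)) * (x - y) := by
  have h : exp (-(a * y)) * (a * (y - x) + 1) ≤ exp (-(a * x)) :=
    calc exp (-(a * y)) * (a * (y - x) + 1) ≤ exp (-(a * y)) * exp (a * (y - x)) :=
          mul_le_mul_of_nonneg_left (add_one_le_exp _) (exp_pos _).le
      _ = exp (-(a * x)) := by rw [← exp_add]; ring_nf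
  linarith

section Clusters

variable {ι κ : Type*} [Fintype ι] [Fintype κ] [DecidableEq κ] (p : ι → κ)

theorem sum_comp_mul_eq_sum_mul_sum_fiber (f : κ → ℝ) (g : ι → ℝ) :
    ∑ n, f (p n) * g n = ∑ m, f m * ∑ k with p k = m, g k := by
  rw [← sum_fiberwise univ p]
  refine sum_congr rfl fun m _ => ?_
  rw [mul_sum]
  exact sum_congr rfl fun k hk => by rw [(mem_filter.1 hk).2]

variable {Ω : Type*} [MeasurableSpace Ω] {μ : Measure Ω} {Z : ι → Ω → ℝ} {e : κ → ℝ}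

theorem sum_le_of_ae_sum_fiber_eq [NeZero μ] {A : ℝ}
    (he : ∀ m, ∀ᵐ ω ∂μ, ∑ k with p k = m, Z k ω = e m) (hA : ∀ᵐ ω ∂μ, ∑ n, Z n ω ≤ A) :
    ∑ m, e m ≤ A := by
  obtain ⟨ω, hωe, hωA⟩ := ((ae_all_iff.2 he).and hA).exists
  rw [← sum_fiberwise univ p] at hωA
  simpa only [hωe] using hωA

theorem sum_comp_mul_ae_eq_of_ae_sum_fiber_eq (w : κ → Ω → ℝ)
    (he : ∀ m, ∀ᵐ ω ∂μ, ∑ k with p k = m, Z k ω = e m) :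
    (fun ω => ∑ n, w (p n) ω * Z n ω) =ᵐ[μ] fun ω => ∑ m, w m ω * e m := by
  filter_upwards [ae_all_iff.2 he] with ω hω
  simp only [sum_comp_mul_eq_sum_mul_sum_fiber p (w · ω), hω]

end Clusters

theorem sum_integral_one_sub_exp_le_of_marginal_eq {ι κ Ω : Type*} [Fintype ι] [Fintype κ]
    [DecidableEq κ] (p : ι → κ) [MeasurableSpace Ω] {μ : Measure Ω} [IsFiniteMeasure μ]
    {α : ι → ℝ} (hα : ∀ n, α n ≠ 0) {X Y Yhat : ι → Ω → ℝ} {w : κ → Ω → ℝ} {lam : ℝ}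
    {e : κ → ℝ} (hw : ∀ m, Integrable (w m) μ) (hw_one : ∀ m, ∫ ω, w m ω ∂μ = 1)
    (hlam : 0 ≤ lam) (hmarg : ∀ n ω, α n * exp (-(α n * (X n ω + Yhat n ω))) = lam * w (p n) ω)
    (hY : ∀ n, Integrable (fun ω => 1 - exp (-(α n * (X n ω + Y n ω)))) μ)
    (he : ∀ m, ∀ᵐ ω ∂μ, ∑ k with p k = m, (Y k ω - Yhat k ω) = e m) (he_nonpos : ∑ m, e m ≤ 0) :
    ∑ n, ∫ ω, 1 - exp (-(α n * (X n ω + Y n ω))) ∂μ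
      ≤ ∑ n, ∫ ω, 1 - exp (-(α n * (X n ω + Yhat n ω))) ∂μ := by
  have hYhat : ∀ n, Integrable (fun ω => 1 - exp (-(α n * (X n ω + Yhat n ω)))) μ := by
    intro n
    have hexp : (fun ω => exp (-(α n * (X n ω + Yhat n ω))))
        = fun ω => (α n)⁻¹ * (lam * w (p n) ω) := by
      funext ω; rw [← hmarg, inv_mul_cancel_left₀ (hα n)]
    exact (integrable_const 1).sub (hexp ▸ ((hw _).const_mul lam).const_mul _)
  have hgap := sum_comp_mul_ae_eq_of_ae_sum_fiber_eq p w he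
  have hw_mul : ∀ m ∈ univ, Integrable (fun ω => w m ω * e m) μ := fun m _ => (hw m).mul_const _
  have hgap_int : Integrable (fun ω => ∑ n, w (p n) ω * (Y n ω - Yhat n ω)) μ :=
    (integrable_finsetSum _ hw_mul).congr hgap.symm
  have hgap_integral : ∫ ω, ∑ n, w (p n) ω * (Y n ω - Yhat n ω) ∂μ = ∑ m, e m := by
    simp only [integral_congr_ae hgap, integral_finsetSum _ hw_mul, integral_mul_const, hw_one,
      one_mul]
  have htangent : ∀ ω, ∑ n, (1 - exp (-(α n * (X n ω + Y n ω))))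
      ≤ ∑ n, (1 - exp (-(α n * (X n ω + Yhat n ω))))
        + lam * ∑ n, w (p n) ω * (Y n ω - Yhat n ω) := by
    intro ω
    rw [mul_sum, ← sum_add_distrib]
    refine sum_le_sum fun n _ => ?_
    have h := one_sub_exp_neg_mul_le_tangent (α n) (X n ω + Y n ω) (X n ω + Yhat n ω)
    rw [hmarg] at h
    linarith
  calc ∑ n, ∫ ω, 1 - exp (-(α n * (X n ω + Y n ω))) ∂μ
      = ∫ ω, ∑ n, (1 - exp (-(α n * (X n ω + Y n ω)))) ∂μ :=
        (integral_finsetSum _ fun n _ => hY n).symm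
    _ ≤ ∫ ω, (∑ n, (1 - exp (-(α n * (X n ω + Yhat n ω))))
          + lam * ∑ n, w (p n) ω * (Y n ω - Yhat n ω)) ∂μ :=
        integral_mono (integrable_finsetSum _ fun n _ => hY n)
          ((integrable_finsetSum _ fun n _ => hYhat n).add (hgap_int.const_mul lam)) htangent
    _ = ∑ n, ∫ ω, 1 - exp (-(α n * (X n ω + Yhat n ω))) ∂μ + lam * ∑ m, e m := by
        rw [integral_add (integrable_finsetSum _ fun n _ => hYhat n) (hgap_int.const_mul lam),
          integral_finsetSum _ fun n _ => hYhat n, integral_const_mul, hgap_integral]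
    _ ≤ ∑ n, ∫ ω, 1 - exp (-(α n * (X n ω + Yhat n ω))) ∂μ :=
        add_le_of_nonpos_right (mul_nonpos_of_nonneg_of_nonpos hlam he_nonpos)

theorem mul_sum_div_mul_eq {ι : Type*} (s : Finset ι) {W : ℝ} (hW : W ≠ 0) (w L : ι → ℝ) :
    W * ∑ j ∈ s, w j / W * L j = ∑ j ∈ s, w j * L j := by
  rw [mul_sum]
  exact sum_congr rfl fun j _ => by field_simp

section Yhat

variable {ι κ : Type*} [Fintype ι] [DecidableEq κ] (p : ι → κ) {α : ι → ℝ} {βm : κ → ℝ}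

theorem sum_fiber_inv_pos (hα : ∀ n, 0 < α n) (hp : Function.Surjective p)
    (m : κ) : 0 < ∑ k with p k = m, (α k)⁻¹ := by
  obtain ⟨n, rfl⟩ := hp m
  exact sum_pos (fun k _ => inv_pos.2 (hα k)) ⟨n, by simp⟩

theorem mul_exp_neg_mul_add_eq_of_eq {a x y s d c r S E : ℝ} (ha : 0 < a) (hE : 0 < E)
    (hd : d = S - log E) (hy : y = -x + a⁻¹ * (s - d) + a⁻¹ * (c + log a - r)) :
    a * exp (-(a * (x + y))) = exp (r - c + S) * (exp (-s) / E) := by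
  have hexp : -(a * (x + y)) = (r - c + S) + -s - log E - log a := by
    rw [hy, hd]; field_simp; ring
  rw [hexp, exp_sub, exp_sub, exp_add, exp_log hE, exp_log ha]
  field_simp

theorem sum_fiber_eq_of_eq_neg_add_inv_mul {m : κ} (hβm : βm m = ∑ k with p k = m, (α k)⁻¹)
    (hβm0 : βm m ≠ 0) {x y K : ι → ℝ} {xbar d : κ → ℝ} (hxbar : xbar m = ∑ k with p k = m, x k)
    (hy : ∀ k, y k = -x k + (α k)⁻¹ * (xbar (p k) / βm (p k) - d (p k)) + (α k)⁻¹ * K k) :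
    ∑ k with p k = m, y k = ∑ k with p k = m, (α k)⁻¹ * K k - βm m * d m := by
  rw [sum_congr rfl fun k hk => by rw [hy, (mem_filter.1 hk).2]]
  simp only [sum_add_distrib, sum_neg_distrib, ← sum_mul, ← hβm, ← hxbar]
  field_simp
  ring

theorem sum_sum_fiber_sub_mul_eq [Fintype κ] (hβm : ∀ m, βm m = ∑ k with p k = m, (α k)⁻¹)
    {β : ℝ} (hβ : β = ∑ n, (α n)⁻¹) (hβ0 : β ≠ 0) {ER : ℝ}
    (hER : ER = ∑ n, ((α n)⁻¹ / β) * log (α n)) {d L : κ → ℝ}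
    (hd : ∀ m, d m = ∑ j, (βm j / β) * L j - L m) (A : ℝ) :
    ∑ m, (∑ k with p k = m, (α k)⁻¹ * (A / β + log (α k) - ER) - βm m * d m) = A := by
  have hβm_sum : ∑ m, βm m = β := by simp only [hβm, sum_fiberwise, hβ]
  have hβER : β * ER = ∑ n, (α n)⁻¹ * log (α n) := hER ▸ mul_sum_div_mul_eq univ hβ0 _ _
  have hd_sum : ∑ m, βm m * d m = 0 := by
    simp only [hd, mul_sub, sum_sub_distrib, ← sum_mul, hβm_sum, mul_sum_div_mul_eq _ hβ0,
      sub_self]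
  rw [sum_sub_distrib, sum_fiberwise univ p, hd_sum, sub_zero]
  simp only [mul_add, mul_sub, sum_add_distrib, sum_sub_distrib, ← sum_mul, ← hβ, hβER,
    mul_div_cancel₀ A hβ0]
  ring

end Yhat

theorem exponential_Yhat_optimal_constrained_general
    {Ω : Type*} [MeasurableSpace Ω] (P : Measure Ω) [IsProbabilityMeasure P]
    (N h : ℕ) (hN : 1 ≤ N) (A : ℝ)
    (α : Fin N → ℝ) (hα : ∀ n, 0 < α n)
    -- exponential utilities
    (u : Fin N → ℝ → ℝ) (hu : ∀ n x, u n x = 1 - Real.exp (-(α n * x)))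
    -- the partition `(I_m)` of `{1,…,N}`: agent `n` belongs to group `p n`
    (p : Fin N → Fin h) (hp : Function.Surjective p)
    (X : Fin N → Ω → ℝ)
    (βm : Fin h → ℝ)
    (hβm : ∀ m, βm m = ∑ n ∈ Finset.univ.filter (fun n => p n = m), (α n)⁻¹)
    (β : ℝ) (hβ : β = ∑ n, (α n)⁻¹)
    (Xbar : Fin h → Ω → ℝ)
    (hXbar : ∀ m ω, Xbar m ω = ∑ n ∈ Finset.univ.filter (fun n => p n = m), X n ω)
    (ER : ℝ) (hER : ER = ∑ n, ((α n)⁻¹ / β) * Real.log (α n))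
    -- `E_m := E_P[exp(−X̄_m/β_m)] < ∞`
    (hEint : ∀ m, Integrable (fun ω => Real.exp (-(Xbar m ω / βm m))) P)
    (Em : Fin h → ℝ) (hEm : ∀ m, Em m = ∫ ω, Real.exp (-(Xbar m ω / βm m)) ∂P)
    (d : Fin h → ℝ)
    (hd : ∀ m, d m = (∑ j, (βm j / β) * Real.log (Em j)) - Real.log (Em m))
    -- the candidate equilibrium pricing measures
    (Qhat : Fin h → Measure Ω)
    -- the candidate optimal allocation
    (Yhat : Fin N → Ω → ℝ)
    (hYhat : ∀ k ω, Yhat k ω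
      = -X k ω + (α k)⁻¹ * (Xbar (p k) ω / βm (p k) - d (p k))
        + (α k)⁻¹ * (A / β + Real.log (α k) - ER)) :
    ∀ Y : Fin N → Ω → ℝ,
      (∀ m : Fin h, ∃ c : ℝ, ∀ᵐ ω ∂P,
        ∑ k ∈ Finset.univ.filter (fun k => p k = m), Y k ω = c) →
      (∀ᵐ ω ∂P, ∑ n, Y n ω ≤ A) →
      (∀ n, Integrable (Y n) (Qhat (p n))) →
      (∀ n, Integrable (fun ω => u n (X n ω + Y n ω)) P) →
      ∑ n, ∫ ω, u n (X n ω + Y n ω) ∂P ≤ ∑ n, ∫ ω, u n (X n ω + Yhat n ω) ∂P := by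
  intro Y hYc hYA _ hYint
  choose c hc using hYc
  have hβm_pos : ∀ m, 0 < βm m := fun m => hβm m ▸ sum_fiber_inv_pos p hα hp m
  have hβ_pos : 0 < β := hβ ▸ sum_pos (fun n _ => inv_pos.2 (hα n)) ⟨⟨0, hN⟩, mem_univ _⟩
  have hEm_pos : ∀ m, 0 < Em m := fun m => hEm m ▸ integral_exp_pos (hEint m)
  have hYhat_fiber := fun m ω => sum_fiber_eq_of_eq_neg_add_inv_mul p (hβm m) (hβm_pos m).ne'
    (x := (X · ω)) (y := (Yhat · ω)) (K := fun k => A / β + log (α k) - ER) (xbar := (Xbar · ω))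
    (d := d) (hXbar m ω) (fun k => hYhat k ω)
  simp only [hu] at hYint ⊢
  refine sum_integral_one_sub_exp_le_of_marginal_eq p (fun n => (hα n).ne')
    (w := fun m ω => exp (-(Xbar m ω / βm m)) / Em m)
    (fun m => (hEint m).div_const _)
    (fun m => by rw [integral_div, ← hEm, div_self (hEm_pos m).ne'])
    (exp_pos _).le
    (fun n ω => mul_exp_neg_mul_add_eq_of_eq (hα n) (hEm_pos _) (hd _) (hYhat n ω)) hYint
    (fun m => (hc m).mono fun ω hω => by rw [sum_sub_distrib, hω, hYhat_fiber]) ?_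
  rw [sum_sub_distrib, sum_sum_fiber_sub_mul_eq p hβm hβ hβ_pos.ne' hER hd]
  exact sub_nonpos.2 (sum_le_of_ae_sum_fiber_eq p hc hYA)

/-- `Ŷ` attains the constrained systemic optimum `π(A)` over the clustering constraint
    set `B^(I)` in the exponential case (Theorem 5.5): any allocation `Y` whose cluster
    sums are a.s. constant, with `Σₙ Yⁿ ≤ A` a.s., `Yⁿ ∈ L¹(Q̂^{m(n)})` and
    `uₙ(Xⁿ+Yⁿ)` integrable, has aggregate expected utility at most that of `Ŷ`. -/
theorem exponential_Yhat_optimal_constrained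
    {Ω : Type*} [MeasurableSpace Ω] (P : Measure Ω) [IsProbabilityMeasure P]
    (N h : ℕ) (hN : 1 ≤ N) (A : ℝ)
    (α : Fin N → ℝ) (hα : ∀ n, 0 < α n)
    -- exponential utilities
    (u : Fin N → ℝ → ℝ) (hu : ∀ n x, u n x = 1 - Real.exp (-(α n * x)))
    -- the partition `(I_m)` of `{1,…,N}`: agent `n` belongs to group `p n`
    (p : Fin N → Fin h) (hp : Function.Surjective p)
    (X : Fin N → Ω → ℝ) (hXmeas : ∀ n, Measurable (X n))
    (βm : Fin h → ℝ)
    (hβm : ∀ m, βm m = ∑ n ∈ Finset.univ.filter (fun n => p n = m), (α n)⁻¹)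
    (β : ℝ) (hβ : β = ∑ n, (α n)⁻¹)
    (Xbar : Fin h → Ω → ℝ)
    (hXbar : ∀ m ω, Xbar m ω = ∑ n ∈ Finset.univ.filter (fun n => p n = m), X n ω)
    (ER : ℝ) (hER : ER = ∑ n, ((α n)⁻¹ / β) * Real.log (α n))
    -- `E_m := E_P[exp(−X̄_m/β_m)] < ∞`
    (hEint : ∀ m, Integrable (fun ω => Real.exp (-(Xbar m ω / βm m))) P)
    (Em : Fin h → ℝ) (hEm : ∀ m, Em m = ∫ ω, Real.exp (-(Xbar m ω / βm m)) ∂P)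
    (d : Fin h → ℝ)
    (hd : ∀ m, d m = (∑ j, (βm j / β) * Real.log (Em j)) - Real.log (Em m))
    -- the candidate equilibrium pricing measures
    (Qhat : Fin h → Measure Ω)
    (hQhat : ∀ m, Qhat m
      = P.withDensity (fun ω => ENNReal.ofReal (Real.exp (-(Xbar m ω / βm m)) / Em m)))
    -- the candidate optimal allocation
    (Yhat : Fin N → Ω → ℝ)
    (hYhat : ∀ k ω, Yhat k ω
      = -X k ω + (α k)⁻¹ * (Xbar (p k) ω / βm (p k) - d (p k))
        + (α k)⁻¹ * (A / β + Real.log (α k) - ER))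
    -- all exponential moments of the `Xⁿ` are finite
    (hXexp : ∀ n, ∀ a : ℝ, 0 < a → Integrable (fun ω => Real.exp (a * |X n ω|)) P) :
    ∀ Y : Fin N → Ω → ℝ,
      (∀ m : Fin h, ∃ c : ℝ, ∀ᵐ ω ∂P,
        ∑ k ∈ Finset.univ.filter (fun k => p k = m), Y k ω = c) →
      (∀ᵐ ω ∂P, ∑ n, Y n ω ≤ A) →
      (∀ n, Integrable (Y n) (Qhat (p n))) →
      (∀ n, Integrable (fun ω => u n (X n ω + Y n ω)) P) →
      ∑ n, ∫ ω, u n (X n ω + Y n ω) ∂P ≤ ∑ n, ∫ ω, u n (X n ω + Yhat n ω) ∂P :=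
  exponential_Yhat_optimal_constrained_general P N h hN A α hα u hu p hp X βm hβm β hβ Xbar hXbar ER
    hER hEint Em hEm d hd Qhat Yhat hYhat
end

section
/- For every n = 1,…,N, the quantity â^n := E_{Q̂^{m(n)}}[Ŷ^n] is a finite real number, and for every real random variable Y with Y ∈ L^1(Q̂^{m(n)}), E_{Q̂^{m(n)}}[Y] ≤ â^n, and u_n(X^n+Y) P-integrable, one has E_P[u_n(X^n+Y)] ≤ E_P[u_n(X^n+Ŷ^n)]. -/
/-! The candidate `Ŷⁿ` is built so that the marginal utility `αₙ exp (-αₙ (Xⁿ + Ŷⁿ))` is a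
constant multiple of the density `dQ̂^{m(n)}/dP`. For a concave utility this first-order
condition already gives optimality under the budget constraint: integrating the supergradient
inequality `u (Xⁿ + Y) ≤ u (Xⁿ + Ŷⁿ) + u' (Xⁿ + Ŷⁿ) (Y - Ŷⁿ)` against `P` turns the last term into
a nonnegative multiple of `E_Q̂[Y] - E_Q̂[Ŷⁿ] ≤ 0`.

`Ŷⁿ` is `Q̂^{m(n)}`-integrable because linear combinations of the `Xᵏ` keep all exponential
moments under `P`, so each `Xᵏ` keeps them under the exponentially tilted measure `Q̂^{m(n)}`. -/

open MeasureTheory ProbabilityTheory Real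

section ExponentialMoments

variable {Ω : Type*} [MeasurableSpace Ω] {μ : Measure Ω} {X Y : Ω → ℝ}

lemma integrableExpSet_eq_univ_of_integrable_exp_mul_abs [IsFiniteMeasure μ]
    (hX : AEMeasurable X μ) (h : ∀ a : ℝ, 0 < a → Integrable (fun ω => exp (a * |X ω|)) μ) :
    integrableExpSet X μ = Set.univ := by
  refine Set.eq_univ_of_forall fun t => ?_
  refine (h (|t| + 1) (by positivity)).mono
    (measurable_exp.comp_aemeasurable (hX.const_mul t)).aestronglyMeasurable
    (ae_of_all _ fun ω => ?_)
  simp only [norm_eq_abs, abs_exp, exp_le_exp]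
  calc t * X ω ≤ |t| * |X ω| := by rw [← abs_mul]; exact le_abs_self _
    _ ≤ (|t| + 1) * |X ω| := by gcongr; linarith

lemma integrable_exp_mul_of_integrableExpSet_eq_univ (hX : integrableExpSet X μ = Set.univ)
    (t : ℝ) : Integrable (fun ω => exp (t * X ω)) μ :=
  integrable_of_mem_integrableExpSet (hX ▸ Set.mem_univ t)

lemma integrableExpSet_add_eq_univ (hX : integrableExpSet X μ = Set.univ)
    (hY : integrableExpSet Y μ = Set.univ) : integrableExpSet (X + Y) μ = Set.univ := by
  have hX' := integrable_exp_mul_of_integrableExpSet_eq_univ hX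
  have hY' := integrable_exp_mul_of_integrableExpSet_eq_univ hY
  refine Set.eq_univ_of_forall fun t => ?_
  have hsplit : (fun ω => exp (t * (X + Y) ω)) = fun ω => exp (t * X ω) * exp (t * Y ω) := by
    ext ω; rw [Pi.add_apply, mul_add, exp_add]
  show Integrable (fun ω => exp (t * (X + Y) ω)) μ
  rw [hsplit]
  -- `e^{t (x + y)} ≤ e^{2 t x} + e^{2 t y}` by AM-GM
  refine ((hX' (2 * t)).add (hY' (2 * t))).mono ((hX' t).1.mul (hY' t).1)
    (ae_of_all _ fun ω => ?_)
  have hsq (Z : Ω → ℝ) : exp (2 * t * Z ω) = exp (t * Z ω) ^ 2 := by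
    rw [sq, ← exp_add]; ring_nf
  simp only [Pi.add_apply, norm_mul, norm_eq_abs, abs_exp, hsq]
  rw [abs_of_nonneg (by positivity)]
  nlinarith [sq_nonneg (exp (t * X ω) - exp (t * Y ω))]

lemma integrableExpSet_const_mul_eq_univ (hX : integrableExpSet X μ = Set.univ) (c : ℝ) :
    integrableExpSet (fun ω => c * X ω) μ = Set.univ := by
  refine Set.eq_univ_of_forall fun t => ?_
  show Integrable _ _
  simpa only [mul_assoc] using integrable_exp_mul_of_integrableExpSet_eq_univ hX (t * c)

lemma integrableExpSet_sum_eq_univ [IsFiniteMeasure μ] {ι : Type*} {s : Finset ι}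
    {X : ι → Ω → ℝ} (hX : ∀ i ∈ s, integrableExpSet (X i) μ = Set.univ) :
    integrableExpSet (∑ i ∈ s, X i) μ = Set.univ :=
  Finset.sum_induction _ (fun Z => integrableExpSet Z μ = Set.univ)
    (fun _ _ => integrableExpSet_add_eq_univ)
    (Set.eq_univ_of_forall fun _ => by simp [integrableExpSet]) hX

end ExponentialMoments

section ChangeOfDensity

variable {Ω : Type*} [MeasurableSpace Ω] {μ : Measure Ω} {ρ : Ω → ℝ}

lemma integrable_withDensity_ofReal_iff (hρ : Measurable ρ) (hρ0 : ∀ ω, 0 ≤ ρ ω)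
    {f : Ω → ℝ} :
    Integrable f (μ.withDensity fun ω => ENNReal.ofReal (ρ ω)) ↔
      Integrable (fun ω => ρ ω * f ω) μ := by
  rw [integrable_withDensity_iff_integrable_smul' hρ.ennreal_ofReal
    (ae_of_all _ fun _ => ENNReal.ofReal_lt_top)]
  simp only [ENNReal.toReal_ofReal (hρ0 _), smul_eq_mul]

lemma integral_withDensity_ofReal (hρ : AEMeasurable ρ μ) (hρ0 : ∀ ω, 0 ≤ ρ ω) (f : Ω → ℝ) :
    ∫ ω, f ω ∂(μ.withDensity fun ω => ENNReal.ofReal (ρ ω)) = ∫ ω, ρ ω * f ω ∂μ := by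
  rw [integral_withDensity_eq_integral_toReal_smul₀ hρ.ennreal_ofReal
    (ae_of_all _ fun _ => ENNReal.ofReal_lt_top)]
  simp only [ENNReal.toReal_ofReal (hρ0 _), smul_eq_mul]

lemma integrableExpSet_withDensity_exp_div_eq_univ {X Z : Ω → ℝ}
    (hX : integrableExpSet X μ = Set.univ) (hZ : integrableExpSet Z μ = Set.univ)
    (hZm : Measurable Z) {c : ℝ} (hc : 0 ≤ c) :
    integrableExpSet X (μ.withDensity fun ω => ENNReal.ofReal (exp (Z ω) / c)) = Set.univ := by
  refine Set.eq_univ_of_forall fun t => ?_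
  show Integrable _ _
  rw [integrable_withDensity_ofReal_iff (hZm.exp.div_const c) fun ω => by positivity]
  have htilt := integrable_exp_mul_of_integrableExpSet_eq_univ
    (integrableExpSet_add_eq_univ (integrableExpSet_const_mul_eq_univ hX t) hZ) 1
  convert htilt.const_mul c⁻¹ using 2 with ω
  simp only [Pi.add_apply, one_mul, exp_add]
  ring

lemma integrable_withDensity_exp_neg_sum_div [IsFiniteMeasure μ] {ι : Type*} {X : ι → Ω → ℝ}
    (hXm : ∀ i, Measurable (X i)) (hX : ∀ i, integrableExpSet (X i) μ = Set.univ)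
    (s : Finset ι) (b : ℝ) {c : ℝ} (hc : 0 ≤ c) (k : ι) :
    Integrable (X k)
      (μ.withDensity fun ω => ENNReal.ofReal (exp (-((∑ i ∈ s, X i ω) / b)) / c)) := by
  have hZ : integrableExpSet (fun ω => -((∑ i ∈ s, X i ω) / b)) μ = Set.univ := by
    have hZ_eq : (fun ω => -((∑ i ∈ s, X i ω) / b)) = fun ω => -b⁻¹ * (∑ i ∈ s, X i) ω :=
      funext fun ω => by rw [Finset.sum_apply]; ring
    rw [hZ_eq]
    exact integrableExpSet_const_mul_eq_univ (integrableExpSet_sum_eq_univ fun i _ => hX i) _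
  refine integrable_of_mem_interior_integrableExpSet ?_
  rw [integrableExpSet_withDensity_exp_div_eq_univ (hX k) hZ (by fun_prop) hc, interior_univ]
  exact Set.mem_univ 0

end ChangeOfDensity

lemma one_sub_exp_neg_mul_le (a z w : ℝ) :
    1 - exp (-(a * w)) ≤ (1 - exp (-(a * z))) + a * exp (-(a * z)) * (w - z) := by
  have hsplit : exp (-(a * w)) = exp (-(a * z)) * exp (-(a * (w - z))) := by
    rw [← exp_add]; ring_nf
  rw [hsplit]
  nlinarith [add_one_le_exp (-(a * (w - z))), exp_pos (-(a * z))]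

theorem integral_comp_add_le_of_supergradient_eq_density {Ω : Type*} [MeasurableSpace Ω]
    {μ : Measure Ω} {ρ : Ω → ℝ} (hρ : Measurable ρ) (hρ0 : ∀ ω, 0 ≤ ρ ω)
    {u u' : ℝ → ℝ} (hu : ∀ z w, u w ≤ u z + u' z * (w - z))
    {X Y Ŷ : Ω → ℝ} {c : ℝ} (hc : 0 ≤ c) (hŶ_marg : ∀ ω, u' (X ω + Ŷ ω) = c * ρ ω)
    (hY : Integrable Y (μ.withDensity fun ω => ENNReal.ofReal (ρ ω)))
    (hŶ : Integrable Ŷ (μ.withDensity fun ω => ENNReal.ofReal (ρ ω)))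
    (hbudget : ∫ ω, Y ω ∂(μ.withDensity fun ω => ENNReal.ofReal (ρ ω))
      ≤ ∫ ω, Ŷ ω ∂(μ.withDensity fun ω => ENNReal.ofReal (ρ ω)))
    (huY : Integrable (fun ω => u (X ω + Y ω)) μ) (huŶ : Integrable (fun ω => u (X ω + Ŷ ω)) μ) :
    ∫ ω, u (X ω + Y ω) ∂μ ≤ ∫ ω, u (X ω + Ŷ ω) ∂μ := by
  rw [integrable_withDensity_ofReal_iff hρ hρ0] at hY hŶ
  rw [integral_withDensity_ofReal hρ.aemeasurable hρ0,
    integral_withDensity_ofReal hρ.aemeasurable hρ0] at hbudget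
  have hgap : Integrable (fun ω => c * (ρ ω * Y ω - ρ ω * Ŷ ω)) μ := (hY.sub hŶ).const_mul c
  have hgap_nonpos : ∫ ω, c * (ρ ω * Y ω - ρ ω * Ŷ ω) ∂μ ≤ 0 := by
    rw [integral_const_mul, integral_sub hY hŶ]
    exact mul_nonpos_of_nonneg_of_nonpos hc (sub_nonpos.2 hbudget)
  calc ∫ ω, u (X ω + Y ω) ∂μ
      ≤ ∫ ω, u (X ω + Ŷ ω) + c * (ρ ω * Y ω - ρ ω * Ŷ ω) ∂μ := by
        refine integral_mono huY (huŶ.add hgap) fun ω => ?_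
        have := hu (X ω + Ŷ ω) (X ω + Y ω)
        rw [hŶ_marg] at this
        linarith
    _ ≤ ∫ ω, u (X ω + Ŷ ω) ∂μ := by
        rw [integral_add huŶ hgap]
        linarith

theorem integral_one_sub_exp_le_of_exp_eq_mul_density {Ω : Type*} [MeasurableSpace Ω]
    {μ : Measure Ω} [IsFiniteMeasure μ] {ρ : Ω → ℝ} (hρ : Measurable ρ) (hρ0 : ∀ ω, 0 ≤ ρ ω)
    (hρ_int : Integrable ρ μ) {a c : ℝ} (ha : 0 ≤ a) (hc : 0 ≤ c) {X Y Ŷ : Ω → ℝ}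
    (hŶ_exp : ∀ ω, exp (-(a * (X ω + Ŷ ω))) = c * ρ ω)
    (hY : Integrable Y (μ.withDensity fun ω => ENNReal.ofReal (ρ ω)))
    (hŶ : Integrable Ŷ (μ.withDensity fun ω => ENNReal.ofReal (ρ ω)))
    (hbudget : ∫ ω, Y ω ∂(μ.withDensity fun ω => ENNReal.ofReal (ρ ω))
      ≤ ∫ ω, Ŷ ω ∂(μ.withDensity fun ω => ENNReal.ofReal (ρ ω)))
    (huY : Integrable (fun ω => 1 - exp (-(a * (X ω + Y ω)))) μ) :
    ∫ ω, 1 - exp (-(a * (X ω + Y ω))) ∂μ ≤ ∫ ω, 1 - exp (-(a * (X ω + Ŷ ω))) ∂μ := by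
  refine integral_comp_add_le_of_supergradient_eq_density (u := fun z => 1 - exp (-(a * z)))
    (u' := fun z => a * exp (-(a * z))) hρ hρ0 (one_sub_exp_neg_mul_le a) (mul_nonneg ha hc)
    (fun ω => by rw [hŶ_exp, mul_assoc]) hY hŶ hbudget huY ?_
  simp only [hŶ_exp]
  exact (integrable_const 1).sub (hρ_int.const_mul c)

theorem exponential_Yhat_single_agent_optimal_general
    {Ω : Type*} [MeasurableSpace Ω] (P : Measure Ω) [IsProbabilityMeasure P]
    (N h : ℕ) (A : ℝ)
    (α : Fin N → ℝ) (hα : ∀ n, 0 < α n)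
    -- exponential utilities
    (u : Fin N → ℝ → ℝ) (hu : ∀ n x, u n x = 1 - Real.exp (-(α n * x)))
    -- the partition `(I_m)` of `{1,…,N}`: agent `n` belongs to group `p n`
    (p : Fin N → Fin h)
    (X : Fin N → Ω → ℝ) (hXmeas : ∀ n, Measurable (X n))
    (βm : Fin h → ℝ)
    (β : ℝ)
    (Xbar : Fin h → Ω → ℝ)
    (hXbar : ∀ m ω, Xbar m ω = ∑ n ∈ Finset.univ.filter (fun n => p n = m), X n ω)
    (ER : ℝ)
    -- `E_m := E_P[exp(−X̄_m/β_m)] < ∞`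
    (hEint : ∀ m, Integrable (fun ω => Real.exp (-(Xbar m ω / βm m))) P)
    (Em : Fin h → ℝ) (hEm : ∀ m, Em m = ∫ ω, Real.exp (-(Xbar m ω / βm m)) ∂P)
    (d : Fin h → ℝ)
    -- the candidate equilibrium pricing measures
    (Qhat : Fin h → Measure Ω)
    (hQhat : ∀ m, Qhat m
      = P.withDensity (fun ω => ENNReal.ofReal (Real.exp (-(Xbar m ω / βm m)) / Em m)))
    -- the candidate optimal allocation
    (Yhat : Fin N → Ω → ℝ)
    (hYhat : ∀ k ω, Yhat k ω
      = -X k ω + (α k)⁻¹ * (Xbar (p k) ω / βm (p k) - d (p k))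
        + (α k)⁻¹ * (A / β + Real.log (α k) - ER))
    -- all exponential moments of the `Xⁿ` are finite
    (hXexp : ∀ n, ∀ a : ℝ, 0 < a → Integrable (fun ω => Real.exp (a * |X n ω|)) P) :
    (∀ n, Integrable (Yhat n) (Qhat (p n))) ∧
    (∀ n, ∀ Y : Ω → ℝ, Integrable Y (Qhat (p n)) →
      (∫ ω, Y ω ∂(Qhat (p n))) ≤ (∫ ω, Yhat n ω ∂(Qhat (p n))) →
      Integrable (fun ω => u n (X n ω + Y ω)) P →
      ∫ ω, u n (X n ω + Y ω) ∂P ≤ ∫ ω, u n (X n ω + Yhat n ω) ∂P) := by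
  have hX_mom (n : Fin N) : integrableExpSet (X n) P = Set.univ :=
    integrableExpSet_eq_univ_of_integrable_exp_mul_abs (hXmeas n).aemeasurable (hXexp n)
  have hEm_pos (m : Fin h) : 0 < Em m := hEm m ▸ integral_exp_pos (hEint m)
  have hXQ (m : Fin h) (n : Fin N) : Integrable (X n) (Qhat m) := by
    simp_rw [hQhat, hXbar]
    exact integrable_withDensity_exp_neg_sum_div hXmeas hX_mom _ _ (hEm_pos m).le n
  have hYhat_int (n : Fin N) : Integrable (Yhat n) (Qhat (p n)) := by
    have : IsFiniteMeasure (Qhat (p n)) :=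
      hQhat _ ▸ isFiniteMeasure_withDensity_ofReal ((hEint _).div_const _).2
    rw [funext (hYhat n), funext (hXbar (p n))]
    exact ((hXQ _ n).neg.add (((integrable_finsetSum _ fun k _ => hXQ _ k).div_const _).sub
      (integrable_const _) |>.const_mul _)).add (integrable_const _)
  refine ⟨hYhat_int, fun n Y hY hbudget huY => ?_⟩
  set K := exp (d (p n) - A / β - log (α n) + ER)
  have hE_pos := hEm_pos (p n)
  have hexp_Yhat (ω : Ω) : exp (-(α n * (X n ω + Yhat n ω)))
      = K * Em (p n) * (exp (-(Xbar (p n) ω / βm (p n))) / Em (p n)) := by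
    have hα0 := (hα n).ne'
    rw [mul_assoc, mul_div_cancel₀ _ hE_pos.ne', ← exp_add, hYhat]
    congr 1
    field_simp
    ring
  rw [hQhat] at hY hbudget
  simp only [hu] at huY ⊢
  exact integral_one_sub_exp_le_of_exp_eq_mul_density
    (by simp_rw [hXbar]; fun_prop) (fun ω => by positivity)
    ((hEint _).div_const _) (hα n).le (by positivity) hexp_Yhat hY
    (hQhat _ ▸ hYhat_int n) hbudget huY

/-- Condition 1 of a SORTE in the exponential case: for each `n`, the allocation
    `âⁿ := E_{Q̂^{m(n)}}[Ŷⁿ]` is a finite real number (i.e. `Ŷⁿ ∈ L¹(Q̂^{m(n)})`) and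
    `Ŷⁿ` solves the single-agent utility maximization problem `Uₙ^{Q̂^{m(n)}}(âⁿ)`. -/
theorem exponential_Yhat_single_agent_optimal
    {Ω : Type*} [MeasurableSpace Ω] (P : Measure Ω) [IsProbabilityMeasure P]
    (N h : ℕ) (hN : 1 ≤ N) (A : ℝ)
    (α : Fin N → ℝ) (hα : ∀ n, 0 < α n)
    -- exponential utilities
    (u : Fin N → ℝ → ℝ) (hu : ∀ n x, u n x = 1 - Real.exp (-(α n * x)))
    -- the partition `(I_m)` of `{1,…,N}`: agent `n` belongs to group `p n`
    (p : Fin N → Fin h) (hp : Function.Surjective p)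
    (X : Fin N → Ω → ℝ) (hXmeas : ∀ n, Measurable (X n))
    (βm : Fin h → ℝ)
    (hβm : ∀ m, βm m = ∑ n ∈ Finset.univ.filter (fun n => p n = m), (α n)⁻¹)
    (β : ℝ) (hβ : β = ∑ n, (α n)⁻¹)
    (Xbar : Fin h → Ω → ℝ)
    (hXbar : ∀ m ω, Xbar m ω = ∑ n ∈ Finset.univ.filter (fun n => p n = m), X n ω)
    (ER : ℝ) (hER : ER = ∑ n, ((α n)⁻¹ / β) * Real.log (α n))
    -- `E_m := E_P[exp(−X̄_m/β_m)] < ∞`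
    (hEint : ∀ m, Integrable (fun ω => Real.exp (-(Xbar m ω / βm m))) P)
    (Em : Fin h → ℝ) (hEm : ∀ m, Em m = ∫ ω, Real.exp (-(Xbar m ω / βm m)) ∂P)
    (d : Fin h → ℝ)
    (hd : ∀ m, d m = (∑ j, (βm j / β) * Real.log (Em j)) - Real.log (Em m))
    -- the candidate equilibrium pricing measures
    (Qhat : Fin h → Measure Ω)
    (hQhat : ∀ m, Qhat m
      = P.withDensity (fun ω => ENNReal.ofReal (Real.exp (-(Xbar m ω / βm m)) / Em m)))
    -- the candidate optimal allocation
    (Yhat : Fin N → Ω → ℝ)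
    (hYhat : ∀ k ω, Yhat k ω
      = -X k ω + (α k)⁻¹ * (Xbar (p k) ω / βm (p k) - d (p k))
        + (α k)⁻¹ * (A / β + Real.log (α k) - ER))
    -- all exponential moments of the `Xⁿ` are finite
    (hXexp : ∀ n, ∀ a : ℝ, 0 < a → Integrable (fun ω => Real.exp (a * |X n ω|)) P) :
    (∀ n, Integrable (Yhat n) (Qhat (p n))) ∧
    (∀ n, ∀ Y : Ω → ℝ, Integrable Y (Qhat (p n)) →
      (∫ ω, Y ω ∂(Qhat (p n))) ≤ (∫ ω, Yhat n ω ∂(Qhat (p n))) →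
      Integrable (fun ω => u n (X n ω + Y ω)) P →
      ∫ ω, u n (X n ω + Y ω) ∂P ≤ ∫ ω, u n (X n ω + Yhat n ω) ∂P) :=
  exponential_Yhat_single_agent_optimal_general P N h A α hα u hu p X hXmeas βm β Xbar hXbar ER
    hEint Em hEm d Qhat hQhat Yhat hYhat hXexp
end

section
/- Let γ_1,…,γ_N > 0 and define g_k := (1/α_k)(ln γ_k − Σ_{n=1}^N R(n) ln γ_n) for k = 1,…,N (so that Σ_{k=1}^N g_k = 0). Let F be a set of N-vectors of real random variables such that Y + b ∈ F for every Y ∈ F and every b ∈ ℝ^N with Σ_{n=1}^N b^n = 0. Let X = (X^1,…,X^N) be a vector of real random variables and Ŷ ∈ F be such that each u_n(X^n+Ŷ^n) is P-integrable and Σ_{n=1}^N E_P[u_n(X^n+Y^n)] ≤ Σ_{n=1}^N E_P[u_n(X^n+Ŷ^n)] for every Y ∈ F with each u_n(X^n+Y^n) P-integrable. Then Ŷ + g ∈ F, each u_n(X^n+Ŷ^n+g_n) is P-integrable, and Σ_{n=1}^N γ_n·E_P[u_n(X^n+Y^n)] ≤ Σ_{n=1}^N γ_n·E_P[u_n(X^n+Ŷ^n+g_n)]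 for every Y ∈ F with each u_n(X^n+Y^n) P-integrable. -/
open MeasureTheory

/-- Proposition 5.8: in the exponential case, re-weighting the utilities by positive
    weights `γₙ` only translates the optimal allocation by the deterministic vector
    `g(γ)` (whose components sum to zero). -/
theorem exponential_reweighting_translates_optimum
    {Ω : Type*} [MeasurableSpace Ω] (P : Measure Ω) [IsProbabilityMeasure P]
    (N : ℕ) (hN : 1 ≤ N)
    (α γ : Fin N → ℝ) (hα : ∀ n, 0 < α n) (hγ : ∀ n, 0 < γ n)
    (u : Fin N → ℝ → ℝ) (hu : ∀ n x, u n x = 1 - Real.exp (-(α n * x)))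
    (β : ℝ) (hβ : β = ∑ n, (α n)⁻¹)
    (g : Fin N → ℝ)
    (hg : ∀ k, g k = (α k)⁻¹ * (Real.log (γ k) - ∑ n, ((α n)⁻¹ / β) * Real.log (γ n)))
    (F : Set (Fin N → Ω → ℝ))
    -- `F` is invariant under translations by constant vectors with zero componentwise sum
    (hF : ∀ Y ∈ F, ∀ b : Fin N → ℝ, (∑ n, b n) = 0 → (fun n ω => Y n ω + b n) ∈ F)
    (X : Fin N → Ω → ℝ)
    (Yhat : Fin N → Ω → ℝ) (hYhatF : Yhat ∈ F)
    (hYhatInt : ∀ n, Integrable (fun ω => u n (X n ω + Yhat n ω)) P)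
    -- `Ŷ` is optimal for the unweighted problem over `F`
    (hopt : ∀ Y ∈ F, (∀ n, Integrable (fun ω => u n (X n ω + Y n ω)) P) →
      ∑ n, ∫ ω, u n (X n ω + Y n ω) ∂P ≤ ∑ n, ∫ ω, u n (X n ω + Yhat n ω) ∂P) :
    ((fun n ω => Yhat n ω + g n) ∈ F) ∧
    (∀ n, Integrable (fun ω => u n (X n ω + Yhat n ω + g n)) P) ∧
    (∀ Y ∈ F, (∀ n, Integrable (fun ω => u n (X n ω + Y n ω)) P) →
      ∑ n, γ n * ∫ ω, u n (X n ω + Y n ω) ∂P ≤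
        ∑ n, γ n * ∫ ω, u n (X n ω + Yhat n ω + g n) ∂P) := by
  have hβpos : 0 < β := by
    rw [hβ]
    apply Finset.sum_pos (fun n _ => inv_pos.mpr (hα n))
    exact Finset.univ_nonempty_iff.mpr (Fin.pos_iff_nonempty.mp hN)
  set S : ℝ := ∑ n, ((α n)⁻¹ / β) * Real.log (γ n) with hS
  have hT : S = β⁻¹ * ∑ n, (α n)⁻¹ * Real.log (γ n) := by
    rw [hS, Finset.mul_sum]
    exact Finset.sum_congr rfl fun n _ => by ring
  have hsum_g : ∑ k, g k = 0 := by
    simp only [hg]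
    calc ∑ k, (α k)⁻¹ * (Real.log (γ k) - S)
        = (∑ k, (α k)⁻¹ * Real.log (γ k)) - (∑ k, (α k)⁻¹) * S := by
          rw [Finset.sum_mul, ← Finset.sum_sub_distrib]
          exact Finset.sum_congr rfl fun k _ => by ring
      _ = 0 := by rw [← hβ, hT]; field_simp; ring
  -- key pointwise identity
  have key : ∀ (n : Fin N) (t : ℝ),
      u n (t + g n) = (1 - Real.exp S / γ n) + (Real.exp S / γ n) * u n t := by
    intro n t
    have hαg : α n * g n = Real.log (γ n) - S := by
      rw [hg, mul_inv_cancel_left₀ (hα n).ne']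
    have hexp : Real.exp (-(α n * (t + g n))) = Real.exp S / γ n * Real.exp (-(α n * t)) := by
      have h1 : -(α n * (t + g n)) = S - Real.log (γ n) + -(α n * t) := by
        rw [mul_add, hαg]; ring
      rw [h1, Real.exp_add, Real.exp_sub, Real.exp_log (hγ n)]
    rw [hu, hu, hexp]; ring
  have hcpos : ∀ n : Fin N, 0 < Real.exp S / γ n :=
    fun n => div_pos (Real.exp_pos S) (hγ n)
  -- integrability transfer
  have intg : ∀ (n : Fin N) (Z : Ω → ℝ), Integrable (fun ω => u n (Z ω)) P →
      Integrable (fun ω => u n (Z ω + g n)) P := by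
    intro n Z hZ
    simp only [key n]
    exact (integrable_const _).add (hZ.const_mul _)
  have intg' : ∀ (n : Fin N) (Z : Ω → ℝ), Integrable (fun ω => u n (Z ω)) P →
      Integrable (fun ω => u n (Z ω - g n)) P := by
    intro n Z hZ
    have heq : (fun ω => u n (Z ω - g n))
        = fun ω => (Real.exp S / γ n)⁻¹ * (u n (Z ω) - (1 - Real.exp S / γ n)) := by
      funext ω
      have h := key n (Z ω - g n)
      have h2 : Z ω - g n + g n = Z ω := by ring
      rw [h2] at h
      rw [h]
      field_simp [(hγ n).ne']
      ring
    rw [heq]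
    exact ((hZ.sub (integrable_const _)).const_mul _)
  -- integral identity
  have intlem : ∀ (n : Fin N) (Z : Ω → ℝ), Integrable (fun ω => u n (Z ω)) P →
      ∫ ω, u n (Z ω + g n) ∂P
        = (1 - Real.exp S / γ n) + (Real.exp S / γ n) * ∫ ω, u n (Z ω) ∂P := by
    intro n Z hZ
    simp only [key n]
    rw [integral_add (integrable_const _) (hZ.const_mul _), integral_const,
      integral_const_mul]
    simp
  refine ⟨hF Yhat hYhatF g hsum_g, fun n => intg n (fun ω => X n ω + Yhat n ω) (hYhatInt n),
    ?_⟩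
  intro Y hY hYI
  have hsumneg : (∑ n, -g n) = 0 := by
    rw [Finset.sum_neg_distrib, hsum_g, neg_zero]
  have hY' : (fun n ω => Y n ω + -g n) ∈ F := hF Y hY (fun n => -g n) hsumneg
  have hY'I : ∀ n, Integrable (fun ω => u n (X n ω + (Y n ω + -g n))) P := by
    intro n
    have h := intg' n (fun ω => X n ω + Y n ω) (hYI n)
    have heq : (fun ω => u n (X n ω + Y n ω - g n))
        = fun ω => u n (X n ω + (Y n ω + -g n)) := by
      funext ω; congr 1; ring
    rwa [heq] at h
  have hle := hopt (fun n ω => Y n ω + -g n) hY' hY'I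
  beta_reduce at hle
  have h1 : ∀ n, γ n * ∫ ω, u n (X n ω + Y n ω) ∂P
      = (γ n - Real.exp S) + Real.exp S * ∫ ω, u n (X n ω + (Y n ω + -g n)) ∂P := by
    intro n
    have hZ := intlem n (fun ω => X n ω + (Y n ω + -g n)) (hY'I n)
    have heq : (fun ω => u n (X n ω + (Y n ω + -g n) + g n))
        = fun ω => u n (X n ω + Y n ω) := by
      funext ω; congr 1; ring
    beta_reduce at hZ
    rw [heq] at hZ
    rw [hZ]
    field_simp [(hγ n).ne']
  have h2 : ∀ n, γ n * ∫ ω, u n (X n ω + Yhat n ω + g n) ∂P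
      = (γ n - Real.exp S) + Real.exp S * ∫ ω, u n (X n ω + Yhat n ω) ∂P := by
    intro n
    have hZ := intlem n (fun ω => X n ω + Yhat n ω) (hYhatInt n)
    beta_reduce at hZ
    rw [hZ]
    field_simp [(hγ n).ne']
  calc ∑ n, γ n * ∫ ω, u n (X n ω + Y n ω) ∂P
      = ∑ n, ((γ n - Real.exp S) + Real.exp S * ∫ ω, u n (X n ω + (Y n ω + -g n)) ∂P) :=
        Finset.sum_congr rfl fun n _ => h1 n
    _ = (∑ n, (γ n - Real.exp S))
          + Real.exp S * ∑ n, ∫ ω, u n (X n ω + (Y n ω + -g n)) ∂P := by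
        rw [Finset.sum_add_distrib, Finset.mul_sum]
    _ ≤ (∑ n, (γ n - Real.exp S))
          + Real.exp S * ∑ n, ∫ ω, u n (X n ω + Yhat n ω) ∂P := by
        have := mul_le_mul_of_nonneg_left hle (Real.exp_pos S).le
        linarith
    _ = ∑ n, ((γ n - Real.exp S) + Real.exp S * ∫ ω, u n (X n ω + Yhat n ω) ∂P) := by
        rw [Finset.sum_add_distrib, Finset.mul_sum]
    _ = ∑ n, γ n * ∫ ω, u n (X n ω + Yhat n ω + g n) ∂P :=
        Finset.sum_congr rfl fun n _ => (h2 n).symm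
end

section
/- Let Q be a probability measure on (Ω, 𝓕) equivalent to P with density Z := dQ/dP and finite relative entropy H(Q,P) := E_P[Z·ln Z] < +∞, and let α > 0 and x ∈ ℝ. Then sup{ E_P[1 − exp(−αY)] : Y ∈ L^1(Q), E_Q[Y] ≤ x, exp(−αY) ∈ L^1(P) } = 1 − exp(−αx − H(Q,P)), and the supremum is attained at Y* := x + (H(Q,P) − ln Z)/α, which belongs to L^1(Q) with E_Q[Y*] = x. -/
open MeasureTheory

/-- Explicit single-agent exponential utility maximization: for a pricing measure `Q ∼ P`
    with density `Z` and finite relative entropy `H(Q,P) = E_P[Z ln Z]`, the maximal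
    expected exponential utility under the budget constraint `E_Q[Y] ≤ x` equals
    `1 − exp(−αx − H(Q,P))`, attained at `Y* = x + (H(Q,P) − ln Z)/α`. -/
theorem exp_utility_max_entropy_formula
    {Ω : Type*} [MeasurableSpace Ω] (P : Measure Ω) [IsProbabilityMeasure P]
    (Z : Ω → ℝ) (hZmeas : Measurable Z) (hZpos : ∀ᵐ ω ∂P, 0 < Z ω)
    (hZint : Integrable Z P) (hZone : ∫ ω, Z ω ∂P = 1)
    (Q : Measure Ω) (hQ : Q = P.withDensity (fun ω => ENNReal.ofReal (Z ω)))
    (hent : Integrable (fun ω => Z ω * Real.log (Z ω)) P)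
    (H : ℝ) (hH : H = ∫ ω, Z ω * Real.log (Z ω) ∂P)
    (α x : ℝ) (hα : 0 < α)
    (Ystar : Ω → ℝ) (hYstar : ∀ ω, Ystar ω = x + (H - Real.log (Z ω)) / α) :
    sSup {r : EReal | ∃ Y : Ω → ℝ, Integrable Y Q ∧ (∫ ω, Y ω ∂Q) ≤ x ∧
        Integrable (fun ω => Real.exp (-(α * Y ω))) P ∧
        r = ((∫ ω, (1 - Real.exp (-(α * Y ω))) ∂P : ℝ) : EReal)} =
      ((1 - Real.exp (-(α * x) - H) : ℝ) : EReal) ∧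
    Integrable Ystar Q ∧
    (∫ ω, Ystar ω ∂Q) = x ∧
    Integrable (fun ω => Real.exp (-(α * Ystar ω))) P ∧
    (∫ ω, (1 - Real.exp (-(α * Ystar ω))) ∂P) = 1 - Real.exp (-(α * x) - H) := by
  have hα' : α ≠ 0 := hα.ne'
  have hZ0 : ∀ᵐ ω ∂P, 0 ≤ Z ω := hZpos.mono fun ω h => h.le
  have hfm : Measurable fun ω => ENNReal.ofReal (Z ω) := hZmeas.ennreal_ofReal
  have hflt : ∀ᵐ ω ∂P, ENNReal.ofReal (Z ω) < ⊤ := ae_of_all _ fun ω => ENNReal.ofReal_lt_top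
  -- transfer of integrability Q → P
  have hIntIff : ∀ g : Ω → ℝ, Integrable g Q ↔ Integrable (fun ω => Z ω * g ω) P := by
    intro g
    rw [hQ, integrable_withDensity_iff hfm hflt]
    exact integrable_congr (hZ0.mono fun ω h => by
      simp [ENNReal.toReal_ofReal h, mul_comm])
  -- transfer of integrals Q → P
  have hInteg : ∀ g : Ω → ℝ, ∫ ω, g ω ∂Q = ∫ ω, Z ω * g ω ∂P := by
    intro g
    have hfeq : (fun ω => ENNReal.ofReal (Z ω)) = fun ω => ((Z ω).toNNReal : ENNReal) := rfl
    rw [hQ, hfeq, integral_withDensity_eq_integral_smul₀ hZmeas.real_toNNReal.aemeasurable]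
    refine integral_congr_ae (hZ0.mono fun ω h => ?_)
    simp [NNReal.smul_def, Real.coe_toNNReal _ h]
  -- Ystar weighted by Z
  have hZYstar : (fun ω => Z ω * Ystar ω) =
      fun ω => (x + H / α) * Z ω - (1 / α) * (Z ω * Real.log (Z ω)) := by
    funext ω; rw [hYstar ω]; field_simp; ring
  have hYstarIntP : Integrable (fun ω => Z ω * Ystar ω) P := by
    rw [hZYstar]; exact (hZint.const_mul _).sub (hent.const_mul _)
  have hYstarQ : Integrable Ystar Q := (hIntIff Ystar).2 hYstarIntP
  have hEYstar : ∫ ω, Ystar ω ∂Q = x := by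
    rw [hInteg Ystar]
    rw [show (∫ ω, Z ω * Ystar ω ∂P) =
        ∫ ω, ((x + H / α) * Z ω - (1 / α) * (Z ω * Real.log (Z ω))) ∂P by
      exact integral_congr_ae (ae_of_all _ fun ω => by rw [hZYstar])]
    have hA : Integrable (fun ω => (x + H / α) * Z ω) P := hZint.const_mul _
    have hB : Integrable (fun ω => (1 / α) * (Z ω * Real.log (Z ω))) P := hent.const_mul _
    rw [integral_sub hA hB, integral_const_mul, integral_const_mul, hZone, ← hH]
    field_simp
    ring
  -- exp(-α Ystar) = c * Z a.e.
  set c := Real.exp (-(α * x) - H) with hc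
  have hexpYstar : ∀ᵐ ω ∂P, Real.exp (-(α * Ystar ω)) = c * Z ω := by
    filter_upwards [hZpos] with ω hω
    have h1 : -(α * Ystar ω) = (-(α * x) - H) + Real.log (Z ω) := by
      rw [hYstar ω]; field_simp; ring
    rw [h1, Real.exp_add, Real.exp_log hω]
  have hexpint : Integrable (fun ω => Real.exp (-(α * Ystar ω))) P :=
    (hZint.const_mul c).congr (hexpYstar.mono fun ω h => h.symm)
  have hIexp : ∫ ω, Real.exp (-(α * Ystar ω)) ∂P = c := by
    rw [integral_congr_ae hexpYstar, integral_const_mul, hZone, mul_one]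
  have hIval : (∫ ω, (1 - Real.exp (-(α * Ystar ω))) ∂P) = 1 - c := by
    rw [integral_sub (integrable_const 1) hexpint, hIexp]
    simp
  -- upper bound for arbitrary admissible Y
  have hub : ∀ Y : Ω → ℝ, Integrable Y Q → (∫ ω, Y ω ∂Q) ≤ x →
      Integrable (fun ω => Real.exp (-(α * Y ω))) P →
      (∫ ω, (1 - Real.exp (-(α * Y ω))) ∂P) ≤ 1 - c := by
    intro Y hYQ hYx hYexp
    have hZY : Integrable (fun ω => Z ω * Y ω) P := (hIntIff Y).1 hYQ
    have hZYx : ∫ ω, Z ω * Y ω ∂P ≤ x := by rw [← hInteg Y]; exact hYx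
    have he : (fun ω => c * (Z ω * (1 + (-(α * Y ω)) - (Real.log (Z ω) - α * x - H)))) =
        fun ω => (c * (1 + α * x + H)) * Z ω - (c * α) * (Z ω * Y ω)
          - c * (Z ω * Real.log (Z ω)) := by
      funext ω; ring
    have hgint : Integrable
        (fun ω => c * (Z ω * (1 + (-(α * Y ω)) - (Real.log (Z ω) - α * x - H)))) P := by
      rw [he]; exact ((hZint.const_mul _).sub (hZY.const_mul _)).sub (hent.const_mul _)
    have hpt : ∀ᵐ ω ∂P,
        c * (Z ω * (1 + (-(α * Y ω)) - (Real.log (Z ω) - α * x - H)))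
          ≤ Real.exp (-(α * Y ω)) := by
      filter_upwards [hZpos] with ω hω
      have key : ∀ s t : ℝ, Real.exp s * (1 + t - s) ≤ Real.exp t := by
        intro s t
        have h1 : (t - s) + 1 ≤ Real.exp (t - s) := Real.add_one_le_exp _
        calc Real.exp s * (1 + t - s) = Real.exp s * ((t - s) + 1) := by ring
          _ ≤ Real.exp s * Real.exp (t - s) :=
              mul_le_mul_of_nonneg_left h1 (Real.exp_pos s).le
          _ = Real.exp t := by rw [← Real.exp_add]; ring_nf
      calc c * (Z ω * (1 + (-(α * Y ω)) - (Real.log (Z ω) - α * x - H)))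
          = Real.exp (Real.log (Z ω) - α * x - H) *
              (1 + (-(α * Y ω)) - (Real.log (Z ω) - α * x - H)) := by
            rw [show Real.log (Z ω) - α * x - H = (-(α * x) - H) + Real.log (Z ω) by ring,
              Real.exp_add, Real.exp_log hω]; ring
        _ ≤ Real.exp (-(α * Y ω)) := key _ _
    have hle : ∫ ω, c * (Z ω * (1 + (-(α * Y ω)) - (Real.log (Z ω) - α * x - H))) ∂P
        ≤ ∫ ω, Real.exp (-(α * Y ω)) ∂P := integral_mono_ae hgint hYexp hpt
    have hval : ∫ ω, c * (Z ω * (1 + (-(α * Y ω)) - (Real.log (Z ω) - α * x - H))) ∂P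
        = c * (1 + α * x - α * ∫ ω, Z ω * Y ω ∂P) := by
      rw [show (∫ ω, c * (Z ω * (1 + (-(α * Y ω)) - (Real.log (Z ω) - α * x - H))) ∂P)
          = ∫ ω, ((c * (1 + α * x + H)) * Z ω - (c * α) * (Z ω * Y ω)
            - c * (Z ω * Real.log (Z ω))) ∂P by
        exact integral_congr_ae (ae_of_all _ fun ω => by rw [he])]
      have hA : Integrable (fun ω => (c * (1 + α * x + H)) * Z ω) P := hZint.const_mul _
      have hB : Integrable (fun ω => (c * α) * (Z ω * Y ω)) P := hZY.const_mul _
      have hC : Integrable (fun ω => c * (Z ω * Real.log (Z ω))) P := hent.const_mul _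
      have hAB : Integrable (fun ω => (c * (1 + α * x + H)) * Z ω - (c * α) * (Z ω * Y ω)) P :=
        hA.sub hB
      rw [integral_sub hAB hC, integral_sub hA hB,
        integral_const_mul, integral_const_mul, integral_const_mul, hZone, ← hH]
      ring
    have hcle : c ≤ ∫ ω, Real.exp (-(α * Y ω)) ∂P := by
      refine le_trans ?_ hle
      rw [hval]
      have : c * (1 + α * x - α * x) ≤ c * (1 + α * x - α * ∫ ω, Z ω * Y ω ∂P) := by
        apply mul_le_mul_of_nonneg_left _ (Real.exp_pos _).le
        have := mul_le_mul_of_nonneg_left hZYx hα.le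
        linarith
      simpa using this
    have : (∫ ω, (1 - Real.exp (-(α * Y ω))) ∂P)
        = 1 - ∫ ω, Real.exp (-(α * Y ω)) ∂P := by
      rw [integral_sub (integrable_const 1) hYexp]; simp
    rw [this]; linarith
  refine ⟨?_, hYstarQ, hEYstar, hexpint, hIval⟩
  apply le_antisymm
  · apply sSup_le
    rintro r ⟨Y, h1, h2, h3, rfl⟩
    exact_mod_cast hub Y h1 h2 h3
  · exact le_sSup ⟨Ystar, hYstarQ, le_of_eq hEYstar, hexpint, by rw [hIval]⟩
end

section
/- Let v : (0,∞) → ℝ be convex and differentiable, and let Z be a random variable on (Ω, 𝓕, P) with Z > 0 P-a.s. and E_P[Z] = 1 such that ω ↦ v(λ·Z(ω)) is P-integrable for every λ > 0. Then ω ↦ Z(ω)·v'(λ·Z(ω)) is P-integrable for every λ > 0. -/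
open MeasureTheory

/-- Lemma A.1, item 1: if `v` is convex and differentiable on `(0,∞)`, `Z > 0` a.s. is
    the density of a probability measure equivalent to `P` and `v(λZ) ∈ L¹(P)` for all
    `λ > 0`, then `Z · v'(λZ) ∈ L¹(P)` for all `λ > 0`. -/
theorem density_times_deriv_integrable
    {Ω : Type*} [MeasurableSpace Ω] (P : Measure Ω) [IsProbabilityMeasure P]
    (v : ℝ → ℝ)
    (hconv : ConvexOn ℝ (Set.Ioi 0) v)
    (hdiff : ∀ y : ℝ, 0 < y → DifferentiableAt ℝ v y)
    (Z : Ω → ℝ) (hZmeas : Measurable Z) (hZpos : ∀ᵐ ω ∂P, 0 < Z ω)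
    (hZint : Integrable Z P) (hZone : ∫ ω, Z ω ∂P = 1)
    (hvZ : ∀ lam : ℝ, 0 < lam → Integrable (fun ω => v (lam * Z ω)) P) :
    ∀ lam : ℝ, 0 < lam → Integrable (fun ω => Z ω * deriv v (lam * Z ω)) P := by
  intro lam hlam
  have hg : Integrable (fun ω =>
      lam⁻¹ * (|v (2 * lam * Z ω) - v (lam * Z ω)|
        + 2 * |v (lam * Z ω) - v (lam / 2 * Z ω)|)) P := by
    have h1 := hvZ (2 * lam) (by linarith)
    have h2 := hvZ lam hlam
    have h3 := hvZ (lam / 2) (by linarith)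
    exact ((h1.sub h2).abs.add ((h2.sub h3).abs.const_mul 2)).const_mul lam⁻¹
  refine hg.mono ?_ ?_
  · exact (hZmeas.mul ((measurable_deriv v).comp
      ((measurable_const_mul lam).comp hZmeas))).aestronglyMeasurable
  · filter_upwards [hZpos] with ω hω
    set x := lam * Z ω with hx
    have hxpos : 0 < x := mul_pos hlam hω
    have hxmem : x ∈ Set.Ioi (0:ℝ) := hxpos
    have h2x : (2 * x) ∈ Set.Ioi (0:ℝ) := by simp only [Set.mem_Ioi]; linarith
    have hhx : (x / 2) ∈ Set.Ioi (0:ℝ) := by simp only [Set.mem_Ioi]; linarith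
    have hub : x * deriv v x ≤ v (2 * x) - v x := by
      have h := hconv.deriv_le_slope hxmem h2x (by linarith) (hdiff x hxpos)
      rw [slope_def_field, le_div_iff₀ (by linarith : (0:ℝ) < 2 * x - x)] at h
      nlinarith [h]
    have hlb : 2 * (v x - v (x / 2)) ≤ x * deriv v x := by
      have h := hconv.slope_le_deriv hhx hxmem (by linarith) (hdiff x hxpos)
      rw [slope_def_field, div_le_iff₀ (by linarith : (0:ℝ) < x - x / 2)] at h
      nlinarith [h]
    have habs : |x * deriv v x| ≤ |v (2 * x) - v x| + 2 * |v x - v (x / 2)| := by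
      rcases abs_cases (x * deriv v x) with ⟨h, _⟩ | ⟨h, _⟩ <;> rw [h]
      · have h1 := le_abs_self (v (2 * x) - v x)
        have h2 := abs_nonneg (v x - v (x / 2))
        linarith
      · have h1 := neg_abs_le (v x - v (x / 2))
        have h2 := abs_nonneg (v (2 * x) - v x)
        linarith
    have heq : Z ω * deriv v (lam * Z ω) = lam⁻¹ * (x * deriv v x) := by
      rw [hx]; field_simp
    have e1 : 2 * lam * Z ω = 2 * x := by rw [hx]; ring
    have e2 : lam / 2 * Z ω = x / 2 := by rw [hx]; ring
    rw [Real.norm_eq_abs, Real.norm_eq_abs, heq, abs_mul,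
      abs_of_pos (inv_pos.mpr hlam), e1, e2]
    exact (mul_le_mul_of_nonneg_left habs (inv_pos.mpr hlam).le).trans (le_abs_self _)
end

section
/- Let v : (0,∞) → ℝ be strictly convex and differentiable with lim_{y→0+} v'(y) = −∞ and lim_{y→+∞} v'(y) = +∞, and let Z be a random variable on (Ω, 𝓕, P) with Z > 0 P-a.s. and E_P[Z] = 1 such that ω ↦ v(λ·Z(ω)) is P-integrable for every λ > 0. Then F(γ) := E_P[Z·v'(γ·Z)] is well defined for every γ > 0 and defines a strictly increasing bijection from (0,∞) onto ℝ. -/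
open MeasureTheory Filter Set

private lemma slope_bds {v : ℝ → ℝ} (hconv : StrictConvexOn ℝ (Set.Ioi 0) v)
    (hdiff : ∀ y : ℝ, 0 < y → DifferentiableAt ℝ v y)
    {x y : ℝ} (hx : 0 < x) (hxy : x < y) :
    deriv v x * (y - x) ≤ v y - v x ∧ v y - v x ≤ deriv v y * (y - x) := by
  have hy : 0 < y := hx.trans hxy
  have h1 := hconv.convexOn.deriv_le_slope (mem_Ioi.2 hx) (mem_Ioi.2 hy) hxy (hdiff x hx)
  have h2 := hconv.convexOn.slope_le_deriv (mem_Ioi.2 hx) (mem_Ioi.2 hy) hxy (hdiff y hy)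
  rw [slope_def_field] at h1 h2
  have hd : (0:ℝ) < y - x := sub_pos.2 hxy
  constructor
  · calc deriv v x * (y - x) ≤ (v y - v x) / (y - x) * (y - x) := by
          exact mul_le_mul_of_nonneg_right h1 hd.le
      _ = v y - v x := div_mul_cancel₀ _ hd.ne'
  · calc v y - v x = (v y - v x) / (y - x) * (y - x) := (div_mul_cancel₀ _ hd.ne').symm
      _ ≤ deriv v y * (y - x) := mul_le_mul_of_nonneg_right h2 hd.le

private lemma integ_aux {Ω : Type*} [MeasurableSpace Ω] (P : Measure Ω) [IsProbabilityMeasure P]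
    {v : ℝ → ℝ} (hconv : StrictConvexOn ℝ (Set.Ioi 0) v)
    (hdiff : ∀ y : ℝ, 0 < y → DifferentiableAt ℝ v y)
    {Z : Ω → ℝ} (hZmeas : Measurable Z) (hZpos : ∀ᵐ ω ∂P, 0 < Z ω)
    (hvZ : ∀ lam : ℝ, 0 < lam → Integrable (fun ω => v (lam * Z ω)) P)
    {γ : ℝ} (hγ : 0 < γ) :
    Integrable (fun ω => Z ω * deriv v (γ * Z ω)) P := by
  have hmeas : AEStronglyMeasurable (fun ω => Z ω * deriv v (γ * Z ω)) P :=
    (hZmeas.mul ((measurable_deriv v).comp (hZmeas.const_mul γ))).aestronglyMeasurable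
  have hg : Integrable (fun ω =>
      γ⁻¹ * (|v (2*γ*Z ω) - v (γ*Z ω)| + 2 * |v (γ*Z ω) - v (γ/2*Z ω)|)) P := by
    refine Integrable.const_mul (Integrable.add ?_ (Integrable.const_mul ?_ 2)) _
    · exact ((hvZ _ (by positivity)).sub (hvZ _ hγ)).abs
    · exact ((hvZ _ hγ).sub (hvZ _ (by positivity))).abs
  refine hg.mono' hmeas ?_
  filter_upwards [hZpos] with ω hz
  set z := Z ω
  have hγz : 0 < γ * z := by positivity
  have h1 := (slope_bds hconv hdiff hγz (show γ*z < 2*γ*z by nlinarith)).1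
  have h2 := (slope_bds hconv hdiff (show (0:ℝ) < γ/2*z by positivity)
      (show γ/2*z < γ*z by nlinarith)).2
  rw [Real.norm_eq_abs]
  have h3 : |γ * (z * deriv v (γ * z))| ≤ |v (2*γ*z) - v (γ*z)| + 2 * |v (γ*z) - v (γ/2*z)| :=
    abs_le.2 ⟨by nlinarith [abs_nonneg (v (2*γ*z) - v (γ*z)), neg_abs_le (v (γ*z) - v (γ/2*z))],
      by nlinarith [le_abs_self (v (2*γ*z) - v (γ*z)), abs_nonneg (v (γ*z) - v (γ/2*z))]⟩
  rw [abs_mul, abs_of_pos hγ] at h3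
  rw [le_inv_mul_iff₀ hγ]
  exact h3

private lemma quot_bds {v : ℝ → ℝ} (hconv : StrictConvexOn ℝ (Set.Ioi 0) v)
    (hdiff : ∀ y : ℝ, 0 < y → DifferentiableAt ℝ v y)
    {γ z h : ℝ} (hγ : 0 < γ) (hz : 0 < z) (hne : h ≠ 0) (hlo : -(γ/2) < h) (hhi : h < γ) :
    z * deriv v (γ/2 * z) ≤ (v ((γ+h)*z) - v (γ*z)) / h ∧
      (v ((γ+h)*z) - v (γ*z)) / h ≤ z * deriv v (2*γ*z) := by
  have hmono : MonotoneOn (deriv v) (Set.Ioi 0) :=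
    (hconv.strictMonoOn_deriv (fun x hx => hdiff x hx)).monotoneOn
  have hγz : 0 < γ * z := by positivity
  have hγ2z : (0:ℝ) < γ/2 * z := by positivity
  have h2γz : (0:ℝ) < 2*γ*z := by nlinarith
  rcases hne.lt_or_gt with hneg | hpos
  · -- h < 0 : x = (γ+h) z < y = γ z
    have hx : (0:ℝ) < (γ+h)*z := by nlinarith
    have hxy : (γ+h)*z < γ*z := by nlinarith
    have hb := slope_bds hconv hdiff hx hxy
    have hyx : γ*z - (γ+h)*z = -h * z := by ring
    rw [hyx] at hb
    have hnh : (0:ℝ) < -h := by linarith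
    have key : (v ((γ+h)*z) - v (γ*z)) / h = (v (γ*z) - v ((γ+h)*z)) / (-h) := by
      field_simp
      ring
    rw [key]
    constructor
    · rw [le_div_iff₀ hnh]
      calc z * deriv v (γ/2*z) * -h = deriv v (γ/2*z) * (-h * z) := by ring
        _ ≤ deriv v ((γ+h)*z) * (-h*z) := by
            apply mul_le_mul_of_nonneg_right _ (by positivity)
            exact hmono hγ2z hx (by nlinarith)
        _ ≤ v (γ*z) - v ((γ+h)*z) := hb.1
    · rw [div_le_iff₀ hnh]
      calc v (γ*z) - v ((γ+h)*z) ≤ deriv v (γ*z) * (-h*z) := hb.2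
        _ ≤ deriv v (2*γ*z) * (-h*z) := by
            apply mul_le_mul_of_nonneg_right _ (by positivity)
            exact hmono hγz h2γz (by nlinarith)
        _ = z * deriv v (2*γ*z) * -h := by ring
  · -- 0 < h : x = γ z < y = (γ+h) z
    have hy : (0:ℝ) < (γ+h)*z := by nlinarith
    have hxy : γ*z < (γ+h)*z := by nlinarith
    have hb := slope_bds hconv hdiff hγz hxy
    have hyx : (γ+h)*z - γ*z = h * z := by ring
    rw [hyx] at hb
    constructor
    · rw [le_div_iff₀ hpos]
      calc z * deriv v (γ/2*z) * h = deriv v (γ/2*z) * (h*z) := by ring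
        _ ≤ deriv v (γ*z) * (h*z) := by
            apply mul_le_mul_of_nonneg_right _ (by positivity)
            exact hmono hγ2z hγz (by nlinarith)
        _ ≤ v ((γ+h)*z) - v (γ*z) := hb.1
    · rw [div_le_iff₀ hpos]
      calc v ((γ+h)*z) - v (γ*z) ≤ deriv v ((γ+h)*z) * (h*z) := hb.2
        _ ≤ deriv v (2*γ*z) * (h*z) := by
            apply mul_le_mul_of_nonneg_right _ (by positivity)
            exact hmono hy h2γz (by nlinarith)
        _ = z * deriv v (2*γ*z) * h := by ring

private lemma quot_tendsto {v : ℝ → ℝ}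
    (hdiff : ∀ y : ℝ, 0 < y → DifferentiableAt ℝ v y)
    {γ z : ℝ} (hγ : 0 < γ) (hz : 0 < z) :
    Tendsto (fun h : ℝ => (v ((γ+h)*z) - v (γ*z)) / h) (nhdsWithin 0 {(0:ℝ)}ᶜ)
      (nhds (z * deriv v (γ*z))) := by
  have hγz : 0 < γ * z := by positivity
  have hd : HasDerivAt v (deriv v (γ*z)) (γ*z) := (hdiff _ hγz).hasDerivAt
  have hslope := hasDerivAt_iff_tendsto_slope.1 hd
  have hφ : Tendsto (fun h : ℝ => γ*z + h*z) (nhdsWithin 0 {(0:ℝ)}ᶜ)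
      (nhdsWithin (γ*z) {(γ*z)}ᶜ) := by
    rw [tendsto_nhdsWithin_iff]
    constructor
    · have : Tendsto (fun h : ℝ => γ*z + h*z) (nhds 0) (nhds (γ*z + 0*z)) :=
        (continuous_const.add (continuous_id.mul continuous_const)).tendsto 0
      simpa using this.mono_left nhdsWithin_le_nhds
    · filter_upwards [self_mem_nhdsWithin] with h (hh : h ∈ ({(0:ℝ)}ᶜ : Set ℝ))
      simp only [mem_compl_iff, mem_singleton_iff] at hh ⊢
      intro hc
      have hz0 : h * z = 0 := by linarith
      rcases mul_eq_zero.1 hz0 with h0 | h0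
      · exact hh h0
      · exact absurd h0 hz.ne'
  have := (hslope.comp hφ).const_mul z
  refine this.congr' ?_
  filter_upwards [self_mem_nhdsWithin] with h (hh : h ∈ ({(0:ℝ)}ᶜ : Set ℝ))
  simp only [mem_compl_iff, mem_singleton_iff] at hh
  show z * slope v (γ*z) (γ*z + h*z) = _
  rw [slope_def_field]
  rw [show (γ + h) * z = γ * z + h * z by ring, show γ * z + h * z - γ * z = h * z by ring]
  field_simp

private lemma s_tendsto {Ω : Type*} [MeasurableSpace Ω] (P : Measure Ω) [IsProbabilityMeasure P]
    {v : ℝ → ℝ} (hconv : StrictConvexOn ℝ (Set.Ioi 0) v)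
    (hdiff : ∀ y : ℝ, 0 < y → DifferentiableAt ℝ v y)
    {Z : Ω → ℝ} (hZmeas : Measurable Z) (hZpos : ∀ᵐ ω ∂P, 0 < Z ω)
    (hvZ : ∀ lam : ℝ, 0 < lam → Integrable (fun ω => v (lam * Z ω)) P)
    {γ : ℝ} (hγ : 0 < γ) :
    Tendsto (fun h : ℝ => ∫ ω, (v ((γ+h) * Z ω) - v (γ * Z ω)) / h ∂P)
      (nhdsWithin 0 {(0:ℝ)}ᶜ) (nhds (∫ ω, Z ω * deriv v (γ * Z ω) ∂P)) := by
  have hev : ∀ᶠ h in nhdsWithin (0:ℝ) {(0:ℝ)}ᶜ, h ∈ Ioo (-(γ/2)) γ ∧ h ≠ 0 := by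
    have h1 : Ioo (-(γ/2)) γ ∈ nhdsWithin (0:ℝ) {(0:ℝ)}ᶜ :=
      mem_nhdsWithin_of_mem_nhds (Ioo_mem_nhds (by linarith) hγ)
    filter_upwards [h1, self_mem_nhdsWithin] with h hh hne
    exact ⟨hh, hne⟩
  refine tendsto_integral_filter_of_dominated_convergence
    (fun ω => |Z ω * deriv v (γ/2 * Z ω)| + |Z ω * deriv v (2*γ * Z ω)|) ?_ ?_ ?_ ?_
  · filter_upwards [hev] with h ⟨hh, hne⟩
    have hpos : 0 < γ + h := by rcases hh with ⟨h1, h2⟩; linarith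
    exact (((hvZ _ hpos).sub (hvZ _ hγ)).div_const h).aestronglyMeasurable
  · filter_upwards [hev] with h ⟨hh, hne⟩
    filter_upwards [hZpos] with ω hz
    have hb := quot_bds hconv hdiff hγ hz hne hh.1 hh.2
    rw [Real.norm_eq_abs, abs_le]
    constructor
    · have := hb.1
      have h1 : -|Z ω * deriv v (γ/2 * Z ω)| ≤ Z ω * deriv v (γ/2 * Z ω) := neg_abs_le _
      have h2 : (0:ℝ) ≤ |Z ω * deriv v (2*γ * Z ω)| := abs_nonneg _
      linarith
    · have := hb.2
      have h1 : Z ω * deriv v (2*γ * Z ω) ≤ |Z ω * deriv v (2*γ * Z ω)| := le_abs_self _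
      have h2 : (0:ℝ) ≤ |Z ω * deriv v (γ/2 * Z ω)| := abs_nonneg _
      linarith
  · exact ((integ_aux P hconv hdiff hZmeas hZpos hvZ (by positivity)).abs).add
      ((integ_aux P hconv hdiff hZmeas hZpos hvZ (by positivity)).abs)
  · filter_upwards [hZpos] with ω hz
    exact quot_tendsto hdiff hγ hz

private lemma F_cont {Ω : Type*} [MeasurableSpace Ω] (P : Measure Ω) [IsProbabilityMeasure P]
    {v : ℝ → ℝ} (hconv : StrictConvexOn ℝ (Set.Ioi 0) v)
    (hdiff : ∀ y : ℝ, 0 < y → DifferentiableAt ℝ v y)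
    {Z : Ω → ℝ} (hZmeas : Measurable Z) (hZpos : ∀ᵐ ω ∂P, 0 < Z ω)
    (hvZ : ∀ lam : ℝ, 0 < lam → Integrable (fun ω => v (lam * Z ω)) P)
    {F : ℝ → ℝ} (hF : ∀ γ : ℝ, F γ = ∫ ω, Z ω * deriv v (γ * Z ω) ∂P)
    (hFmono : MonotoneOn F (Set.Ioi 0))
    {γ : ℝ} (hγ : 0 < γ) : ContinuousAt F γ := by
  set s : ℝ → ℝ := fun h => ∫ ω, (v ((γ+h) * Z ω) - v (γ * Z ω)) / h ∂P with hs
  have hS : Tendsto s (nhdsWithin 0 {(0:ℝ)}ᶜ) (nhds (F γ)) := by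
    rw [hF]; exact s_tendsto P hconv hdiff hZmeas hZpos hvZ hγ
  have hq_int : ∀ t : ℝ, 0 < γ + t →
      Integrable (fun ω => (v ((γ+t) * Z ω) - v (γ * Z ω)) / t) P :=
    fun t ht => ((hvZ _ ht).sub (hvZ _ hγ)).div_const t
  -- identity : for h ≠ 0, 0 < γ + a, 0 < γ + b with a b arbitrary:
  have hid : ∀ a b : ℝ, a ≠ 0 → b ≠ 0 → 0 < γ + a → 0 < γ + b →
      ∫ ω, (2 * ((v ((γ+a) * Z ω) - v (γ * Z ω)) / a) -
            (v ((γ+b) * Z ω) - v (γ * Z ω)) / b) ∂P = 2 * s a - s b := by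
    intro a b ha hb hpa hpb
    rw [integral_sub ((hq_int a hpa).const_mul 2) (hq_int b hpb), integral_const_mul]
  have hl : nhdsWithin (0:ℝ) (Ioi 0) ≤ nhdsWithin 0 {(0:ℝ)}ᶜ :=
    nhdsWithin_mono 0 (fun x hx => ne_of_gt hx)
  have h2map : Tendsto (fun h : ℝ => 2*h) (nhdsWithin 0 (Ioi 0)) (nhdsWithin 0 (Ioi 0)) := by
    rw [tendsto_nhdsWithin_iff]
    refine ⟨?_, ?_⟩
    · have : Tendsto (fun h : ℝ => 2*h) (nhds 0) (nhds (2*0)) :=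
        (continuous_const.mul continuous_id).tendsto 0
      simpa using this.mono_left nhdsWithin_le_nhds
    · filter_upwards [self_mem_nhdsWithin] with h (hh : h ∈ Ioi (0:ℝ))
      exact mul_pos two_pos (mem_Ioi.1 hh)
  have hnegmap : Tendsto (fun h : ℝ => -h) (nhdsWithin 0 (Ioi 0)) (nhdsWithin 0 {(0:ℝ)}ᶜ) := by
    rw [tendsto_nhdsWithin_iff]
    refine ⟨?_, ?_⟩
    · simpa using (continuous_neg.tendsto (0:ℝ)).mono_left (nhdsWithin_le_nhds (s := Ioi 0))
    · filter_upwards [self_mem_nhdsWithin] with h (hh : h ∈ Ioi (0:ℝ))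
      exact (neg_ne_zero.2 (ne_of_gt hh))
  have hs1 : Tendsto s (nhdsWithin 0 (Ioi 0)) (nhds (F γ)) := hS.mono_left hl
  have hs2 : Tendsto (fun h => s (2*h)) (nhdsWithin 0 (Ioi 0)) (nhds (F γ)) :=
    hS.comp (h2map.mono_right hl)
  have hsneg : Tendsto (fun h => s (-h)) (nhdsWithin 0 (Ioi 0)) (nhds (F γ)) :=
    hS.comp hnegmap
  have hsneg2 : Tendsto (fun h => s (-(2*h))) (nhdsWithin 0 (Ioi 0)) (nhds (F γ)) :=
    (hS.comp hnegmap).comp h2map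
  have hev : ∀ᶠ h in nhdsWithin (0:ℝ) (Ioi 0), h ∈ Ioo 0 (γ/4) :=
    Ioo_mem_nhdsGT_of_mem ⟨le_rfl, by linarith⟩
  -- upper bound for right limit
  have hub : ∀ h : ℝ, h ∈ Ioo 0 (γ/4) → F (γ + h) ≤ 2 * s (2*h) - s h := by
    intro h ⟨hh0, hh4⟩
    have hp1 : 0 < γ + h := by linarith
    have hp2 : 0 < γ + 2*h := by linarith
    have key : F (γ + h) ≤ ∫ ω, (2 * ((v ((γ+2*h) * Z ω) - v (γ * Z ω)) / (2*h)) -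
        (v ((γ+h) * Z ω) - v (γ * Z ω)) / h) ∂P := by
      rw [hF]
      refine integral_mono_ae (integ_aux P hconv hdiff hZmeas hZpos hvZ hp1)
        (((hq_int _ hp2).const_mul 2).sub (hq_int _ hp1)) ?_
      filter_upwards [hZpos] with ω hz
      set z := Z ω
      have hx : 0 < (γ+h)*z := by positivity
      have hxy : (γ+h)*z < (γ+2*h)*z := by nlinarith
      have hb := (slope_bds hconv hdiff hx hxy).1
      have hyx : (γ+2*h)*z - (γ+h)*z = h * z := by ring
      rw [hyx] at hb
      have : 2 * ((v ((γ+2*h) * z) - v (γ * z)) / (2*h)) -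
          (v ((γ+h) * z) - v (γ * z)) / h = (v ((γ+2*h)*z) - v ((γ+h)*z)) / h := by
        field_simp
        ring
      rw [this, le_div_iff₀ hh0]
      calc z * deriv v ((γ+h) * z) * h = deriv v ((γ+h)*z) * (h*z) := by ring
        _ ≤ v ((γ+2*h)*z) - v ((γ+h)*z) := hb
    calc F (γ + h) ≤ _ := key
      _ = 2 * s (2*h) - s h := hid (2*h) h (by linarith) (ne_of_gt hh0) hp2 hp1
  -- lower bound for left limit
  have hlb : ∀ h : ℝ, h ∈ Ioo 0 (γ/4) → 2 * s (-(2*h)) - s (-h) ≤ F (γ - h) := by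
    intro h ⟨hh0, hh4⟩
    have hp1 : 0 < γ + -h := by linarith
    have hp2 : 0 < γ + -(2*h) := by linarith
    have key : ∫ ω, (2 * ((v ((γ+ -(2*h)) * Z ω) - v (γ * Z ω)) / (-(2*h))) -
        (v ((γ+ -h) * Z ω) - v (γ * Z ω)) / (-h)) ∂P ≤ F (γ - h) := by
      have hgeq : F (γ - h) = ∫ ω, Z ω * deriv v ((γ + -h) * Z ω) ∂P := by
        rw [hF, sub_eq_add_neg]
      rw [hgeq]
      refine integral_mono_ae (((hq_int _ hp2).const_mul 2).sub (hq_int _ hp1))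
        (integ_aux P hconv hdiff hZmeas hZpos hvZ hp1) ?_
      filter_upwards [hZpos] with ω hz
      set z := Z ω
      have hx : 0 < (γ + -(2*h))*z := by positivity
      have hxy : (γ + -(2*h))*z < (γ + -h)*z := by nlinarith
      have hb := (slope_bds hconv hdiff hx hxy).2
      have hyx : (γ + -h)*z - (γ + -(2*h))*z = h * z := by ring
      rw [hyx] at hb
      have : 2 * ((v ((γ+ -(2*h)) * z) - v (γ * z)) / (-(2*h))) -
          (v ((γ+ -h) * z) - v (γ * z)) / (-h) =
          (v ((γ+ -h)*z) - v ((γ+ -(2*h))*z)) / h := by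
        field_simp
        ring
      rw [this, div_le_iff₀ hh0]
      calc v ((γ+ -h)*z) - v ((γ+ -(2*h))*z) ≤ deriv v ((γ+ -h) * z) * (h*z) := hb
        _ = z * deriv v ((γ+ -h)*z) * h := by ring
    calc 2 * s (-(2*h)) - s (-h)
        = _ := (hid (-(2*h)) (-h) (by simp; linarith) (by simp; linarith) hp2 hp1).symm
      _ ≤ F (γ - h) := key
  -- right continuity
  have hright : Tendsto F (nhdsWithin γ (Ioi γ)) (nhds (F γ)) := by
    have hupper : Tendsto (fun h => 2 * s (2*h) - s h) (nhdsWithin 0 (Ioi 0)) (nhds (2 * F γ - F γ)) :=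
      (hs2.const_mul 2).sub hs1
    rw [show 2 * F γ - F γ = F γ by ring] at hupper
    have htr : Tendsto (fun h => F (γ + h)) (nhdsWithin 0 (Ioi 0)) (nhds (F γ)) := by
      refine tendsto_of_tendsto_of_tendsto_of_le_of_le' tendsto_const_nhds hupper ?_ ?_
      · filter_upwards [self_mem_nhdsWithin] with h (hh : h ∈ Ioi (0:ℝ))
        exact hFmono (mem_Ioi.2 hγ) (mem_Ioi.2 (by simp at hh; linarith)) (by linarith [mem_Ioi.1 hh])
      · filter_upwards [hev] with h hh
        exact hub h hh
    have hmap : Tendsto (fun x : ℝ => x - γ) (nhdsWithin γ (Ioi γ)) (nhdsWithin 0 (Ioi 0)) := by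
      rw [tendsto_nhdsWithin_iff]
      refine ⟨?_, ?_⟩
      · have h0 : Tendsto (fun x : ℝ => x - γ) (nhds γ) (nhds (γ - γ)) :=
          (continuous_id.sub continuous_const).tendsto γ
        rw [sub_self] at h0
        exact h0.mono_left nhdsWithin_le_nhds
      · filter_upwards [self_mem_nhdsWithin] with x (hx : x ∈ Ioi γ)
        simpa using sub_pos.2 (mem_Ioi.1 hx)
    exact (htr.comp hmap).congr (fun x => by simp)
  -- left continuity
  have hleft : Tendsto F (nhdsWithin γ (Iio γ)) (nhds (F γ)) := by
    have hlower : Tendsto (fun h => 2 * s (-(2*h)) - s (-h)) (nhdsWithin 0 (Ioi 0))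
        (nhds (2 * F γ - F γ)) := (hsneg2.const_mul 2).sub hsneg
    rw [show 2 * F γ - F γ = F γ by ring] at hlower
    have htr : Tendsto (fun h => F (γ - h)) (nhdsWithin 0 (Ioi 0)) (nhds (F γ)) := by
      refine tendsto_of_tendsto_of_tendsto_of_le_of_le' hlower tendsto_const_nhds ?_ ?_
      · filter_upwards [hev] with h hh
        exact hlb h hh
      · filter_upwards [hev] with h hh
        exact hFmono (mem_Ioi.2 (by rcases hh with ⟨h1, h2⟩; simp; linarith))
          (mem_Ioi.2 hγ) (by rcases hh with ⟨h1, h2⟩; linarith)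
    have hmap : Tendsto (fun x : ℝ => γ - x) (nhdsWithin γ (Iio γ)) (nhdsWithin 0 (Ioi 0)) := by
      rw [tendsto_nhdsWithin_iff]
      refine ⟨?_, ?_⟩
      · have h0 : Tendsto (fun x : ℝ => γ - x) (nhds γ) (nhds (γ - γ)) :=
          (continuous_const.sub continuous_id).tendsto γ
        rw [sub_self] at h0
        exact h0.mono_left nhdsWithin_le_nhds
      · filter_upwards [self_mem_nhdsWithin] with x (hx : x ∈ Iio γ)
        simpa using sub_pos.2 (mem_Iio.1 hx)
    exact (htr.comp hmap).congr (fun x => by simp)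
  rw [continuousAt_iff_continuous_left_right]
  exact ⟨continuousWithinAt_Iio_iff_Iic.1 hleft, continuousWithinAt_Ioi_iff_Ici.1 hright⟩

private lemma F_smono {Ω : Type*} [MeasurableSpace Ω] (P : Measure Ω) [IsProbabilityMeasure P]
    {v : ℝ → ℝ} (hconv : StrictConvexOn ℝ (Set.Ioi 0) v)
    (hdiff : ∀ y : ℝ, 0 < y → DifferentiableAt ℝ v y)
    {Z : Ω → ℝ} (hZmeas : Measurable Z) (hZpos : ∀ᵐ ω ∂P, 0 < Z ω)
    (hvZ : ∀ lam : ℝ, 0 < lam → Integrable (fun ω => v (lam * Z ω)) P)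
    {F : ℝ → ℝ} (hF : ∀ γ : ℝ, F γ = ∫ ω, Z ω * deriv v (γ * Z ω) ∂P) :
    StrictMonoOn F (Set.Ioi 0) := by
  intro a ha b hb hab
  rw [mem_Ioi] at ha hb
  have hia := integ_aux P hconv hdiff hZmeas hZpos hvZ ha
  have hib := integ_aux P hconv hdiff hZmeas hZpos hvZ hb
  have hd : ∀ᵐ ω ∂P, 0 < Z ω * deriv v (b * Z ω) - Z ω * deriv v (a * Z ω) := by
    filter_upwards [hZpos] with ω hz
    have hmono := hconv.strictMonoOn_deriv (fun x hx => hdiff x hx)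
    have := hmono (mem_Ioi.2 (mul_pos ha hz)) (mem_Ioi.2 (mul_pos hb hz)) (by nlinarith)
    nlinarith
  have hpos : 0 < ∫ ω, (Z ω * deriv v (b * Z ω) - Z ω * deriv v (a * Z ω)) ∂P := by
    rw [integral_pos_iff_support_of_nonneg_ae (hd.mono fun ω h => h.le) (hib.sub hia)]
    refine pos_iff_ne_zero.2 fun h0 => ?_
    have h1 : ∀ᵐ ω ∂P, ω ∈ Function.support
        (fun ω => Z ω * deriv v (b * Z ω) - Z ω * deriv v (a * Z ω)) :=
      hd.mono fun ω h => ne_of_gt h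
    have h2 : P (Function.support
        (fun ω => Z ω * deriv v (b * Z ω) - Z ω * deriv v (a * Z ω)))ᶜ = 0 := h1
    have h3 := measure_union_le (μ := P) (Function.support
        (fun ω => Z ω * deriv v (b * Z ω) - Z ω * deriv v (a * Z ω)))
        (Function.support (fun ω => Z ω * deriv v (b * Z ω) - Z ω * deriv v (a * Z ω)))ᶜ
    rw [union_compl_self, h0, h2, measure_univ] at h3
    simp at h3
  have : 0 < F b - F a := by
    rw [hF, hF, ← integral_sub hib hia]
    exact hpos
  linarith

private lemma exists_box {Ω : Type*} [MeasurableSpace Ω] (P : Measure Ω) [IsProbabilityMeasure P]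
    {Z : Ω → ℝ} (hZmeas : Measurable Z) (hZpos : ∀ᵐ ω ∂P, 0 < Z ω) :
    ∃ δ M : ℝ, 0 < δ ∧ δ ≤ M ∧ 0 < P ({ω | δ ≤ Z ω} ∩ {ω | Z ω ≤ M}) := by
  by_contra hc
  push_neg at hc
  have h0 : ∀ n : ℕ, P ({ω | 1/(n+1:ℝ) ≤ Z ω} ∩ {ω | Z ω ≤ (n+1:ℝ)}) = 0 := by
    intro n
    have h1 : (0:ℝ) < 1/(n+1:ℝ) := by positivity
    have h2 : 1/(n+1:ℝ) ≤ (n+1:ℝ) := by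
      rw [div_le_iff₀ (by positivity)]
      nlinarith [Nat.cast_nonneg (α := ℝ) n]
    have := hc _ _ h1 h2
    exact le_antisymm this zero_le
  have hU : P (⋃ n : ℕ, ({ω | 1/(n+1:ℝ) ≤ Z ω} ∩ {ω | Z ω ≤ (n+1:ℝ)})) = 0 :=
    measure_iUnion_null_iff.2 h0
  have hsub : {ω | 0 < Z ω} ⊆ ⋃ n : ℕ, ({ω | 1/(n+1:ℝ) ≤ Z ω} ∩ {ω | Z ω ≤ (n+1:ℝ)}) := by
    intro ω hω
    rw [mem_setOf_eq] at hω
    obtain ⟨n, hn⟩ := exists_nat_ge (max (1/Z ω) (Z ω))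
    refine mem_iUnion.2 ⟨n, ?_, ?_⟩
    · have h1 : 1/Z ω ≤ (n:ℝ) := le_trans (le_max_left _ _) hn
      rw [mem_setOf_eq, div_le_iff₀ (by positivity)]
      rw [div_le_iff₀ hω] at h1
      nlinarith
    · have h2 : Z ω ≤ (n:ℝ) := le_trans (le_max_right _ _) hn
      rw [mem_setOf_eq]
      linarith
  have h1 : P {ω | 0 < Z ω} = 0 := measure_mono_null hsub hU
  have h2 : P {ω | 0 < Z ω}ᶜ = 0 := hZpos
  have h3 := measure_union_le (μ := P) {ω | 0 < Z ω} {ω | 0 < Z ω}ᶜ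
  rw [union_compl_self, h1, h2, measure_univ] at h3
  simp at h3

private lemma F_large {Ω : Type*} [MeasurableSpace Ω] (P : Measure Ω) [IsProbabilityMeasure P]
    {v : ℝ → ℝ} (hconv : StrictConvexOn ℝ (Set.Ioi 0) v)
    (hdiff : ∀ y : ℝ, 0 < y → DifferentiableAt ℝ v y)
    (hd_top : Filter.Tendsto (deriv v) Filter.atTop Filter.atTop)
    {Z : Ω → ℝ} (hZmeas : Measurable Z) (hZpos : ∀ᵐ ω ∂P, 0 < Z ω)
    (hvZ : ∀ lam : ℝ, 0 < lam → Integrable (fun ω => v (lam * Z ω)) P)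
    {F : ℝ → ℝ} (hF : ∀ γ : ℝ, F γ = ∫ ω, Z ω * deriv v (γ * Z ω) ∂P)
    (t : ℝ) : ∃ b : ℝ, 0 < b ∧ t < F b := by
  have hmono : MonotoneOn (deriv v) (Set.Ioi 0) :=
    (hconv.strictMonoOn_deriv (fun x hx => hdiff x hx)).monotoneOn
  obtain ⟨δ, M, hδ, hδM, hA⟩ := exists_box P hZmeas hZpos
  set A := ({ω | δ ≤ Z ω} ∩ {ω | Z ω ≤ M}) with hAdef
  have hAmeas : MeasurableSet A :=
    (hZmeas measurableSet_Ici).inter (hZmeas measurableSet_Iic)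
  set c := (P A).toReal with hcdef
  have hc : 0 < c := ENNReal.toReal_pos (ne_of_gt hA) (measure_ne_top P A)
  have hg0 := integ_aux P hconv hdiff hZmeas hZpos hvZ one_pos
  set K := ∫ ω, |Z ω * deriv v (1 * Z ω)| ∂P with hKdef
  set m := max 0 ((t + 1 + K)/(δ * c)) with hmdef
  obtain ⟨R, hR⟩ := eventually_atTop.1 (hd_top.eventually_ge_atTop m)
  set b := max 1 (R/δ) with hbdef
  have hb1 : (1:ℝ) ≤ b := le_max_left _ _
  have hbpos : (0:ℝ) < b := lt_of_lt_of_le one_pos hb1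
  have hbδ : R ≤ b * δ := by
    have := le_max_right 1 (R/δ)
    rw [div_le_iff₀ hδ] at this
    linarith
  refine ⟨b, hbpos, ?_⟩
  have hfb := integ_aux P hconv hdiff hZmeas hZpos hvZ hbpos
  -- lower bound on A
  have hlow1 : δ * m * c ≤ ∫ ω in A, Z ω * deriv v (b * Z ω) ∂P := by
    have := setIntegral_ge_of_const_le (μ := P) (c := δ * m) hAmeas (measure_ne_top P A)
      (fun ω hω => ?_) hfb.integrableOn
    · exact le_trans (le_of_eq (by rw [smul_eq_mul, mul_comm]; rfl)) this
    · obtain ⟨h1, h2⟩ := hω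
      rw [mem_setOf_eq] at h1 h2
      have hz : 0 < Z ω := lt_of_lt_of_le hδ h1
      have hmle : m ≤ deriv v (b * Z ω) := by
        refine hR _ ?_
        calc R ≤ b * δ := hbδ
          _ ≤ b * Z ω := by nlinarith
      have hm0 : (0:ℝ) ≤ m := le_max_left _ _
      exact mul_le_mul h1 hmle hm0 hz.le
  -- lower bound on Aᶜ
  have hlow2 : -K ≤ ∫ ω in Aᶜ, Z ω * deriv v (b * Z ω) ∂P := by
    have step1 : ∫ ω in Aᶜ, -|Z ω * deriv v (1 * Z ω)| ∂P ≤
        ∫ ω in Aᶜ, Z ω * deriv v (b * Z ω) ∂P := by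
      refine setIntegral_mono_ae_restrict (hg0.abs.neg.integrableOn) (hfb.integrableOn) ?_
      refine ae_restrict_of_ae ?_
      filter_upwards [hZpos] with ω hz
      have h1 : deriv v (1 * Z ω) ≤ deriv v (b * Z ω) := by
        apply hmono (mem_Ioi.2 (by nlinarith)) (mem_Ioi.2 (by nlinarith))
        nlinarith
      have h2 : Z ω * deriv v (1 * Z ω) ≤ Z ω * deriv v (b * Z ω) :=
        mul_le_mul_of_nonneg_left h1 hz.le
      calc -|Z ω * deriv v (1 * Z ω)| ≤ Z ω * deriv v (1 * Z ω) := neg_abs_le _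
        _ ≤ _ := h2
    have step2 : -K ≤ ∫ ω in Aᶜ, -|Z ω * deriv v (1 * Z ω)| ∂P := by
      rw [integral_neg, neg_le_neg_iff]
      exact setIntegral_le_integral hg0.abs (Eventually.of_forall fun ω => abs_nonneg _)
    linarith
  have hsplit := integral_add_compl hAmeas hfb
  have hmc : t + 1 + K ≤ δ * m * c := by
    have h1 : (t + 1 + K)/(δ * c) ≤ m := le_max_right _ _
    have h2 : (0:ℝ) < δ * c := mul_pos hδ hc
    calc t + 1 + K = (t + 1 + K)/(δ * c) * (δ * c) := (div_mul_cancel₀ _ (ne_of_gt h2)).symm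
      _ ≤ m * (δ * c) := mul_le_mul_of_nonneg_right h1 h2.le
      _ = δ * m * c := by ring
  rw [hF]
  rw [← hsplit]
  linarith

private lemma F_small {Ω : Type*} [MeasurableSpace Ω] (P : Measure Ω) [IsProbabilityMeasure P]
    {v : ℝ → ℝ} (hconv : StrictConvexOn ℝ (Set.Ioi 0) v)
    (hdiff : ∀ y : ℝ, 0 < y → DifferentiableAt ℝ v y)
    (hd_zero : Filter.Tendsto (deriv v) (nhdsWithin 0 (Set.Ioi 0)) Filter.atBot)
    {Z : Ω → ℝ} (hZmeas : Measurable Z) (hZpos : ∀ᵐ ω ∂P, 0 < Z ω)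
    (hvZ : ∀ lam : ℝ, 0 < lam → Integrable (fun ω => v (lam * Z ω)) P)
    {F : ℝ → ℝ} (hF : ∀ γ : ℝ, F γ = ∫ ω, Z ω * deriv v (γ * Z ω) ∂P)
    (t : ℝ) : ∃ a : ℝ, 0 < a ∧ F a < t := by
  have hmono : MonotoneOn (deriv v) (Set.Ioi 0) :=
    (hconv.strictMonoOn_deriv (fun x hx => hdiff x hx)).monotoneOn
  obtain ⟨δ, M, hδ, hδM, hA⟩ := exists_box P hZmeas hZpos
  have hM : 0 < M := lt_of_lt_of_le hδ hδM
  set A := ({ω | δ ≤ Z ω} ∩ {ω | Z ω ≤ M}) with hAdef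
  have hAmeas : MeasurableSet A :=
    (hZmeas measurableSet_Ici).inter (hZmeas measurableSet_Iic)
  set c := (P A).toReal with hcdef
  have hc : 0 < c := ENNReal.toReal_pos (ne_of_gt hA) (measure_ne_top P A)
  have hg0 := integ_aux P hconv hdiff hZmeas hZpos hvZ one_pos
  set K := ∫ ω, |Z ω * deriv v (1 * Z ω)| ∂P with hKdef
  set m := max 0 ((K + 1 - t)/(δ * c)) with hmdef
  have hm0 : (0:ℝ) ≤ m := le_max_left _ _
  obtain ⟨u, hu, husub⟩ := mem_nhdsGT_iff_exists_Ioo_subset.1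
    (hd_zero.eventually_le_atBot (-m))
  rw [mem_Ioi] at hu
  set a := min 1 (u/(2*M)) with hadef
  have ha1 : a ≤ 1 := min_le_left _ _
  have hapos : 0 < a := lt_min one_pos (by positivity)
  have haM : a * M ∈ Ioo (0:ℝ) u := by
    constructor
    · positivity
    · have : a ≤ u/(2*M) := min_le_right _ _
      have h2 : a * M ≤ u/2 := by
        rw [le_div_iff₀ (by positivity)] at this
        nlinarith
      linarith
  have hDaM : deriv v (a * M) ≤ -m := husub haM
  refine ⟨a, hapos, ?_⟩
  have hfa := integ_aux P hconv hdiff hZmeas hZpos hvZ hapos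
  -- upper bound on A
  have hup1 : ∫ ω in A, Z ω * deriv v (a * Z ω) ∂P ≤ δ * (-m) * c := by
    have hstep : ∫ ω in A, Z ω * deriv v (a * Z ω) ∂P ≤ ∫ ω in A, δ * deriv v (a * M) ∂P := by
      refine setIntegral_mono_on hfa.integrableOn
        (integrableOn_const (measure_lt_top P A).ne) hAmeas ?_
      intro ω hω
      obtain ⟨h1, h2⟩ := hω
      rw [mem_setOf_eq] at h1 h2
      have hz : 0 < Z ω := lt_of_lt_of_le hδ h1
      have hd1 : deriv v (a * Z ω) ≤ deriv v (a * M) := by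
        apply hmono (mem_Ioi.2 (by positivity)) (mem_Ioi.2 (by positivity))
        nlinarith
      have hd2 : deriv v (a * M) ≤ 0 := le_trans hDaM (by linarith)
      calc Z ω * deriv v (a * Z ω) ≤ Z ω * deriv v (a * M) :=
            mul_le_mul_of_nonneg_left hd1 hz.le
        _ ≤ δ * deriv v (a * M) := mul_le_mul_of_nonpos_right h1 hd2
    have hconst : ∫ ω in A, δ * deriv v (a * M) ∂P = (δ * deriv v (a * M)) * c := by
      rw [setIntegral_const, smul_eq_mul]
      rw [mul_comm]; rfl
    have hfin : δ * deriv v (a * M) * c ≤ δ * (-m) * c := by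
      have := mul_le_mul_of_nonneg_left hDaM hδ.le
      nlinarith
    linarith [hstep.trans_eq hconst]
  -- upper bound on Aᶜ
  have hup2 : ∫ ω in Aᶜ, Z ω * deriv v (a * Z ω) ∂P ≤ K := by
    have step1 : ∫ ω in Aᶜ, Z ω * deriv v (a * Z ω) ∂P ≤
        ∫ ω in Aᶜ, |Z ω * deriv v (1 * Z ω)| ∂P := by
      refine setIntegral_mono_ae_restrict (hfa.integrableOn) (hg0.abs.integrableOn) ?_
      refine ae_restrict_of_ae ?_
      filter_upwards [hZpos] with ω hz
      have h1 : deriv v (a * Z ω) ≤ deriv v (1 * Z ω) := by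
        apply hmono (mem_Ioi.2 (by positivity)) (mem_Ioi.2 (by nlinarith))
        nlinarith
      calc Z ω * deriv v (a * Z ω) ≤ Z ω * deriv v (1 * Z ω) :=
            mul_le_mul_of_nonneg_left h1 hz.le
        _ ≤ |Z ω * deriv v (1 * Z ω)| := le_abs_self _
    have step2 : ∫ ω in Aᶜ, |Z ω * deriv v (1 * Z ω)| ∂P ≤ K :=
      setIntegral_le_integral hg0.abs (Eventually.of_forall fun ω => abs_nonneg _)
    linarith
  have hsplit := integral_add_compl hAmeas hfa
  have hmc : K + 1 - t ≤ δ * m * c := by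
    have h1 : (K + 1 - t)/(δ * c) ≤ m := le_max_right _ _
    have h2 : (0:ℝ) < δ * c := mul_pos hδ hc
    calc K + 1 - t = (K + 1 - t)/(δ * c) * (δ * c) := (div_mul_cancel₀ _ (ne_of_gt h2)).symm
      _ ≤ m * (δ * c) := mul_le_mul_of_nonneg_right h1 h2.le
      _ = δ * m * c := by ring
  rw [hF, ← hsplit]
  nlinarith

/-- Lemma A.1, item 3: if `v` is strictly convex and differentiable on `(0,∞)` with
    `v'(0+) = −∞` and `v'(+∞) = +∞`, and `Z > 0` a.s. is the density of a probability
    measure equivalent to `P` with `v(λZ) ∈ L¹(P)` for all `λ > 0`, then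
    `F(γ) = E_P[Z · v'(γZ)]` is well defined for `γ > 0` and is a strictly increasing
    bijection from `(0,∞)` onto `ℝ`. -/
theorem foc_strict_mono_bijection
    {Ω : Type*} [MeasurableSpace Ω] (P : Measure Ω) [IsProbabilityMeasure P]
    (v : ℝ → ℝ)
    (hconv : StrictConvexOn ℝ (Set.Ioi 0) v)
    (hdiff : ∀ y : ℝ, 0 < y → DifferentiableAt ℝ v y)
    (hd_zero : Filter.Tendsto (deriv v) (nhdsWithin 0 (Set.Ioi 0)) Filter.atBot)
    (hd_top : Filter.Tendsto (deriv v) Filter.atTop Filter.atTop)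
    (Z : Ω → ℝ) (hZmeas : Measurable Z) (hZpos : ∀ᵐ ω ∂P, 0 < Z ω)
    (hZint : Integrable Z P) (hZone : ∫ ω, Z ω ∂P = 1)
    (hvZ : ∀ lam : ℝ, 0 < lam → Integrable (fun ω => v (lam * Z ω)) P)
    (F : ℝ → ℝ) (hF : ∀ γ : ℝ, F γ = ∫ ω, Z ω * deriv v (γ * Z ω) ∂P) :
    (∀ γ : ℝ, 0 < γ → Integrable (fun ω => Z ω * deriv v (γ * Z ω)) P) ∧
    StrictMonoOn F (Set.Ioi 0) ∧
    Set.BijOn F (Set.Ioi 0) Set.univ := by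
  have hsm := F_smono P hconv hdiff hZmeas hZpos hvZ hF
  refine ⟨fun γ hγ => integ_aux P hconv hdiff hZmeas hZpos hvZ hγ, hsm, ?_⟩
  refine ⟨fun x _ => mem_univ _, hsm.injOn, ?_⟩
  intro t _
  obtain ⟨a, ha, hat⟩ := F_small P hconv hdiff hd_zero hZmeas hZpos hvZ hF t
  obtain ⟨b, hb, htb⟩ := F_large P hconv hdiff hd_top hZmeas hZpos hvZ hF t
  have hab : a < b := by
    by_contra hcon
    push_neg at hcon
    have := hsm.monotoneOn (mem_Ioi.2 hb) (mem_Ioi.2 ha) hcon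
    linarith
  have hcont : ContinuousOn F (Icc a b) := fun x hx =>
    (F_cont P hconv hdiff hZmeas hZpos hvZ hF hsm.monotoneOn
      (lt_of_lt_of_le ha hx.1)).continuousWithinAt
  obtain ⟨γ, hγmem, hγt⟩ := intermediate_value_Icc hab.le hcont ⟨hat.le, htb.le⟩
  exact ⟨γ, mem_Ioi.2 (lt_of_lt_of_le ha hγmem.1), hγt⟩
end
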